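/- arXiv:1201.2243 — 11 statements merged into one kernel-verified Lean document; each statement's English description precedes it below -/
import Mathlib

section
/- Let p > 1 and α > 0, and set a = (2^{p/(p+1)} (p+1)^{1/(p+1)} / (p-1)) · α^{-(p-1)/(p+1)}. Then the function v : [0,∞) → ℝ defined by v(x) = (2(p+1)/(p-1)²)^{1/(p-1)} · (a+x)^{-2/(p-1)} is positive, twice continuously differentiable, and satisfies v''(x) = v(x)^p for all x ≥ 0, v'(0) = -α, and v(x) → 0 as x → ∞. -/
open Real Set Filter

/-!
The ansatz `v(x) = C (a + x)^β` turns `v'' = v^p` into the two conditions `β - 2 = β p` and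
`C β (β - 1) = C^p`, which force `β = -2/(p-1)` and `C^(p-1) = 2(p+1)/(p-1)²`. The shift `a` is
then the unique value for which the Neumann condition `C β a^(β-1) = -α` holds, and `β < 0` gives
the decay at infinity.
-/

section ShiftedPower

variable (C a β : ℝ)

theorem hasDerivAt_const_mul_add_rpow {x : ℝ} (hx : 0 < a + x) :
    HasDerivAt (fun y => C * (a + y) ^ β) (C * β * (a + x) ^ (β - 1)) x := by
  have h := (((hasDerivAt_id x).const_add a).rpow_const (p := β) (Or.inl hx.ne')).const_mul C
  simpa [mul_assoc] using h

variable {a}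

theorem derivWithin_Ici_const_mul_add_rpow (ha : 0 < a) {x : ℝ} (hx : 0 ≤ x) :
    derivWithin (fun y => C * (a + y) ^ β) (Ici 0) x = C * β * (a + x) ^ (β - 1) :=
  (hasDerivAt_const_mul_add_rpow C a β (by linarith)).hasDerivWithinAt.derivWithin
    (uniqueDiffOn_Ici 0 x hx)

theorem derivWithin_derivWithin_Ici_const_mul_add_rpow (ha : 0 < a) {x : ℝ} (hx : 0 ≤ x) :
    derivWithin (derivWithin (fun y => C * (a + y) ^ β) (Ici 0)) (Ici 0) x =
      C * β * (β - 1) * (a + x) ^ (β - 2) := by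
  have h : EqOn (derivWithin (fun y => C * (a + y) ^ β) (Ici 0))
      (fun y => C * β * (a + y) ^ (β - 1)) (Ici 0) :=
    fun y hy => derivWithin_Ici_const_mul_add_rpow C β ha hy
  rw [derivWithin_congr h (h hx),
    derivWithin_Ici_const_mul_add_rpow (C * β) (β - 1) ha hx, sub_sub]
  norm_num

theorem contDiffOn_Ici_const_mul_add_rpow (ha : 0 < a) {n : WithTop ℕ∞} :
    ContDiffOn ℝ n (fun y => C * (a + y) ^ β) (Ici 0) := fun x (hx : 0 ≤ x) =>
  (contDiffAt_const.mul ((contDiffAt_const.add contDiffAt_id).rpow_const_of_ne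
    (by simp only [id]; linarith))).contDiffWithinAt

variable {β}

theorem tendsto_const_mul_add_rpow_atTop (hβ : β < 0) :
    Tendsto (fun y => C * (a + y) ^ β) atTop (nhds 0) := by
  have h := (tendsto_rpow_neg_atTop (neg_pos.2 hβ)).comp
    (tendsto_atTop_add_const_left _ a tendsto_id)
  simpa using h.const_mul C

end ShiftedPower

namespace Morphogen

noncomputable section

def amplitude (p : ℝ) : ℝ := (2 * (p + 1) / (p - 1) ^ 2) ^ (1 / (p - 1))

def decayExponent (p : ℝ) : ℝ := -2 / (p - 1)

def shift (p α : ℝ) : ℝ :=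
  (2 ^ (p / (p + 1)) * (p + 1) ^ (1 / (p + 1)) / (p - 1)) * α ^ (-(p - 1) / (p + 1))

end

variable {p : ℝ}

theorem amplitude_pos (hp : 1 < p) : 0 < amplitude p := by
  have : 0 < p - 1 := by linarith
  unfold amplitude; positivity

theorem decayExponent_neg (hp : 1 < p) : decayExponent p < 0 :=
  div_neg_of_neg_of_pos (by norm_num) (by linarith)

theorem decayExponent_sub_two (hp : 1 < p) : decayExponent p - 2 = decayExponent p * p := by
  have : p - 1 ≠ 0 := by linarith
  unfold decayExponent; field_simp; ring

theorem amplitude_mul_decayExponent_mul (hp : 1 < p) :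
    amplitude p * decayExponent p * (decayExponent p - 1) = amplitude p ^ p := by
  have hm : 0 < p - 1 := by linarith
  have hbase : (0 : ℝ) < 2 * (p + 1) / (p - 1) ^ 2 := by positivity
  have hpow : amplitude p ^ (p - 1) = 2 * (p + 1) / (p - 1) ^ 2 := by
    rw [amplitude, ← rpow_mul hbase.le, one_div_mul_cancel hm.ne', rpow_one]
  have hsplit : amplitude p ^ p = amplitude p ^ (p - 1) * amplitude p := by
    rw [← rpow_add_one (amplitude_pos hp).ne', sub_add_cancel]
  rw [hsplit, hpow, decayExponent]
  field_simp
  ring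

theorem shift_pos (hp : 1 < p) {α : ℝ} (hα : 0 < α) : 0 < shift p α := by
  have : 0 < p - 1 := by linarith
  unfold shift; positivity

theorem amplitude_mul_decayExponent_mul_shift_rpow (hp : 1 < p) {α : ℝ} (hα : 0 < α) :
    amplitude p * decayExponent p * shift p α ^ (decayExponent p - 1) = -α := by
  have hm : 0 < p - 1 := by linarith
  have hq : 0 < p + 1 := by linarith
  have hC := amplitude_pos hp
  have ha := shift_pos hp hα
  have h2m : (0 : ℝ) < 2 / (p - 1) := by positivity
  have hlhs : 0 < amplitude p * (2 / (p - 1)) * shift p α ^ (decayExponent p - 1) := by positivity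
  suffices h : amplitude p * (2 / (p - 1)) * shift p α ^ (decayExponent p - 1) = α by
    nth_rewrite 1 [decayExponent]
    linear_combination -h
  -- both sides are products of powers of `2`, `p + 1`, `p - 1` and `α`: compare logarithms
  refine log_injOn_pos hlhs hα ?_
  have hlogC : log (amplitude p) = (log 2 + log (p + 1) - 2 * log (p - 1)) / (p - 1) := by
    rw [amplitude, log_rpow (by positivity), log_div (by positivity) (by positivity),
      log_mul (by norm_num) hq.ne', log_pow]
    push_cast; ring
  have hloga : log (shift p α) = (p / (p + 1)) * log 2 + (1 / (p + 1)) * log (p + 1)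
      - log (p - 1) + (-(p - 1) / (p + 1)) * log α := by
    rw [shift, log_mul (by positivity) (by positivity), log_div (by positivity) hm.ne',
      log_mul (by positivity) (by positivity), log_rpow two_pos, log_rpow hq, log_rpow hα]
  rw [log_mul (by positivity) (by positivity), log_mul hC.ne' h2m.ne', log_rpow ha,
    log_div (by norm_num) hm.ne', hlogC, hloga, decayExponent]
  field_simp
  ring

end Morphogen

open Morphogen in
/-- For `p > 1` and `α > 0`, the explicit function
`v(x) = (2(p+1)/(p-1)²)^{1/(p-1)} (a+x)^{-2/(p-1)}` with
`a = (2^{p/(p+1)} (p+1)^{1/(p+1)}/(p-1)) α^{-(p-1)/(p+1)}` is positive, `C²` on `[0,∞)`,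
and solves `v'' = v^p` on `[0,∞)` with `v'(0) = -α` and `v(x) → 0` as `x → ∞`. -/
theorem stmt_0 (p α : ℝ) (hp : 1 < p) (hα : 0 < α)
    (a : ℝ)
    (ha : a = (2 ^ (p / (p + 1)) * (p + 1) ^ (1 / (p + 1)) / (p - 1)) * α ^ (-(p - 1) / (p + 1)))
    (v : ℝ → ℝ)
    (hv : ∀ x, v x = (2 * (p + 1) / (p - 1) ^ 2) ^ (1 / (p - 1)) * (a + x) ^ (-2 / (p - 1))) :
    (∀ x ≥ 0, 0 < v x) ∧
    ContDiffOn ℝ 2 v (Ici 0) ∧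
    (∀ x ≥ 0, derivWithin (derivWithin v (Ici 0)) (Ici 0) x = v x ^ p) ∧
    derivWithin v (Ici 0) 0 = -α ∧
    Tendsto v atTop (nhds 0) := by
  have hv' : v = fun x => amplitude p * (shift p α + x) ^ decayExponent p := by
    subst ha; exact funext hv
  subst hv'
  have ha0 := shift_pos hp hα
  have hC := amplitude_pos hp
  refine ⟨fun x hx => by positivity, contDiffOn_Ici_const_mul_add_rpow _ _ ha0,
    fun x hx => ?_, ?_, tendsto_const_mul_add_rpow_atTop _ (decayExponent_neg hp)⟩
  · have hax : 0 ≤ shift p α + x := by linarith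
    rw [derivWithin_derivWithin_Ici_const_mul_add_rpow _ _ ha0 hx,
      amplitude_mul_decayExponent_mul hp, mul_rpow hC.le (rpow_nonneg hax _), ← rpow_mul hax,
      decayExponent_sub_two hp]
  · rw [derivWithin_Ici_const_mul_add_rpow _ _ ha0 le_rfl, add_zero,
      amplitude_mul_decayExponent_mul_shift_rpow hp hα]
end

section
/- Let p > 1 and α > 0. If v : [0,∞) → (0,∞) is twice continuously differentiable and satisfies v''(x) = v(x)^p for all x ≥ 0, v'(0) = -α, and v(x) → 0 as x → ∞, then v(x) = (2(p+1)/(p-1)²)^{1/(p-1)} · (a+x)^{-2/(p-1)} for all x ≥ 0, where a = (2^{p/(p+1)} (p+1)^{1/(p+1)} / (p-1)) · α^{-(p-1)/(p+1)}. In particular, the stationary problem has exactly one positive solution. -/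
/-!
Multiplying `v'' = v^p` by `v'` shows that the energy `v'² - 2/(p+1) v^(p+1)` is conserved.
Since `v'` increases and `v → 0`, `v' < 0`; the energy is nonnegative (let `v → 0`) and cannot be
positive (then `v' ≤ -√E` would drive `v` below zero), so it vanishes. Hence
`v' = -√(2/(p+1)) v^((p+1)/2)`, a Bernoulli equation whose solutions make `v^(-(p-1)/2)` affine;
the boundary condition `v'(0) = -α` fixes the constants.
-/

open Real Set Filter Topology

lemma monotoneOn_Ici_of_hasDerivWithinAt_nonneg {f f' : ℝ → ℝ} {a : ℝ}
    (hf : ∀ x ∈ Ici a, HasDerivWithinAt f (f' x) (Ici a) x) (hf' : ∀ x ∈ Ici a, 0 ≤ f' x) :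
    MonotoneOn f (Ici a) := by
  refine monotoneOn_of_hasDerivWithinAt_nonneg (f' := f') (convex_Ici a)
    (fun x hx ↦ (hf x hx).continuousWithinAt) (fun x hx ↦ ?_) (fun x hx ↦ ?_)
  all_goals rw [interior_Ici] at hx
  · rw [interior_Ici]
    exact (hf x (Ioi_subset_Ici_self hx)).mono Ioi_subset_Ici_self
  · exact hf' x (Ioi_subset_Ici_self hx)

lemma eq_add_mul_of_hasDerivWithinAt_Ici {F : ℝ → ℝ} {a c : ℝ}
    (hF : ∀ x ∈ Ici a, HasDerivWithinAt F c (Ici a) x) :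
    ∀ x ∈ Ici a, F x = F a + c * (x - a) := by
  intro x hx
  have hG : ∀ y ∈ Ici a, HasDerivWithinAt (fun y ↦ F y - c * y) 0 (Ici a) y := fun y hy ↦
    ((hF y hy).sub ((hasDerivWithinAt_id y _).const_mul c)).congr_deriv (by ring)
  have := constant_of_has_deriv_right_zero (b := x)
    (fun y hy ↦ (hG y hy.1).continuousWithinAt.mono Icc_subset_Ici_self)
    (fun y hy ↦ (hG y hy.1).mono (Ici_subset_Ici.2 hy.1)) x ⟨hx, le_rfl⟩
  linarith

lemma neg_of_monotoneOn_of_tendsto_zero {v g : ℝ → ℝ} {a : ℝ}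
    (hv : ∀ x ∈ Ici a, HasDerivWithinAt v (g x) (Ici a) x) (hg : MonotoneOn g (Ici a))
    (hpos : ∀ x ≥ a, 0 < v x) (hlim : Tendsto v atTop (𝓝 0)) : ∀ x ≥ a, g x < 0 := by
  intro x₀ hx₀
  by_contra! hg₀
  have hmono : MonotoneOn v (Ici x₀) :=
    monotoneOn_Ici_of_hasDerivWithinAt_nonneg
      (fun x hx ↦ (hv x (hx₀.trans hx)).mono (Ici_subset_Ici.2 hx₀))
      (fun x hx ↦ hg₀.trans (hg hx₀ (hx₀.trans hx) hx))
  exact (hpos x₀ hx₀).not_ge <| ge_of_tendsto hlim <|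
    (eventually_ge_atTop x₀).mono fun x hx ↦ hmono self_mem_Ici hx hx

lemma exists_nonpos_of_hasDerivWithinAt_le_neg {v g : ℝ → ℝ} {a s : ℝ} (hs : 0 < s)
    (hv : ∀ x ∈ Ici a, HasDerivWithinAt v (g x) (Ici a) x) (hg : ∀ x ≥ a, g x ≤ -s) :
    ∃ x ≥ a, v x ≤ 0 := by
  have hmono : MonotoneOn (fun x ↦ -v x - s * x) (Ici a) :=
    monotoneOn_Ici_of_hasDerivWithinAt_nonneg
      (fun x hx ↦ (hv x hx).neg.sub ((hasDerivWithinAt_id x _).const_mul s))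
      (fun x hx ↦ by have := hg x hx; simp only [mul_one]; linarith)
  set x := a + |v a| / s
  have hx : a ≤ x := le_add_of_nonneg_right (by positivity)
  refine ⟨x, hx, ?_⟩
  have h := hmono self_mem_Ici hx hx
  have hsx : s * x = s * a + |v a| := by simp only [x]; field_simp
  simp only at h
  linarith [le_abs_self (v a)]

lemma neg_eq_sqrt_mul_rpow_of_sq_eq {y k w r : ℝ} (hy : y < 0) (hk : 0 ≤ k) (hw : 0 ≤ w)
    (h : y ^ 2 = k * w ^ r) : y = -(√k * w ^ (r / 2)) := by
  have : -y = √(y ^ 2) := by rw [sqrt_sq_eq_abs, abs_of_neg hy]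
  rw [h, sqrt_mul hk, sqrt_eq_rpow (w ^ r), ← rpow_mul hw, mul_one_div] at this
  linarith

section Bernoulli

variable {v : ℝ → ℝ} {c q : ℝ}

lemma rpow_one_sub_eq_of_hasDerivWithinAt_neg_mul_rpow
    (hv : ∀ x ∈ Ici (0 : ℝ), HasDerivWithinAt v (-(c * v x ^ q)) (Ici 0) x)
    (hpos : ∀ x ≥ 0, 0 < v x) : ∀ x ≥ 0, v x ^ (1 - q) = v 0 ^ (1 - q) + (q - 1) * c * x := by
  intro x hx
  have hderiv : ∀ y ∈ Ici (0 : ℝ),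
      HasDerivWithinAt (fun y ↦ v y ^ (1 - q)) ((q - 1) * c) (Ici 0) y := fun y hy ↦ by
    refine ((hv y hy).rpow_const (p := 1 - q) (Or.inl (hpos y hy).ne')).congr_deriv ?_
    rw [sub_sub_cancel_left, rpow_neg (hpos y hy).le]
    field_simp [(rpow_pos_of_pos (hpos y hy) q).ne']
    ring
  simpa using eq_add_mul_of_hasDerivWithinAt_Ici hderiv x hx

lemma eq_of_hasDerivWithinAt_neg_mul_rpow (hq : 1 < q) (hc : 0 < c)
    (hv : ∀ x ∈ Ici (0 : ℝ), HasDerivWithinAt v (-(c * v x ^ q)) (Ici 0) x)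
    (hpos : ∀ x ≥ 0, 0 < v x) :
    ∀ x ≥ 0, v x = ((q - 1) * c) ^ (-1 / (q - 1)) *
      (v 0 ^ (1 - q) / ((q - 1) * c) + x) ^ (-1 / (q - 1)) := by
  intro x hx
  have hm : 0 < (q - 1) * c := mul_pos (sub_pos.2 hq) hc
  rw [← mul_rpow hm.le (add_nonneg (div_nonneg (rpow_nonneg (hpos 0 le_rfl).le _) hm.le) hx),
    mul_add, mul_div_cancel₀ _ hm.ne',
    ← rpow_one_sub_eq_of_hasDerivWithinAt_neg_mul_rpow hv hpos x hx, ← rpow_mul (hpos x hx).le]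
  have hexp : (1 - q) * (-1 / (q - 1)) = 1 := by field_simp [(sub_pos.2 hq).ne']; ring
  rw [hexp, rpow_one]

end Bernoulli

namespace StationaryProblem

variable {p : ℝ} {v g : ℝ → ℝ}

lemma hasDerivWithinAt_energy {s : Set ℝ} {x : ℝ} (hp : p + 1 ≠ 0) (hx : v x ≠ 0)
    (hv : HasDerivWithinAt v (g x) s x) (hg : HasDerivWithinAt g (v x ^ p) s x) :
    HasDerivWithinAt (fun y ↦ g y ^ 2 - 2 / (p + 1) * v y ^ (p + 1)) 0 s x := by
  have h := (hg.pow 2).sub ((hv.rpow_const (p := p + 1) (Or.inl hx)).const_mul (2 / (p + 1)))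
  refine h.congr_deriv ?_
  rw [add_sub_cancel_right]
  field_simp
  ring

lemma deriv_neg
    (hv : ∀ x ∈ Ici (0 : ℝ), HasDerivWithinAt v (g x) (Ici 0) x)
    (hg : ∀ x ∈ Ici (0 : ℝ), HasDerivWithinAt g (v x ^ p) (Ici 0) x)
    (hpos : ∀ x ≥ 0, 0 < v x) (hlim : Tendsto v atTop (𝓝 0)) : ∀ x ≥ 0, g x < 0 :=
  neg_of_monotoneOn_of_tendsto_zero hv
    (monotoneOn_Ici_of_hasDerivWithinAt_nonneg hg fun x hx ↦ (rpow_pos_of_pos (hpos x hx) p).le)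
    hpos hlim

lemma deriv_sq_eq (hp : 0 < p + 1)
    (hv : ∀ x ∈ Ici (0 : ℝ), HasDerivWithinAt v (g x) (Ici 0) x)
    (hg : ∀ x ∈ Ici (0 : ℝ), HasDerivWithinAt g (v x ^ p) (Ici 0) x)
    (hpos : ∀ x ≥ 0, 0 < v x) (hlim : Tendsto v atTop (𝓝 0)) :
    ∀ x ≥ 0, g x ^ 2 = 2 / (p + 1) * v x ^ (p + 1) := by
  set k := 2 / (p + 1)
  set E := g 0 ^ 2 - k * v 0 ^ (p + 1)
  have hE : ∀ x ≥ 0, g x ^ 2 = E + k * v x ^ (p + 1) := fun x hx ↦ by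
    have := eq_add_mul_of_hasDerivWithinAt_Ici
      (fun y hy ↦ hasDerivWithinAt_energy hp.ne' (hpos y hy).ne' (hv y hy) (hg y hy)) x hx
    simp only [zero_mul, add_zero] at this
    linarith
  have hE_nonneg : 0 ≤ E := by
    have hlim' : Tendsto (fun x ↦ E + k * v x ^ (p + 1)) atTop (𝓝 (E + k * 0 ^ (p + 1))) :=
      ((continuousAt_rpow_const 0 _ (Or.inr hp.le)).tendsto.comp hlim).const_mul k |>.const_add E
    rw [zero_rpow hp.ne', mul_zero, add_zero] at hlim'
    exact ge_of_tendsto hlim' <| (eventually_ge_atTop 0).mono fun x hx ↦ hE x hx ▸ sq_nonneg _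
  have hE_nonpos : E ≤ 0 := by
    by_contra! hE_pos
    have hgle : ∀ x ≥ 0, g x ≤ -√E := fun x hx ↦ by
      have hsq : √E ≤ √(g x ^ 2) :=
        sqrt_le_sqrt (hE x hx ▸ le_add_of_nonneg_right
          (mul_nonneg (div_pos two_pos hp).le (rpow_pos_of_pos (hpos x hx) _).le))
      rw [sqrt_sq_eq_abs, abs_of_neg (deriv_neg hv hg hpos hlim x hx)] at hsq
      linarith
    obtain ⟨x, hx, hvx⟩ := exists_nonpos_of_hasDerivWithinAt_le_neg (sqrt_pos.2 hE_pos) hv hgle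
    exact (hpos x hx).not_ge hvx
  intro x hx
  rw [hE x hx, le_antisymm hE_nonpos hE_nonneg, zero_add]

lemma amplitude_eq (hp : 1 < p) :
    ((p - 1) / 2 * √(2 / (p + 1))) ^ (-2 / (p - 1)) =
      (2 * (p + 1) / (p - 1) ^ 2) ^ (1 / (p - 1)) := by
  have hp1 : 0 < p + 1 := by linarith
  have hp1' : 0 < p - 1 := by linarith
  rw [show -2 / (p - 1) = 2 * -(1 / (p - 1)) by ring, rpow_mul (by positivity), rpow_two,
    mul_pow, sq_sqrt (by positivity), rpow_neg (by positivity), ← inv_rpow (by positivity)]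
  congr 1
  field_simp

lemma shift_eq (hp : 1 < p) {α v₀ : ℝ} (hv₀ : 0 < v₀)
    (h : √(2 / (p + 1)) * v₀ ^ ((p + 1) / 2) = α) :
    v₀ ^ (-((p - 1) / 2)) / ((p - 1) / 2 * √(2 / (p + 1))) =
      2 ^ (p / (p + 1)) * (p + 1) ^ (1 / (p + 1)) / (p - 1) * α ^ (-(p - 1) / (p + 1)) := by
  have hp1 : 0 < p + 1 := by linarith
  have hp1' : 0 < p - 1 := by linarith
  set c := √(2 / (p + 1))
  have hc : 0 < c := sqrt_pos.2 (by positivity)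
  have hα : α ^ (-(p - 1) / (p + 1)) = c ^ (-(p - 1) / (p + 1)) * v₀ ^ (-((p - 1) / 2)) := by
    rw [← h, mul_rpow hc.le (by positivity), ← rpow_mul hv₀.le]
    congr 2
    field_simp
  have hc_pow : c ^ (-(p - 1) / (p + 1)) = c ^ (2 / (p + 1)) / c := by
    rw [← rpow_sub_one hc.ne']
    congr 1
    field_simp
    ring
  have hc_two : c ^ (2 / (p + 1)) * (p + 1) ^ (1 / (p + 1)) = 2 ^ (1 / (p + 1)) := by
    rw [show c = (2 / (p + 1)) ^ (1 / 2 : ℝ) from sqrt_eq_rpow _, ← rpow_mul (by positivity),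
      div_rpow (by positivity) hp1.le]
    field_simp
  have h_two : (2 : ℝ) ^ (p / (p + 1)) * 2 ^ (1 / (p + 1)) = 2 := by
    rw [← rpow_add two_pos]
    field_simp
    simp
  rw [hα, hc_pow]
  field_simp
  linear_combination -h_two - 2 ^ (p / (p + 1)) * hc_two

end StationaryProblem

theorem stmt_1_general (p α : ℝ) (hp : 1 < p)
    (v : ℝ → ℝ)
    (hpos : ∀ x ≥ 0, 0 < v x)
    (hreg : ContDiffOn ℝ 2 v (Ici 0))
    (hode : ∀ x ≥ 0, derivWithin (derivWithin v (Ici 0)) (Ici 0) x = v x ^ p)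
    (hbc : derivWithin v (Ici 0) 0 = -α)
    (hlim : Tendsto v atTop (nhds 0)) :
    ∀ x ≥ 0, v x = (2 * (p + 1) / (p - 1) ^ 2) ^ (1 / (p - 1)) *
      ((2 ^ (p / (p + 1)) * (p + 1) ^ (1 / (p + 1)) / (p - 1)) * α ^ (-(p - 1) / (p + 1))
        + x) ^ (-2 / (p - 1)) := by
  have hp1 : 0 < p + 1 := by linarith
  set g := derivWithin v (Ici 0)
  have hv : ∀ x ∈ Ici (0 : ℝ), HasDerivWithinAt v (g x) (Ici 0) x := fun x hx ↦
    (hreg.differentiableOn (by norm_num) x hx).hasDerivWithinAt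
  have hg : ∀ x ∈ Ici (0 : ℝ), HasDerivWithinAt g (v x ^ p) (Ici 0) x := fun x hx ↦
    hode x hx ▸ ((hreg.derivWithin (m := 1) (uniqueDiffOn_Ici 0) (by norm_num)).differentiableOn
      one_ne_zero x hx).hasDerivWithinAt
  have hg_eq : ∀ x ≥ 0, g x = -(√(2 / (p + 1)) * v x ^ ((p + 1) / 2)) := fun x hx ↦
    neg_eq_sqrt_mul_rpow_of_sq_eq (StationaryProblem.deriv_neg hv hg hpos hlim x hx)
      (by positivity) (hpos x hx).le (StationaryProblem.deriv_sq_eq hp1 hv hg hpos hlim x hx)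
  have hsol := eq_of_hasDerivWithinAt_neg_mul_rpow (q := (p + 1) / 2) (by linarith)
    (sqrt_pos.2 (by positivity)) (fun x hx ↦ hg_eq x hx ▸ hv x hx) hpos
  have hv₀ : √(2 / (p + 1)) * v 0 ^ ((p + 1) / 2) = α := by linarith [hg_eq 0 le_rfl]
  intro x hx
  rw [hsol x hx, show (p + 1) / 2 - 1 = (p - 1) / 2 by ring,
    show 1 - (p + 1) / 2 = -((p - 1) / 2) by ring, show -1 / ((p - 1) / 2) = -2 / (p - 1) by
      field_simp [(sub_pos.2 hp).ne'],
    StationaryProblem.amplitude_eq hp, StationaryProblem.shift_eq hp (hpos 0 le_rfl) hv₀]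

/-- For `p > 1` and `α > 0`, any positive `C²` solution of the stationary problem
`v'' = v^p` on `[0,∞)`, `v'(0) = -α`, `v(∞) = 0` coincides with the explicit solution
`v(x) = (2(p+1)/(p-1)²)^{1/(p-1)} (a+x)^{-2/(p-1)}`; in particular the stationary problem has
exactly one positive solution. -/
theorem stmt_1 (p α : ℝ) (hp : 1 < p) (hα : 0 < α)
    (v : ℝ → ℝ)
    (hpos : ∀ x ≥ 0, 0 < v x)
    (hreg : ContDiffOn ℝ 2 v (Ici 0))
    (hode : ∀ x ≥ 0, derivWithin (derivWithin v (Ici 0)) (Ici 0) x = v x ^ p)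
    (hbc : derivWithin v (Ici 0) 0 = -α)
    (hlim : Tendsto v atTop (nhds 0)) :
    ∀ x ≥ 0, v x = (2 * (p + 1) / (p - 1) ^ 2) ^ (1 / (p - 1)) *
      ((2 ^ (p / (p + 1)) * (p + 1) ^ (1 / (p + 1)) / (p - 1)) * α ^ (-(p - 1) / (p + 1))
        + x) ^ (-2 / (p - 1)) :=
  stmt_1_general p α hp v hpos hreg hode hbc hlim
end

section
/- Let p > 1 and let ρ(ζ) = exp(e^{2ζ}/4 − ((p+3)/(p−1))ζ), with weighted measure dμ = ρ(ζ)dζ on ℝ. Let w : ℝ → ℝ be continuously differentiable with ∫_ℝ w(ζ)² dμ(ζ) < ∞ and ∫_ℝ w'(ζ)² dμ(ζ) < ∞. Then there exists R₀ > 0 such that for all R ≥ R₀: ∫_R^∞ w(ζ)² dμ(ζ) ≤ (e^{−2R}/2) ∫_R^∞ w'(ζ)² dμ(ζ). -/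
/-!
Write `ρ = e^φ`, so `ρ' = V ρ` with `V = e^{2ζ}/2 - a`. Integrating
`(w²ρ)' = 2ww'ρ + w²Vρ` over `(R, ∞)` gives `∫ w²Vρ ≤ -∫ 2ww'ρ`: the boundary term at `R` has the
right sign, and the one at `∞` vanishes because `w²ρ` is integrable while its derivative is bounded
below by the integrable function `2ww'ρ` as soon as `V ≥ 0`. For `R` large, `V ≥ m := e^{2R}/4` on
`(R, ∞)`, and AM-GM bounds `-2ww'ρ` by `(m/2) w²ρ + (2/m) w'²ρ`. Hence
`∫ w²ρ ≤ (4/m²) ∫ w'²ρ = 64 e^{-4R} ∫ w'²ρ`, which is at most `(e^{-2R}/2) ∫ w'²ρ` once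
`e^{2R} ≥ 128`.
-/

open Real Set Filter MeasureTheory Topology

theorem not_integrableOn_Ioi_of_forall_le {f : ℝ → ℝ} {T ε : ℝ} (hε : 0 < ε)
    (hf : ∀ x ∈ Ioi T, ε ≤ f x) : ¬ IntegrableOn f (Ioi T) := by
  intro hint
  have hconst : IntegrableOn (fun _ => ε) (Ioi T) :=
    hint.mono' aestronglyMeasurable_const <| (ae_restrict_mem measurableSet_Ioi).mono
      fun x hx => by rw [Real.norm_of_nonneg hε.le]; exact hf x hx
  simp [integrableOn_const_iff, hε.ne'] at hconst

theorem tendsto_atTop_zero_of_deriv_ge {f f' c : ℝ → ℝ} {a : ℝ}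
    (hf0 : ∀ x ∈ Ioi a, 0 ≤ f x) (hf : IntegrableOn f (Ioi a))
    (hderiv : ∀ x ∈ Ioi a, HasDerivAt f (f' x) x)
    (hc : IntegrableOn c (Ioi a)) (hcf' : ∀ x ∈ Ioi a, c x ≤ f' x) :
    Tendsto f atTop (𝓝 0) := by
  rw [Metric.tendsto_atTop]
  intro ε hε
  obtain ⟨M, hM⟩ := eventually_atTop.1 <| (tendsto_integral_Ioi_zero (f := fun x => |c x|)
    (μ := volume) tendsto_id).eventually (gt_mem_nhds (half_pos hε))
  refine ⟨max M (a + 1), fun T hT => ?_⟩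
  have hTa : a < T := by linarith [le_max_right M (a + 1)]
  rw [Real.dist_0_eq_abs, abs_of_nonneg (hf0 T hTa)]
  by_contra! hfT
  -- `f` drops by less than `∫_T^∞ |c| < ε/2` after `T`, so it stays above `ε/2` on `(T, ∞)`.
  refine not_integrableOn_Ioi_of_forall_le (half_pos hε) (fun S hS => ?_)
    (hf.mono_set (Ioi_subset_Ioi hTa.le))
  have hftc : ∫ x in T..S, c x ≤ f S - f T :=
    intervalIntegral.integral_le_sub_of_hasDeriv_right_of_le (le_of_lt hS)
      (fun x hx => (hderiv x (hTa.trans_le hx.1)).continuousAt.continuousWithinAt)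
      (fun x hx => (hderiv x (hTa.trans hx.1)).hasDerivWithinAt)
      (hc.mono_set fun x hx => hTa.trans_le hx.1)
      (fun x hx => hcf' x (hTa.trans hx.1))
  have htail : -(ε / 2) < ∫ x in T..S, c x := by
    rw [intervalIntegral.integral_of_le (le_of_lt hS)]
    calc -(ε / 2) < -∫ x in Ioi T, |c x| := neg_lt_neg (hM T (le_of_max_le_left hT))
      _ ≤ -∫ x in Ioc T S, |c x| :=
        neg_le_neg <| setIntegral_mono_set (hc.mono_set (Ioi_subset_Ioi hTa.le)).abs
          (Eventually.of_forall fun x => abs_nonneg (c x)) Ioc_subset_Ioi_self.eventuallyLE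
      _ ≤ ∫ x in Ioc T S, c x := neg_le_of_abs_le abs_integral_le_integral_abs
  linarith

theorem neg_two_mul_le_mul_sq_add_sq_div (x y : ℝ) {t : ℝ} (ht : 0 < t) :
    -(2 * x * y) ≤ t * x ^ 2 + y ^ 2 / t := by
  have key : t * x ^ 2 + y ^ 2 / t + 2 * x * y = (t * x + y) ^ 2 / t := by
    field_simp
    ring
  have : 0 ≤ (t * x + y) ^ 2 / t := by positivity
  linarith

section WeightedHalfLine

variable {ρ V w w' : ℝ → ℝ} {R : ℝ}

theorem integrableOn_two_mul_mul_weight (hρ0 : ∀ x, 0 ≤ ρ x) (hρ : Continuous ρ)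
    (hw : Continuous w) (hw' : Continuous w')
    (hw2 : IntegrableOn (fun x => w x ^ 2 * ρ x) (Ioi R))
    (hw2' : IntegrableOn (fun x => w' x ^ 2 * ρ x) (Ioi R)) :
    IntegrableOn (fun x => 2 * w x * w' x * ρ x) (Ioi R) := by
  refine (hw2.add hw2').mono' (by fun_prop : Continuous _).aestronglyMeasurable
    (Eventually.of_forall fun x => ?_)
  have h := hρ0 x
  simp only [Pi.add_apply, Real.norm_eq_abs, abs_le]
  constructor <;> nlinarith [sq_nonneg (w x - w' x), sq_nonneg (w x + w' x)]

theorem integrableOn_and_integral_Ioi_sq_mul_deriv_weight_le (hρ0 : ∀ x, 0 ≤ ρ x)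
    (hρ : ∀ x, HasDerivAt ρ (V x * ρ x) x) (hV0 : ∀ x ∈ Ioi R, 0 ≤ V x)
    (hw : ∀ x, HasDerivAt w (w' x) x) (hw' : Continuous w')
    (hw2 : IntegrableOn (fun x => w x ^ 2 * ρ x) (Ioi R))
    (hw2' : IntegrableOn (fun x => w' x ^ 2 * ρ x) (Ioi R)) :
    IntegrableOn (fun x => w x ^ 2 * (V x * ρ x)) (Ioi R) ∧
      ∫ x in Ioi R, w x ^ 2 * (V x * ρ x) ≤ -∫ x in Ioi R, 2 * w x * w' x * ρ x := by
  set F : ℝ → ℝ := fun x => w x ^ 2 * ρ x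
  set c : ℝ → ℝ := fun x => 2 * w x * w' x * ρ x
  set q : ℝ → ℝ := fun x => w x ^ 2 * (V x * ρ x)
  have hq0 : ∀ x ∈ Ioi R, 0 ≤ q x := fun x hx =>
    mul_nonneg (sq_nonneg _) (mul_nonneg (hV0 x hx) (hρ0 x))
  have hF : ∀ x, HasDerivAt F (c x + q x) x := fun x =>
    (((hw x).pow 2).mul (hρ x)).congr_deriv (by simp only [c, q, Pi.pow_apply]; ring)
  have hw_cont : Continuous w := Differentiable.continuous fun x => (hw x).differentiableAt
  have hρ_cont : Continuous ρ := Differentiable.continuous fun x => (hρ x).differentiableAt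
  have hc_cont : Continuous c := by fun_prop
  have hc_int : IntegrableOn c (Ioi R) :=
    integrableOn_two_mul_mul_weight hρ0 hρ_cont hw_cont hw' hw2 hw2'
  have hF0 : Tendsto F atTop (𝓝 0) :=
    tendsto_atTop_zero_of_deriv_ge (fun x _ => mul_nonneg (sq_nonneg _) (hρ0 x)) hw2
      (fun x _ => hF x) hc_int (fun x hx => le_add_of_nonneg_right (hq0 x hx))
  set g : ℝ → ℝ := fun x => F x - ∫ t in R..x, c t
  have hg : ∀ x ∈ Ici R, HasDerivAt g (q x) x := fun x _ =>
    ((hF x).sub (hc_cont.integral_hasStrictDerivAt R x).hasDerivAt).congr_deriv (by ring)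
  have hg_lim : Tendsto g atTop (𝓝 (0 - ∫ x in Ioi R, c x)) :=
    hF0.sub (intervalIntegral_tendsto_integral_Ioi R hc_int tendsto_id)
  refine ⟨integrableOn_Ioi_deriv_of_nonneg' hg hq0 hg_lim, ?_⟩
  rw [integral_Ioi_of_hasDerivAt_of_nonneg' hg hq0 hg_lim]
  have : 0 ≤ g R := by simpa [g, F] using mul_nonneg (sq_nonneg (w R)) (hρ0 R)
  linarith

theorem integral_Ioi_sq_mul_weight_le {m : ℝ} (hm : 0 < m) (hρ0 : ∀ x, 0 ≤ ρ x)
    (hρ : ∀ x, HasDerivAt ρ (V x * ρ x) x) (hVm : ∀ x ∈ Ioi R, m ≤ V x)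
    (hw : ∀ x, HasDerivAt w (w' x) x) (hw' : Continuous w')
    (hw2 : IntegrableOn (fun x => w x ^ 2 * ρ x) (Ioi R))
    (hw2' : IntegrableOn (fun x => w' x ^ 2 * ρ x) (Ioi R)) :
    ∫ x in Ioi R, w x ^ 2 * ρ x ≤ 4 / m ^ 2 * ∫ x in Ioi R, w' x ^ 2 * ρ x := by
  have hw_cont : Continuous w := Differentiable.continuous fun x => (hw x).differentiableAt
  have hρ_cont : Continuous ρ := Differentiable.continuous fun x => (hρ x).differentiableAt
  set A := ∫ x in Ioi R, w x ^ 2 * ρ x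
  set B := ∫ x in Ioi R, w' x ^ 2 * ρ x
  obtain ⟨hq_int, hq_le⟩ := integrableOn_and_integral_Ioi_sq_mul_deriv_weight_le hρ0 hρ
    (fun x hx => hm.le.trans (hVm x hx)) hw hw' hw2 hw2'
  have hlower : m * A ≤ ∫ x in Ioi R, w x ^ 2 * (V x * ρ x) := by
    rw [← integral_const_mul]
    refine setIntegral_mono_on (hw2.const_mul m) hq_int measurableSet_Ioi fun x hx => ?_
    have := mul_le_mul_of_nonneg_right (hVm x hx) (mul_nonneg (sq_nonneg (w x)) (hρ0 x))
    linarith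
  have hupper : -∫ x in Ioi R, 2 * w x * w' x * ρ x ≤ m / 2 * A + 2 / m * B := by
    rw [← integral_neg, ← integral_const_mul, ← integral_const_mul,
      ← integral_add (hw2.const_mul _) (hw2'.const_mul _)]
    refine integral_mono (integrableOn_two_mul_mul_weight hρ0 hρ_cont hw_cont hw' hw2 hw2').neg
      ((hw2.const_mul _).add (hw2'.const_mul _)) fun x => ?_
    have := mul_le_mul_of_nonneg_right
      (neg_two_mul_le_mul_sq_add_sq_div (w x) (w' x) (half_pos hm)) (hρ0 x)
    convert this using 1
    · ring
    · field_simp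
  have hAB : m / 2 * A ≤ 2 / m * B := by linarith
  calc A = 2 / m * (m / 2 * A) := by field_simp
    _ ≤ 2 / m * (2 / m * B) := by gcongr
    _ = 4 / m ^ 2 * B := by ring

end WeightedHalfLine

theorem hasDerivAt_exp_exp_two_mul_div_four_sub_mul (a ζ : ℝ) :
    HasDerivAt (fun ζ => exp (exp (2 * ζ) / 4 - a * ζ))
      ((exp (2 * ζ) / 2 - a) * exp (exp (2 * ζ) / 4 - a * ζ)) ζ := by
  have h : HasDerivAt (fun ζ => exp (2 * ζ) / 4 - a * ζ) (exp (2 * ζ) / 2 - a) ζ := by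
    have h2 : HasDerivAt (fun ζ : ℝ => 2 * ζ) 2 ζ := by simpa using (hasDerivAt_id ζ).const_mul 2
    have ha : HasDerivAt (fun ζ : ℝ => a * ζ) a ζ := by simpa using (hasDerivAt_id ζ).const_mul a
    exact ((h2.exp.div_const 4).sub ha).congr_deriv (by ring)
  simpa only [mul_comm] using h.exp

theorem stmt_3_general (p : ℝ)
    (ρ : ℝ → ℝ)
    (hρ : ∀ ζ, ρ ζ = Real.exp (Real.exp (2 * ζ) / 4 - ((p + 3) / (p - 1)) * ζ))
    (w : ℝ → ℝ) (hw : ContDiff ℝ 1 w)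
    (hw2 : Integrable (fun ζ => (w ζ) ^ 2 * ρ ζ))
    (hw2' : Integrable (fun ζ => (deriv w ζ) ^ 2 * ρ ζ)) :
    ∃ R₀ > 0, ∀ R ≥ R₀,
      ∫ ζ in Ici R, (w ζ) ^ 2 * ρ ζ ≤
        Real.exp (-2 * R) / 2 * ∫ ζ in Ici R, (deriv w ζ) ^ 2 * ρ ζ := by
  set a := (p + 3) / (p - 1)
  obtain rfl : ρ = fun ζ => exp (exp (2 * ζ) / 4 - a * ζ) := funext hρ
  -- `e^{2R₀} = max (4a) 128`: `4a` gives `e^{2ζ}/2 - a ≥ e^{2R}/4` for `ζ > R`, and `128` gives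
  -- `4 / (e^{2R}/4)² ≤ e^{-2R}/2`.
  refine ⟨log (max (4 * a) 128) / 2,
    div_pos (log_pos (lt_max_of_lt_right (by norm_num))) two_pos, fun R hR => ?_⟩
  have h2R : max (4 * a) 128 ≤ exp (2 * R) := by
    rw [← exp_log (by positivity : (0 : ℝ) < max (4 * a) 128)]
    exact exp_le_exp.2 (by linarith)
  have hm : 0 < exp (2 * R) / 4 := by positivity
  have hVm : ∀ ζ ∈ Ioi R, exp (2 * R) / 4 ≤ exp (2 * ζ) / 2 - a := fun ζ hζ => by
    have := exp_le_exp.2 (by linarith [mem_Ioi.1 hζ] : 2 * R ≤ 2 * ζ)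
    linarith [le_max_left (4 * a) 128]
  have key := integral_Ioi_sq_mul_weight_le hm (fun ζ => (exp_pos _).le)
    (hasDerivAt_exp_exp_two_mul_div_four_sub_mul a) hVm
    (fun ζ => (hw.differentiable one_ne_zero ζ).hasDerivAt) (hw.continuous_deriv le_rfl)
    hw2.integrableOn hw2'.integrableOn
  rw [integral_Ici_eq_integral_Ioi, integral_Ici_eq_integral_Ioi]
  refine key.trans (mul_le_mul_of_nonneg_right ?_ (setIntegral_nonneg measurableSet_Ioi
    fun ζ _ => by positivity))
  have h128 : 128 ≤ exp (2 * R) := le_of_max_le_right h2R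
  rw [show -2 * R = -(2 * R) by ring, exp_neg]
  field_simp
  nlinarith

/-- weighted Poincaré inequality at `+∞` for the weight
`ρ(ζ) = exp(e^{2ζ}/4 − ((p+3)/(p−1))ζ)`: for `w ∈ H¹(ℝ, dμ)`, there is `R₀ > 0` such that for
all `R ≥ R₀`, `∫_R^∞ w² dμ ≤ (e^{−2R}/2) ∫_R^∞ (w')² dμ`. -/
theorem stmt_3 (p : ℝ) (hp : 1 < p)
    (ρ : ℝ → ℝ)
    (hρ : ∀ ζ, ρ ζ = Real.exp (Real.exp (2 * ζ) / 4 - ((p + 3) / (p - 1)) * ζ))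
    (w : ℝ → ℝ) (hw : ContDiff ℝ 1 w)
    (hw2 : Integrable (fun ζ => (w ζ) ^ 2 * ρ ζ))
    (hw2' : Integrable (fun ζ => (deriv w ζ) ^ 2 * ρ ζ)) :
    ∃ R₀ > 0, ∀ R ≥ R₀,
      ∫ ζ in Ici R, (w ζ) ^ 2 * ρ ζ ≤
        Real.exp (-2 * R) / 2 * ∫ ζ in Ici R, (deriv w ζ) ^ 2 * ρ ζ :=
  stmt_3_general p ρ hρ w hw hw2 hw2'
end

section
/- Let p > 1 and let ρ(ζ) = exp(e^{2ζ}/4 − ((p+3)/(p−1))ζ), with weighted measure dμ = ρ(ζ)dζ on ℝ. Let w : ℝ → ℝ be continuously differentiable with ∫_ℝ w(ζ)² dμ(ζ) < ∞ and ∫_ℝ w'(ζ)² dμ(ζ) < ∞. Then there exists R₀' < 0 such that for all R ≤ R₀': ρ(R) · w(R)² ≤ 8((p−1)/(p+3)) ∫_{−∞}^R w'(ζ)² dμ(ζ). -/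
/-!
Write `α = (p+3)/(p-1) > 1` and `g = ρ w²`. Then `g' = (e^{2ζ}/2 - α) ρ w² + 2 ρ w w'`, and for
`ζ ≤ 0` the bound `2 w w' ≤ (α/8) w² + (8/α) w'²` makes the `w²` terms nonpositive, so
`g' ≤ (8/α) ρ w'²`. Integrating from `S` to `R` gives `g R ≤ g S + (8/α) ∫_{-∞}^R w'² dμ`, and
since `g` is integrable near `-∞` one can choose `S` with `g S` arbitrarily small.
-/

open Real Set Filter MeasureTheory

lemma exists_le_norm_lt_of_integrableOn_Iic {f : ℝ → ℝ} {R ε : ℝ}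
    (hf : IntegrableOn f (Iic R)) (hε : 0 < ε) : ∃ S ≤ R, ‖f S‖ < ε := by
  by_contra! h
  have hconst : IntegrableOn (fun _ ↦ ε) (Iic R) :=
    Integrable.mono' hf.norm aestronglyMeasurable_const <|
      (ae_restrict_mem measurableSet_Iic).mono fun x hx ↦ by
        rw [Real.norm_of_nonneg hε.le]; exact h x hx
  rw [integrableOn_const_iff, Real.volume_Iic] at hconst
  simp [hε.ne'] at hconst

lemma le_setIntegral_Iic_of_hasDerivAt_le {g g' φ : ℝ → ℝ} {R : ℝ}
    (hg : ∀ x ≤ R, HasDerivAt g (g' x) x) (hg' : ∀ x ≤ R, g' x ≤ φ x)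
    (hgint : IntegrableOn g (Iic R)) (hφint : IntegrableOn φ (Iic R))
    (hφ : ∀ x ≤ R, 0 ≤ φ x) : g R ≤ ∫ x in Iic R, φ x := by
  refine le_of_forall_pos_le_add fun ε hε ↦ ?_
  obtain ⟨S, hSR, hgS⟩ := exists_le_norm_lt_of_integrableOn_Iic hgint hε
  have hftc : g R - g S ≤ ∫ x in S..R, φ x :=
    intervalIntegral.sub_le_integral_of_hasDeriv_right_of_le hSR
      (fun x hx ↦ (hg x hx.2).continuousAt.continuousWithinAt)
      (fun x hx ↦ (hg x hx.2.le).hasDerivWithinAt)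
      (hφint.mono_set Icc_subset_Iic_self) (fun x hx ↦ hg' x hx.2.le)
  have hsub : ∫ x in S..R, φ x ≤ ∫ x in Iic R, φ x := by
    rw [intervalIntegral.integral_of_le hSR]
    exact setIntegral_mono_set hφint ((ae_restrict_mem measurableSet_Iic).mono hφ)
      (Eventually.of_forall fun x hx ↦ hx.2)
  linarith [Real.le_norm_self (g S)]

noncomputable def weight (α ζ : ℝ) : ℝ := exp (exp (2 * ζ) / 4 - α * ζ)

lemma weight_pos (α ζ : ℝ) : 0 < weight α ζ := exp_pos _

lemma hasDerivAt_weight (α ζ : ℝ) :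
    HasDerivAt (weight α) ((exp (2 * ζ) / 2 - α) * weight α ζ) ζ := by
  have hlin : HasDerivAt (fun x : ℝ ↦ 2 * x) 2 ζ := by simpa using (hasDerivAt_id ζ).const_mul 2
  have hinner : HasDerivAt (fun x ↦ exp (2 * x) / 4 - α * x) (exp (2 * ζ) / 2 - α) ζ :=
    ((hlin.exp.div_const 4).sub ((hasDerivAt_id' ζ).const_mul α)).congr_deriv (by ring)
  exact hinner.exp.congr_deriv (mul_comm _ _)

lemma hasDerivAt_weight_mul_sq {w : ℝ → ℝ} {w' : ℝ} (α : ℝ) {ζ : ℝ} (hw : HasDerivAt w w' ζ) :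
    HasDerivAt (fun x ↦ weight α x * w x ^ 2)
      ((exp (2 * ζ) / 2 - α) * weight α ζ * w ζ ^ 2 + weight α ζ * (2 * w ζ * w')) ζ :=
  ((hasDerivAt_weight α ζ).fun_mul (hw.fun_pow 2)).congr_deriv (by simp only [Nat.cast_ofNat]; ring)

lemma deriv_weight_mul_sq_le {α e r a b : ℝ} (hα : 0 < α) (he : 4 * e ≤ 7 * α) (hr : 0 ≤ r) :
    (e / 2 - α) * r * a ^ 2 + r * (2 * a * b) ≤ 8 / α * (b ^ 2 * r) := by
  have hamgm : 2 * a * b ≤ α / 8 * a ^ 2 + 8 / α * b ^ 2 := by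
    have : 8 / α * b ^ 2 * α = 8 * b ^ 2 := by field_simp
    nlinarith [sq_nonneg (α * a / 4 - 2 * b)]
  nlinarith [mul_le_mul_of_nonneg_left hamgm hr, mul_nonneg hr (sq_nonneg a)]

/-- pointwise weighted trace estimate at `−∞` for the weight
`ρ(ζ) = exp(e^{2ζ}/4 − ((p+3)/(p−1))ζ)`: for `w ∈ H¹(ℝ, dμ)`, there is `R₀' < 0` such that for
all `R ≤ R₀'`, `ρ(R) w(R)² ≤ 8((p−1)/(p+3)) ∫_{−∞}^R (w')² dμ`. -/
theorem stmt_6 (p : ℝ) (hp : 1 < p)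
    (ρ : ℝ → ℝ)
    (hρ : ∀ ζ, ρ ζ = Real.exp (Real.exp (2 * ζ) / 4 - ((p + 3) / (p - 1)) * ζ))
    (w : ℝ → ℝ) (hw : ContDiff ℝ 1 w)
    (hw2 : Integrable (fun ζ => (w ζ) ^ 2 * ρ ζ))
    (hw2' : Integrable (fun ζ => (deriv w ζ) ^ 2 * ρ ζ)) :
    ∃ R₀' < 0, ∀ R ≤ R₀',
      ρ R * (w R) ^ 2 ≤ 8 * ((p - 1) / (p + 3)) * ∫ ζ in Iic R, (deriv w ζ) ^ 2 * ρ ζ := by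
  set α := (p + 3) / (p - 1)
  have hα : 1 < α := by rw [lt_div_iff₀ (by linarith)]; linarith
  have hconst : 8 * ((p - 1) / (p + 3)) = 8 / α := by rw [div_div_eq_mul_div, mul_div_assoc]
  obtain rfl : ρ = weight α := funext hρ
  refine ⟨-1, by norm_num, fun R hR ↦ ?_⟩
  rw [hconst, ← integral_const_mul]
  refine le_setIntegral_Iic_of_hasDerivAt_le
    (fun ζ _ ↦ hasDerivAt_weight_mul_sq α (hw.differentiable one_ne_zero ζ).hasDerivAt)
    (fun ζ hζ ↦ deriv_weight_mul_sq_le (by linarith) ?_ (weight_pos α ζ).le)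
    (by simpa only [mul_comm] using hw2.integrableOn) (hw2'.const_mul _).integrableOn
    (fun ζ _ ↦ by have := weight_pos α ζ; positivity)
  have : exp (2 * ζ) ≤ 1 := exp_le_one_iff.mpr (by linarith)
  linarith
end

section
/- For every p > 1 and every φ ∈ [0,1], the inequality p − 1 − φ²(p + 1 − 2φ^{p−1}) ≥ (p − 1)(1 − φ)² holds. -/
open Real Set

/-- for every `p > 1` and `φ ∈ [0,1]`,
`p − 1 − φ²(p + 1 − 2φ^{p−1}) ≥ (p − 1)(1 − φ)²`. -/
theorem stmt_7 (p : ℝ) (hp : 1 < p) (φ : ℝ) (hφ : φ ∈ Icc (0 : ℝ) 1) :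
    (p - 1) * (1 - φ) ^ 2 ≤ p - 1 - φ ^ 2 * (p + 1 - 2 * φ ^ (p - 1)) := by
  obtain ⟨h0, h1⟩ := hφ
  have key : 1 + p * (φ - 1) ≤ φ ^ p := by
    have := one_add_mul_self_le_rpow_one_add (by linarith : (-1:ℝ) ≤ φ - 1) hp.le
    simpa using this
  have hmul : φ ^ p = φ * φ ^ (p - 1) := by
    have : φ ^ (1 + (p - 1)) = φ * φ ^ (p - 1) :=
      Real.rpow_one_add' h0 (by linarith)
    simpa using this
  have := mul_le_mul_of_nonneg_left key h0
  nlinarith [this, hmul]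
end

section
/- Let p > 1 and let φ : ℝ → ℝ be twice continuously differentiable with 0 < φ(ζ) < 1 for all ζ, satisfying φ''(ζ) + (e^{2ζ}/2 − (p+3)/(p−1)) φ'(ζ) + (2(p+1)/(p−1)²) φ(ζ)(1 − φ(ζ)^{p−1}) = 0 for all ζ ∈ ℝ, with φ(ζ) → 1 as ζ → −∞ and φ(ζ) → 0 as ζ → +∞. Then φ'(ζ) < 0 for every ζ ∈ ℝ; in particular, φ is strictly decreasing. -/
/-!
With `A` a primitive of the drift coefficient `e^{2ζ}/2 − (p+3)/(p−1)`, the ODE reads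
`(e^A φ')' = −e^A K φ (1 − φ^{p−1})`, which is negative because `0 < φ < 1`; so `e^A φ'` is
strictly decreasing. If `φ'(ζ₀) ≥ 0` for some `ζ₀`, then `e^A φ' > 0` on `(−∞, ζ₀)`, so `φ` is
increasing there and `φ(ζ₀) ≥ lim_{−∞} φ = 1`, contradicting `φ < 1`.
-/

open Real Set Filter

lemma MonotoneOn.le_of_tendsto_atBot {f : ℝ → ℝ} {a x L : ℝ} (hf : MonotoneOn f (Iic a))
    (hL : Tendsto f atBot (nhds L)) (hx : x ≤ a) : L ≤ f x :=
  le_of_tendsto hL <| (eventually_le_atBot x).mono fun _ hy =>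
    hf (mem_Iic.2 (hy.trans hx)) (mem_Iic.2 hx) hy

lemma strictAnti_exp_mul_deriv {φ B b : ℝ → ℝ} (hφ' : Differentiable ℝ (deriv φ))
    (hB : ∀ x, HasDerivAt B (b x) x) (hode : ∀ x, deriv (deriv φ) x + b x * deriv φ x < 0) :
    StrictAnti fun x => exp (B x) * deriv φ x := by
  refine strictAnti_of_deriv_neg fun x => ?_
  have hψ : HasDerivAt (fun x => exp (B x) * deriv φ x)
      (exp (B x) * (deriv (deriv φ) x + b x * deriv φ x)) x :=
    ((hB x).exp.mul (hφ' x).hasDerivAt).congr_deriv (by ring)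
  rw [hψ.deriv]
  exact mul_neg_of_pos_of_neg (exp_pos _) (hode x)

lemma pos_of_exp_mul_strictAnti {B g : ℝ → ℝ} (hψ : StrictAnti fun x => exp (B x) * g x)
    {a x : ℝ} (ha : 0 ≤ g a) (hx : x < a) : 0 < g x :=
  pos_of_mul_pos_right ((mul_nonneg (exp_pos _).le ha).trans_lt (hψ hx)) (exp_pos _).le

lemma deriv_neg_of_exp_mul_deriv_strictAnti {φ B : ℝ → ℝ} {L : ℝ} (hφ : Differentiable ℝ φ)
    (hψ : StrictAnti fun x => exp (B x) * deriv φ x) (hlt : ∀ x, φ x < L)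
    (hL : Tendsto φ atBot (nhds L)) (x : ℝ) : deriv φ x < 0 := by
  by_contra! hx
  have hmono : MonotoneOn φ (Iic x) := by
    refine monotoneOn_of_deriv_nonneg (convex_Iic x) hφ.continuous.continuousOn
      hφ.differentiableOn fun y hy => ?_
    rw [interior_Iic] at hy
    exact (pos_of_exp_mul_strictAnti hψ hx hy).le
  exact (hlt x).not_ge (hmono.le_of_tendsto_atBot hL le_rfl)

noncomputable def profileWeight (p ζ : ℝ) : ℝ :=
  exp (2 * ζ) / 4 - (p + 3) / (p - 1) * ζ

lemma hasDerivAt_profileWeight (p ζ : ℝ) :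
    HasDerivAt (profileWeight p) (exp (2 * ζ) / 2 - (p + 3) / (p - 1)) ζ := by
  have hexp : HasDerivAt (fun ζ : ℝ => exp (2 * ζ)) (exp (2 * ζ) * 2) ζ := by
    simpa using ((hasDerivAt_id ζ).const_mul (2 : ℝ)).exp
  have hlin : HasDerivAt (fun ζ : ℝ => (p + 3) / (p - 1) * ζ) ((p + 3) / (p - 1)) ζ := by
    simpa using (hasDerivAt_id ζ).const_mul ((p + 3) / (p - 1))
  exact ((hexp.div_const 4).sub hlin).congr_deriv (by ring)

lemma profile_reaction_pos {p u : ℝ} (hp : 1 < p) (hu₀ : 0 < u) (hu₁ : u < 1) :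
    0 < 2 * (p + 1) / (p - 1) ^ 2 * u * (1 - u ^ (p - 1)) := by
  have hpow : u ^ (p - 1) < 1 := rpow_lt_one hu₀.le hu₁ (by linarith)
  have hp1 : 0 < p + 1 := by linarith
  have : 0 < 1 - u ^ (p - 1) := by linarith
  positivity

theorem stmt_10_general (p : ℝ) (hp : 1 < p)
    (φ : ℝ → ℝ) (hφ : ContDiff ℝ 2 φ)
    (hrange : ∀ ζ : ℝ, 0 < φ ζ ∧ φ ζ < 1)
    (hode : ∀ ζ : ℝ, deriv (deriv φ) ζ
        + (Real.exp (2 * ζ) / 2 - (p + 3) / (p - 1)) * deriv φ ζ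
        + (2 * (p + 1) / (p - 1) ^ 2) * φ ζ * (1 - (φ ζ) ^ (p - 1)) = 0)
    (hlim₁ : Tendsto φ atBot (nhds 1)) :
    (∀ ζ : ℝ, deriv φ ζ < 0) ∧ StrictAnti φ := by
  have hφ' : Differentiable ℝ (deriv φ) :=
    (contDiff_succ_iff_deriv (n := 1).mp hφ).2.2.differentiable one_ne_zero
  have hψ := strictAnti_exp_mul_deriv hφ' (hasDerivAt_profileWeight p) fun ζ => by
    linarith [hode ζ, profile_reaction_pos hp (hrange ζ).1 (hrange ζ).2]
  have hneg := deriv_neg_of_exp_mul_deriv_strictAnti (hφ.differentiable two_ne_zero) hψ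
    (fun ζ => (hrange ζ).2) hlim₁
  exact ⟨hneg, strictAnti_of_deriv_neg hneg⟩

/-- any `C²` solution of the profile ODE with values strictly between 0 and 1
and limits 1 at `−∞`, 0 at `+∞` has strictly negative derivative everywhere; in particular
it is strictly decreasing. -/
theorem stmt_10 (p : ℝ) (hp : 1 < p)
    (φ : ℝ → ℝ) (hφ : ContDiff ℝ 2 φ)
    (hrange : ∀ ζ : ℝ, 0 < φ ζ ∧ φ ζ < 1)
    (hode : ∀ ζ : ℝ, deriv (deriv φ) ζ
        + (Real.exp (2 * ζ) / 2 - (p + 3) / (p - 1)) * deriv φ ζ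
        + (2 * (p + 1) / (p - 1) ^ 2) * φ ζ * (1 - (φ ζ) ^ (p - 1)) = 0)
    (hlim₁ : Tendsto φ atBot (nhds 1)) (hlim₀ : Tendsto φ atTop (nhds 0)) :
    (∀ ζ : ℝ, deriv φ ζ < 0) ∧ StrictAnti φ :=
  stmt_10_general p hp φ hφ hrange hode hlim₁
end

section
/- Let p > 1 and let ρ(ζ) = exp(e^{2ζ}/4 − ((p+3)/(p−1))ζ), with weighted measure dμ = ρ(ζ)dζ on ℝ. If w : ℝ → ℝ is continuously differentiable with ∫_ℝ w(ζ)² dμ(ζ) < ∞ and ∫_ℝ w'(ζ)² dμ(ζ) < ∞, then ρ(ζ) · w(ζ)² → 0 as ζ → +∞; in particular, w has super-exponential decay at +∞. -/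
open Real Set Filter MeasureTheory Topology

/-!
Put `g = ρ w²`. Since `ρ' = (e^{2ζ}/2 - (p+3)/(p-1)) ρ ≥ 0` for `ζ ≥ (p+3)/(p-1)`, there
`g' = ρ' w² + 2ρ w w' ≥ -ρ (w² + w'²) =: -k` with `k` integrable, so integrating from `x` to
`y ≥ x` gives `g x ≤ g y + ∫_{[x,∞)} k`. Since `g` is integrable and nonnegative, `g y` gets
arbitrarily small for large `y`, hence `0 ≤ g x ≤ ∫_{[x,∞)} k`, and this tail tends to `0`.
-/

section DerivLowerBound

variable {g g' k : ℝ → ℝ} {a : ℝ}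

theorem frequently_lt_of_integrableOn_Ici (hg : IntegrableOn g (Ici a)) {δ : ℝ} (hδ : 0 < δ) :
    ∃ᶠ y in atTop, g y < δ := by
  rw [frequently_atTop]
  intro x
  by_contra! h
  have hconst : IntegrableOn (fun _ => δ) (Ici (max a x)) :=
    (hg.mono_set (Ici_subset_Ici.2 (le_max_left a x))).mono' aestronglyMeasurable_const
      (ae_restrict_of_forall_mem measurableSet_Ici fun y hy => by
        rw [Real.norm_of_nonneg hδ.le]
        exact h y (le_of_max_le_right hy))
  simp [integrableOn_const_iff, hδ.ne'] at hconst

variable (hderiv : ∀ x ≥ a, HasDerivAt g (g' x) x) (hk : IntegrableOn k (Ici a))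
  (hk0 : ∀ x ≥ a, 0 ≤ k x) (hle : ∀ x ≥ a, -k x ≤ g' x)
include hderiv hk hk0 hle

theorem le_add_setIntegral_Ici_of_neg_le_deriv {x y : ℝ} (hax : a ≤ x) (hxy : x ≤ y) :
    g x ≤ g y + ∫ t in Ici x, k t := by
  have hkx : IntegrableOn k (Ici x) := hk.mono_set (Ici_subset_Ici.2 hax)
  have hftc : ∫ t in x..y, -k t ≤ g y - g x :=
    intervalIntegral.integral_le_sub_of_hasDeriv_right_of_le hxy
      (fun t ht => (hderiv t (hax.trans ht.1)).continuousAt.continuousWithinAt)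
      (fun t ht => (hderiv t (hax.trans ht.1.le)).hasDerivWithinAt)
      (hkx.neg.mono_set Icc_subset_Ici_self) (fun t ht => hle t (hax.trans ht.1.le))
  have htail : ∫ t in x..y, k t ≤ ∫ t in Ici x, k t := by
    rw [intervalIntegral.integral_of_le hxy]
    exact setIntegral_mono_set hkx
      (ae_restrict_of_forall_mem measurableSet_Ici fun t ht => hk0 t (hax.trans ht))
      (Ioc_subset_Icc_self.trans Icc_subset_Ici_self).eventuallyLE
  rw [intervalIntegral.integral_neg] at hftc
  linarith

theorem le_setIntegral_Ici_of_neg_le_deriv (hg : IntegrableOn g (Ici a)) {x : ℝ} (hax : a ≤ x) :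
    g x ≤ ∫ t in Ici x, k t := by
  refine le_of_forall_pos_lt_add fun δ hδ => ?_
  obtain ⟨y, hy, hxy⟩ :=
    ((frequently_lt_of_integrableOn_Ici hg hδ).and_eventually (eventually_ge_atTop x)).exists
  have := le_add_setIntegral_Ici_of_neg_le_deriv hderiv hk hk0 hle hax hxy
  linarith

theorem tendsto_atTop_zero_of_neg_le_deriv (hg : IntegrableOn g (Ici a))
    (hg0 : ∀ x ≥ a, 0 ≤ g x) : Tendsto g atTop (𝓝 0) :=
  tendsto_of_tendsto_of_tendsto_of_le_of_le' tendsto_const_nhds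
    (tendsto_integral_Ici_zero tendsto_id) ((eventually_ge_atTop a).mono hg0)
    ((eventually_ge_atTop a).mono fun _ hx =>
      le_setIntegral_Ici_of_neg_le_deriv hderiv hk hk0 hle hg hx)

end DerivLowerBound

theorem tendsto_mul_sq_atTop_zero_of_monotone_weight {ρ ρ' w : ℝ → ℝ} {a : ℝ}
    (hρ : ∀ x ≥ a, HasDerivAt ρ (ρ' x) x) (hρ' : ∀ x ≥ a, 0 ≤ ρ' x)
    (hρ0 : ∀ x ≥ a, 0 ≤ ρ x)
    (hw : ∀ x ≥ a, DifferentiableAt ℝ w x)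
    (hw2 : IntegrableOn (fun x => w x ^ 2 * ρ x) (Ici a))
    (hw2' : IntegrableOn (fun x => deriv w x ^ 2 * ρ x) (Ici a)) :
    Tendsto (fun x => ρ x * w x ^ 2) atTop (𝓝 0) := by
  refine tendsto_atTop_zero_of_neg_le_deriv
    (g' := fun x => ρ' x * w x ^ 2 + ρ x * (2 * w x * deriv w x))
    (k := fun x => w x ^ 2 * ρ x + deriv w x ^ 2 * ρ x)
    (fun x hx => ?_) (hw2.add hw2') (fun x hx => ?_) (fun x hx => ?_)
    (hw2.congr_fun (fun x _ => mul_comm _ _) measurableSet_Ici)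
    (fun x hx => mul_nonneg (hρ0 x hx) (sq_nonneg _))
  · refine ((hρ x hx).fun_mul ((hw x hx).hasDerivAt.fun_pow 2)).congr_deriv ?_
    norm_num
  · have := hρ0 x hx
    positivity
  · nlinarith [mul_nonneg (hρ' x hx) (sq_nonneg (w x)),
      mul_nonneg (hρ0 x hx) (sq_nonneg (w x + deriv w x))]

theorem stmt_11_general (p : ℝ)
    (ρ : ℝ → ℝ)
    (hρ : ∀ ζ, ρ ζ = Real.exp (Real.exp (2 * ζ) / 4 - ((p + 3) / (p - 1)) * ζ))
    (w : ℝ → ℝ) (hw : ContDiff ℝ 1 w)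
    (hw2 : Integrable (fun ζ => (w ζ) ^ 2 * ρ ζ))
    (hw2' : Integrable (fun ζ => (deriv w ζ) ^ 2 * ρ ζ)) :
    Tendsto (fun ζ => ρ ζ * (w ζ) ^ 2) atTop (nhds 0) := by
  set c := (p + 3) / (p - 1)
  obtain rfl : ρ = fun ζ => exp (exp (2 * ζ) / 4 - c * ζ) := funext hρ
  have hρ_deriv (ζ : ℝ) :
      HasDerivAt (fun ζ => exp (exp (2 * ζ) / 4 - c * ζ))
        ((exp (2 * ζ) / 2 - c) * exp (exp (2 * ζ) / 4 - c * ζ)) ζ := by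
    have hexponent :
        HasDerivAt (fun ζ => exp (2 * ζ) / 4 - c * ζ) (exp (2 * ζ) * 2 / 4 - c) ζ := by
      simpa using (((hasDerivAt_id ζ).const_mul 2).exp.div_const 4).fun_sub
        ((hasDerivAt_id ζ).const_mul c)
    convert hexponent.exp using 1
    ring
  have hfactor_nonneg (ζ : ℝ) (hζ : ζ ≥ c) : 0 ≤ exp (2 * ζ) / 2 - c := by
    linarith [add_one_le_exp (2 * ζ)]
  exact tendsto_mul_sq_atTop_zero_of_monotone_weight (a := c) (fun ζ _ => hρ_deriv ζ)
    (fun ζ hζ => mul_nonneg (hfactor_nonneg ζ hζ) (exp_pos _).le) (fun ζ _ => (exp_pos _).le)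
    (fun ζ _ => hw.differentiable one_ne_zero ζ) hw2.integrableOn hw2'.integrableOn

/-- if `w ∈ H¹(ℝ, dμ)` with `ρ(ζ) = exp(e^{2ζ}/4 − ((p+3)/(p−1))ζ)`, then
`ρ(ζ) w(ζ)² → 0` as `ζ → +∞` (super-exponential decay of `w` at `+∞`). -/
theorem stmt_11 (p : ℝ) (hp : 1 < p)
    (ρ : ℝ → ℝ)
    (hρ : ∀ ζ, ρ ζ = Real.exp (Real.exp (2 * ζ) / 4 - ((p + 3) / (p - 1)) * ζ))
    (w : ℝ → ℝ) (hw : ContDiff ℝ 1 w)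
    (hw2 : Integrable (fun ζ => (w ζ) ^ 2 * ρ ζ))
    (hw2' : Integrable (fun ζ => (deriv w ζ) ^ 2 * ρ ζ)) :
    Tendsto (fun ζ => ρ ζ * (w ζ) ^ 2) atTop (nhds 0) :=
  stmt_11_general p ρ hρ w hw hw2 hw2'
end

section
/- Let p > 1 and let ρ(ζ) = exp(e^{2ζ}/4 − ((p+3)/(p−1))ζ), with weighted measure dμ = ρ(ζ)dζ on ℝ. If w : ℝ → ℝ is continuously differentiable with ∫_ℝ w(ζ)² dμ(ζ) < ∞ and ∫_ℝ w'(ζ)² dμ(ζ) < ∞, then ρ(ζ) · w(ζ)² → 0 as ζ → −∞; in particular, w(ζ) decays exponentially as ζ → −∞. -/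
open Real Set Filter MeasureTheory

/-!
The function `ρ w²` is integrable on `(-∞, 0]`, and so is its derivative
`ρ' w² + 2 ρ w w'`: on `(-∞, 0]` the logarithmic derivative `ρ'/ρ = e^{2ζ}/2 - c` is bounded,
and `2 |w w'| ≤ w² + w'²`. A function with integrable derivative has a limit at `-∞`, and an
integrable function can only have the limit `0`.
-/

theorem abs_deriv_mul_sq_le {ρ w : ℝ → ℝ} {C x : ℝ} (hρ : 0 ≤ ρ x)
    (hρ' : |deriv ρ x| ≤ C * ρ x) :
    |deriv ρ x * w x ^ 2 + ρ x * (2 * w x * deriv w x)|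
      ≤ (C + 1) * (w x ^ 2 * ρ x) + deriv w x ^ 2 * ρ x := by
  have hww' : |2 * w x * deriv w x| ≤ w x ^ 2 + deriv w x ^ 2 := by
    rw [abs_le]
    constructor <;> nlinarith [sq_nonneg (w x + deriv w x), sq_nonneg (w x - deriv w x)]
  calc |deriv ρ x * w x ^ 2 + ρ x * (2 * w x * deriv w x)|
      ≤ |deriv ρ x| * w x ^ 2 + ρ x * |2 * w x * deriv w x| := by
        grw [abs_add_le, abs_mul, abs_mul, abs_of_nonneg (sq_nonneg (w x)), abs_of_nonneg hρ]
    _ ≤ C * ρ x * w x ^ 2 + ρ x * (w x ^ 2 + deriv w x ^ 2) := by gcongr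
    _ = (C + 1) * (w x ^ 2 * ρ x) + deriv w x ^ 2 * ρ x := by ring

theorem tendsto_weight_mul_sq_atBot_of_integrableOn {ρ w : ℝ → ℝ} {a C : ℝ}
    (hρ : Differentiable ℝ ρ) (hw : Differentiable ℝ w)
    (hρ_nonneg : ∀ x ≤ a, 0 ≤ ρ x) (hρ' : ∀ x ≤ a, |deriv ρ x| ≤ C * ρ x)
    (hw2 : IntegrableOn (fun x => w x ^ 2 * ρ x) (Iic a))
    (hw2' : IntegrableOn (fun x => deriv w x ^ 2 * ρ x) (Iic a)) :
    Tendsto (fun x => ρ x * w x ^ 2) atBot (nhds 0) := by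
  have hderiv : ∀ x, HasDerivAt (fun x => ρ x * w x ^ 2)
      (deriv ρ x * w x ^ 2 + ρ x * (2 * w x * deriv w x)) x := fun x => by
    simpa using (hρ x).hasDerivAt.fun_mul ((hw x).hasDerivAt.fun_pow 2)
  have hmeas : AEStronglyMeasurable
      (fun x => deriv ρ x * w x ^ 2 + ρ x * (2 * w x * deriv w x)) (volume.restrict (Iic a)) := by
    have := measurable_deriv ρ
    have := measurable_deriv w
    have := hρ.continuous.measurable
    have := hw.continuous.measurable
    exact Measurable.aestronglyMeasurable (by fun_prop)
  refine tendsto_zero_of_hasDerivAt_of_integrableOn_Iic (a := a) (fun x _ => hderiv x) ?_ ?_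
  · refine ((hw2.const_mul (C + 1)).add hw2').mono' hmeas ?_
    refine (ae_restrict_iff' measurableSet_Iic).2 (ae_of_all _ fun x (hx : x ≤ a) => ?_)
    exact abs_deriv_mul_sq_le (hρ_nonneg x hx) (hρ' x hx)
  · simpa only [mul_comm] using hw2

theorem hasDerivAt_exp_exp_two_mul_div_four_sub (c x : ℝ) :
    HasDerivAt (fun ζ => exp (exp (2 * ζ) / 4 - c * ζ))
      (exp (exp (2 * x) / 4 - c * x) * (exp (2 * x) / 2 - c)) x := by
  have hexponent : HasDerivAt (fun ζ => exp (2 * ζ) / 4 - c * ζ) (exp (2 * x) / 2 - c) x := by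
    have h := ((((hasDerivAt_id x).const_mul 2).exp.div_const 4).fun_sub
      ((hasDerivAt_id x).const_mul c))
    exact h.congr_deriv (by simp only [id]; ring)
  simpa only [mul_comm] using hexponent.exp

theorem abs_deriv_exp_exp_two_mul_div_four_sub_le (c : ℝ) {x : ℝ} (hx : x ≤ 0) :
    |deriv (fun ζ => exp (exp (2 * ζ) / 4 - c * ζ)) x|
      ≤ (1 / 2 + |c|) * exp (exp (2 * x) / 4 - c * x) := by
  have he : exp (2 * x) ≤ 1 := exp_le_one_iff.2 (by linarith)
  have hfactor : |exp (2 * x) / 2 - c| ≤ 1 / 2 + |c| := by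
    rw [abs_le]
    constructor <;> linarith [exp_pos (2 * x), neg_abs_le c, le_abs_self c]
  rw [(hasDerivAt_exp_exp_two_mul_div_four_sub c x).deriv, abs_mul, abs_of_pos (exp_pos _),
    mul_comm]
  gcongr

theorem stmt_12_general (p : ℝ)
    (ρ : ℝ → ℝ)
    (hρ : ∀ ζ, ρ ζ = Real.exp (Real.exp (2 * ζ) / 4 - ((p + 3) / (p - 1)) * ζ))
    (w : ℝ → ℝ) (hw : ContDiff ℝ 1 w)
    (hw2 : Integrable (fun ζ => (w ζ) ^ 2 * ρ ζ))
    (hw2' : Integrable (fun ζ => (deriv w ζ) ^ 2 * ρ ζ)) :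
    Tendsto (fun ζ => ρ ζ * (w ζ) ^ 2) atBot (nhds 0) := by
  obtain rfl : ρ = fun ζ => exp (exp (2 * ζ) / 4 - ((p + 3) / (p - 1)) * ζ) := funext hρ
  exact tendsto_weight_mul_sq_atBot_of_integrableOn (a := 0)
    (fun x => (hasDerivAt_exp_exp_two_mul_div_four_sub _ x).differentiableAt)
    (hw.differentiable one_ne_zero) (fun x _ => (exp_pos _).le)
    (fun x hx => abs_deriv_exp_exp_two_mul_div_four_sub_le _ hx)
    hw2.integrableOn hw2'.integrableOn

/-- if `w ∈ H¹(ℝ, dμ)` with `ρ(ζ) = exp(e^{2ζ}/4 − ((p+3)/(p−1))ζ)`, then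
`ρ(ζ) w(ζ)² → 0` as `ζ → −∞` (exponential decay of `w` at `−∞`). -/
theorem stmt_12 (p : ℝ) (hp : 1 < p)
    (ρ : ℝ → ℝ)
    (hρ : ∀ ζ, ρ ζ = Real.exp (Real.exp (2 * ζ) / 4 - ((p + 3) / (p - 1)) * ζ))
    (w : ℝ → ℝ) (hw : ContDiff ℝ 1 w)
    (hw2 : Integrable (fun ζ => (w ζ) ^ 2 * ρ ζ))
    (hw2' : Integrable (fun ζ => (deriv w ζ) ^ 2 * ρ ζ)) :
    Tendsto (fun ζ => ρ ζ * (w ζ) ^ 2) atBot (nhds 0) :=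
  stmt_12_general p ρ hρ w hw hw2 hw2'
end

section
/- Let R ∈ ℝ and let q₀, q₁ : [R,∞) → ℝ be continuous with q₀(ζ) ≥ 1/4 for all ζ ≥ R. Let ψ₀, ψ₁ : [R,∞) → (0,∞) be bounded, twice continuously differentiable functions satisfying ψ₁''(ζ) = (q₀(ζ) + q₁(ζ)) ψ₁(ζ) and ψ₀''(ζ) = q₀(ζ) ψ₀(ζ) for all ζ ≥ R, such that ψ₀(ζ), ψ₁(ζ), ψ₀'(ζ), ψ₁'(ζ) all tend to 0 as ζ → +∞. Assume there exist constants C, C' > 0 such that |q₁(s)| ≤ C' e^{−s} for all s ≥ R, and ψ₀(s)/ψ₀(σ) ≤ C and ψ₁(s)/ψ₁(σ) ≤ C whenever R ≤ σ ≤ s. Then there exists a constant c ∈ (0,∞) such that ψ₁(ζ)/ψ₀(ζ) → c as ζ → +∞. -/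
/-! The Wronskian `W = ψ₀ψ₁' - ψ₀'ψ₁` satisfies `W' = q₁ψ₀ψ₁` and vanishes at infinity. The ratio
bounds keep `ψ₀ψ₁` below `C²` times its value at `ζ` on `[ζ, ∞)`, so comparing `W` with an
exponential gives `|W ζ| ≤ C'C² e^{-ζ} ψ₀(ζ)ψ₁(ζ)`. Since `(log (ψ₁/ψ₀))' = W/(ψ₀ψ₁)`, the logarithm
of the ratio has an integrable derivative, hence a finite limit. -/

open Real Set Filter Topology MeasureTheory

theorem nonneg_of_hasDerivAt_nonpos_of_tendsto_zero {h h' : ℝ → ℝ} {a : ℝ}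
    (hh : ∀ t ≥ a, HasDerivAt h (h' t) t) (hh' : ∀ t ≥ a, h' t ≤ 0)
    (h0 : Tendsto h atTop (𝓝 0)) : 0 ≤ h a := by
  have hanti : AntitoneOn h (Ici a) := by
    refine antitoneOn_of_hasDerivWithinAt_nonpos (f' := h') (convex_Ici a)
      (fun t ht => (hh t ht).continuousAt.continuousWithinAt) (fun t ht => ?_) (fun t ht => ?_)
    · rw [interior_Ici] at ht
      exact (hh t (le_of_lt ht)).hasDerivWithinAt
    · rw [interior_Ici] at ht
      exact hh' t (le_of_lt ht)
  refine le_of_tendsto h0 ?_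
  filter_upwards [eventually_ge_atTop a] with t ht
  exact hanti self_mem_Ici ht ht

theorem abs_le_of_abs_deriv_le_neg_deriv {f f' g g' : ℝ → ℝ} {a : ℝ}
    (hf : ∀ t ≥ a, HasDerivAt f (f' t) t) (hg : ∀ t ≥ a, HasDerivAt g (g' t) t)
    (hle : ∀ t ≥ a, |f' t| ≤ -g' t)
    (hf0 : Tendsto f atTop (𝓝 0)) (hg0 : Tendsto g atTop (𝓝 0)) : |f a| ≤ g a := by
  have hsub : 0 ≤ g a - f a :=
    nonneg_of_hasDerivAt_nonpos_of_tendsto_zero (h := fun t => g t - f t)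
      (fun t ht => (hg t ht).sub (hf t ht))
      (fun t ht => by linarith [neg_abs_le (f' t), hle t ht]) (by simpa using hg0.sub hf0)
  have hadd : 0 ≤ g a + f a :=
    nonneg_of_hasDerivAt_nonpos_of_tendsto_zero (h := fun t => g t + f t)
      (fun t ht => (hg t ht).add (hf t ht))
      (fun t ht => by linarith [le_abs_self (f' t), hle t ht]) (by simpa using hg0.add hf0)
  exact abs_le.mpr ⟨by linarith, by linarith⟩

theorem exists_tendsto_of_abs_deriv_le {f f' b : ℝ → ℝ} {a : ℝ}
    (hf : ∀ t > a, HasDerivAt f (f' t) t) (hb : IntegrableOn b (Ioi a))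
    (hle : ∀ t > a, |f' t| ≤ b t) : ∃ L, Tendsto f atTop (𝓝 L) := by
  have hderiv : ∀ t ∈ Ioi a, HasDerivAt f (deriv f t) t :=
    fun t ht => (hf t ht).differentiableAt.hasDerivAt
  have hint : IntegrableOn (deriv f) (Ioi a) := by
    refine Integrable.mono' hb (measurable_deriv f).aestronglyMeasurable ?_
    filter_upwards [ae_restrict_mem measurableSet_Ioi] with t ht
    rw [Real.norm_eq_abs, (hf t ht).deriv]
    exact hle t ht
  exact ⟨_, tendsto_limUnder_of_hasDerivAt_of_integrableOn_Ioi hderiv hint⟩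

noncomputable def wronskian (f g : ℝ → ℝ) (t : ℝ) : ℝ := f t * deriv g t - deriv f t * g t

theorem hasDerivAt_wronskian {f g : ℝ → ℝ} {t : ℝ} (hf : DifferentiableAt ℝ f t)
    (hf' : DifferentiableAt ℝ (deriv f) t) (hg : DifferentiableAt ℝ g t)
    (hg' : DifferentiableAt ℝ (deriv g) t) :
    HasDerivAt (wronskian f g) (f t * deriv (deriv g) t - deriv (deriv f) t * g t) t :=
  ((hf.hasDerivAt.mul hg'.hasDerivAt).sub (hf'.hasDerivAt.mul hg.hasDerivAt)).congr_deriv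
    (by ring)

theorem hasDerivAt_log_div {f g : ℝ → ℝ} {t : ℝ} (hf : DifferentiableAt ℝ f t)
    (hg : DifferentiableAt ℝ g t) (hf0 : 0 < f t) (hg0 : 0 < g t) :
    HasDerivAt (fun s => log (g s / f s)) (wronskian f g t / (f t * g t)) t := by
  refine ((hg.hasDerivAt.div hf.hasDerivAt hf0.ne').log (div_pos hg0 hf0).ne').congr_deriv ?_
  simp only [wronskian, Pi.div_apply]
  field_simp

theorem abs_le_mul_exp_neg_of_hasDerivAt_mul {W q P : ℝ → ℝ} {R C C' : ℝ}
    (hW : ∀ t ≥ R, HasDerivAt W (q t * P t) t) (hW0 : Tendsto W atTop (𝓝 0))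
    (hq : ∀ t ≥ R, |q t| ≤ C' * exp (-t)) (hP0 : ∀ t ≥ R, 0 ≤ P t)
    (hP : ∀ σ ≥ R, ∀ s ≥ σ, P s ≤ C * P σ) (ζ : ℝ) (hζ : R ≤ ζ) :
    |W ζ| ≤ C' * C * exp (-ζ) * P ζ := by
  have hexp : ∀ t, HasDerivAt (fun s => C' * C * P ζ * exp (-s))
      (-(C' * C * P ζ * exp (-t))) t := fun t => by
    simpa using ((hasDerivAt_neg t).exp).const_mul (C' * C * P ζ)
  have hbound : ∀ t ≥ ζ, |q t * P t| ≤ C' * C * P ζ * exp (-t) := fun t ht => by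
    have htR : R ≤ t := hζ.trans ht
    calc |q t * P t| = |q t| * P t := by rw [abs_mul, abs_of_nonneg (hP0 t htR)]
      _ ≤ C' * exp (-t) * (C * P ζ) :=
        mul_le_mul (hq t htR) (hP ζ hζ t ht) (hP0 t htR) ((abs_nonneg _).trans (hq t htR))
      _ = C' * C * P ζ * exp (-t) := by ring
  have := abs_le_of_abs_deriv_le_neg_deriv (fun t ht => hW t (hζ.trans ht)) (fun t _ => hexp t)
    (fun t ht => by simpa using hbound t ht) hW0
    (by simpa using (tendsto_exp_neg_atTop_nhds_zero.const_mul (C' * C * P ζ)))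
  linarith

theorem exists_pos_tendsto_div_of_abs_wronskian_le {f g : ℝ → ℝ} {a K : ℝ}
    (hf : Differentiable ℝ f) (hg : Differentiable ℝ g) (hf0 : ∀ t ≥ a, 0 < f t)
    (hg0 : ∀ t ≥ a, 0 < g t) (hW : ∀ t ≥ a, |wronskian f g t| ≤ K * exp (-t) * (f t * g t)) :
    ∃ c, 0 < c ∧ Tendsto (fun t => g t / f t) atTop (𝓝 c) := by
  have hlog : ∀ t > a, HasDerivAt (fun s => log (g s / f s)) (wronskian f g t / (f t * g t)) t :=
    fun t ht => hasDerivAt_log_div (hf t) (hg t) (hf0 t ht.le) (hg0 t ht.le)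
  have hle : ∀ t > a, |wronskian f g t / (f t * g t)| ≤ K * exp (-t) := fun t ht => by
    have hfg : 0 < f t * g t := mul_pos (hf0 t ht.le) (hg0 t ht.le)
    rw [abs_div, abs_of_pos hfg, div_le_iff₀ hfg]
    exact hW t ht.le
  obtain ⟨L, hL⟩ := exists_tendsto_of_abs_deriv_le hlog
    ((integrableOn_exp_neg_Ioi a).const_mul K) hle
  refine ⟨exp L, exp_pos L, ((continuous_exp.tendsto L).comp hL).congr' ?_⟩
  filter_upwards [eventually_ge_atTop a] with t ht
  exact exp_log (div_pos (hg0 t ht) (hf0 t ht))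

theorem stmt_13_general (R : ℝ) (q₀ q₁ ψ₀ ψ₁ : ℝ → ℝ)
    (hψ₀pos : ∀ ζ ≥ R, 0 < ψ₀ ζ) (hψ₁pos : ∀ ζ ≥ R, 0 < ψ₁ ζ)
    (hψ₀reg : ContDiff ℝ 2 ψ₀) (hψ₁reg : ContDiff ℝ 2 ψ₁)
    (hode₁ : ∀ ζ ≥ R, deriv (deriv ψ₁) ζ = (q₀ ζ + q₁ ζ) * ψ₁ ζ)
    (hode₀ : ∀ ζ ≥ R, deriv (deriv ψ₀) ζ = q₀ ζ * ψ₀ ζ)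
    (hlim₀ : Tendsto ψ₀ atTop (nhds 0)) (hlim₁ : Tendsto ψ₁ atTop (nhds 0))
    (hlim₀' : Tendsto (deriv ψ₀) atTop (nhds 0)) (hlim₁' : Tendsto (deriv ψ₁) atTop (nhds 0))
    (C C' : ℝ)
    (hq₁dec : ∀ s ≥ R, |q₁ s| ≤ C' * Real.exp (-s))
    (hratio₀ : ∀ σ ≥ R, ∀ s ≥ σ, ψ₀ s / ψ₀ σ ≤ C)
    (hratio₁ : ∀ σ ≥ R, ∀ s ≥ σ, ψ₁ s / ψ₁ σ ≤ C) :
    ∃ c : ℝ, 0 < c ∧ Tendsto (fun ζ => ψ₁ ζ / ψ₀ ζ) atTop (nhds c) := by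
  have hψ₀diff := hψ₀reg.differentiable two_ne_zero
  have hψ₁diff := hψ₁reg.differentiable two_ne_zero
  have hW : ∀ t ≥ R, HasDerivAt (wronskian ψ₀ ψ₁) (q₁ t * (ψ₀ t * ψ₁ t)) t := fun t ht =>
    (hasDerivAt_wronskian (hψ₀diff t) (hψ₀reg.differentiable_deriv_two t) (hψ₁diff t)
      (hψ₁reg.differentiable_deriv_two t)).congr_deriv (by rw [hode₀ t ht, hode₁ t ht]; ring)
  have hW0 : Tendsto (wronskian ψ₀ ψ₁) atTop (𝓝 0) := by
    have h := (hlim₀.mul hlim₁').sub (hlim₀'.mul hlim₁)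
    rwa [mul_zero, sub_zero] at h
  have hP : ∀ σ ≥ R, ∀ s ≥ σ, ψ₀ s * ψ₁ s ≤ C ^ 2 * (ψ₀ σ * ψ₁ σ) := fun σ hσ s hs => by
    have h₀ := (div_le_iff₀ (hψ₀pos σ hσ)).mp (hratio₀ σ hσ s hs)
    have h₁ := (div_le_iff₀ (hψ₁pos σ hσ)).mp (hratio₁ σ hσ s hs)
    calc ψ₀ s * ψ₁ s ≤ C * ψ₀ σ * (C * ψ₁ σ) :=
          mul_le_mul h₀ h₁ (hψ₁pos s (hσ.trans hs)).le ((hψ₀pos s (hσ.trans hs)).le.trans h₀)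
      _ = C ^ 2 * (ψ₀ σ * ψ₁ σ) := by ring
  exact exists_pos_tendsto_div_of_abs_wronskian_le hψ₀diff hψ₁diff hψ₀pos hψ₁pos
    (abs_le_mul_exp_neg_of_hasDerivAt_mul hW hW0 hq₁dec
      (fun t ht => (mul_pos (hψ₀pos t ht) (hψ₁pos t ht)).le) hP)

/-- comparison of decaying positive solutions of the Schrödinger-type equations
`ψ₁'' = (q₀ + q₁)ψ₁` and `ψ₀'' = q₀ψ₀` on `[R,∞)` with `q₀ ≥ 1/4` and `q₁` exponentially
small: under boundedness, decay-at-infinity and ratio-boundedness assumptions, the ratio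
`ψ₁/ψ₀` converges to a finite positive limit at `+∞`. -/
theorem stmt_13 (R : ℝ) (q₀ q₁ ψ₀ ψ₁ : ℝ → ℝ)
    (hq₀cont : ContinuousOn q₀ (Ici R)) (hq₁cont : ContinuousOn q₁ (Ici R))
    (hq₀ : ∀ ζ ≥ R, (1 : ℝ) / 4 ≤ q₀ ζ)
    (hψ₀pos : ∀ ζ ≥ R, 0 < ψ₀ ζ) (hψ₁pos : ∀ ζ ≥ R, 0 < ψ₁ ζ)
    (hψ₀bdd : ∃ M : ℝ, ∀ ζ ≥ R, |ψ₀ ζ| ≤ M) (hψ₁bdd : ∃ M : ℝ, ∀ ζ ≥ R, |ψ₁ ζ| ≤ M)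
    (hψ₀reg : ContDiff ℝ 2 ψ₀) (hψ₁reg : ContDiff ℝ 2 ψ₁)
    (hode₁ : ∀ ζ ≥ R, deriv (deriv ψ₁) ζ = (q₀ ζ + q₁ ζ) * ψ₁ ζ)
    (hode₀ : ∀ ζ ≥ R, deriv (deriv ψ₀) ζ = q₀ ζ * ψ₀ ζ)
    (hlim₀ : Tendsto ψ₀ atTop (nhds 0)) (hlim₁ : Tendsto ψ₁ atTop (nhds 0))
    (hlim₀' : Tendsto (deriv ψ₀) atTop (nhds 0)) (hlim₁' : Tendsto (deriv ψ₁) atTop (nhds 0))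
    (C C' : ℝ) (hC : 0 < C) (hC' : 0 < C')
    (hq₁dec : ∀ s ≥ R, |q₁ s| ≤ C' * Real.exp (-s))
    (hratio₀ : ∀ σ ≥ R, ∀ s ≥ σ, ψ₀ s / ψ₀ σ ≤ C)
    (hratio₁ : ∀ σ ≥ R, ∀ s ≥ σ, ψ₁ s / ψ₁ σ ≤ C) :
    ∃ c : ℝ, 0 < c ∧ Tendsto (fun ζ => ψ₁ ζ / ψ₀ ζ) atTop (nhds c) :=
  stmt_13_general R q₀ q₁ ψ₀ ψ₁ hψ₀pos hψ₁pos hψ₀reg hψ₁reg hode₁ hode₀ hlim₀ hlim₁ hlim₀' hlim₁' C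
    C' hq₁dec hratio₀ hratio₁
end

section
/- Let p > 1 and let φ : ℝ → ℝ be a twice continuously differentiable, strictly decreasing function with 0 < φ < 1, satisfying φ''(ζ) + (e^{2ζ}/2 − (p+3)/(p−1)) φ'(ζ) + (2(p+1)/(p−1)²) φ(ζ)(1 − φ(ζ)^{p−1}) = 0 on ℝ, with φ → 1, φ' → 0 as ζ → −∞ and φ → 0, φ' → 0 as ζ → +∞, and such that ∫_ℝ (φ−η)² dμ < ∞ and ∫_ℝ (φ'−η')² dμ < ∞ for some η ∈ C^∞(ℝ) with η = 1 on (−∞,0] and η = 0 on [1,∞), where dμ = ρ(ζ)dζ with ρ(ζ) = exp(e^{2ζ}/4 − ((p+3)/(p−1))ζ). Then there exists a constant c ∈ (0,∞) such that φ(ζ) · exp(e^{2ζ}/4 − ((5−p)/(p−1))ζ) → c as ζ → +∞. -/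
open Real Set Filter MeasureTheory Topology

lemma deriv_nonpos_of_antitone {f : ℝ → ℝ} {f' x : ℝ} (hf : HasDerivAt f f' x)
    (h : Antitone f) : f' ≤ 0 := by
  have hs : Tendsto (slope f x) (𝓝[>] x) (𝓝 f') :=
    (hasDerivAt_iff_tendsto_slope.1 hf).mono_left
      (nhdsWithin_mono x (fun y hy => ne_of_gt hy))
  refine le_of_tendsto hs ?_
  filter_upwards [self_mem_nhdsWithin] with y hy
  have : f y ≤ f x := h (le_of_lt hy)
  rw [slope_def_field]
  apply div_nonpos_of_nonpos_of_nonneg <;> [linarith; linarith [mem_Ioi.1 hy]]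

lemma tendsto_quarter (b : ℝ) : Tendsto (fun ζ : ℝ => Real.exp (2*ζ)/4 - b*ζ) atTop atTop := by
  apply tendsto_atTop_mono' _ _ tendsto_id
  filter_upwards [eventually_ge_atTop (0:ℝ), eventually_ge_atTop (4*b+4)] with ζ h0 hb
  have h1 : ζ + 1 ≤ Real.exp ζ := Real.add_one_le_exp ζ
  have h2 : Real.exp (2*ζ) = Real.exp ζ * Real.exp ζ := by rw [← Real.exp_add]; ring_nf
  simp only [id]
  nlinarith [Real.exp_pos ζ]

lemma stay_le {f f' : ℝ → ℝ} (hd : ∀ x, HasDerivAt f (f' x) x) {a M : ℝ}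
    (h0 : f a ≤ M) (hM : ∀ x, a ≤ x → f x = M → f' x < 0) : ∀ x, a ≤ x → f x ≤ M := by
  intro T haT
  by_contra hT
  push_neg at hT
  have hcf : Continuous f := by
    have : Differentiable ℝ f := fun x => (hd x).differentiableAt
    exact this.continuous
  set K := Icc a T ∩ f ⁻¹' (Iic M) with hK
  have hKc : IsCompact K := (isCompact_Icc).inter_right (isClosed_Iic.preimage hcf)
  have hKne : K.Nonempty := ⟨a, ⟨le_refl a, haT⟩, h0⟩
  set S := sSup K with hS
  have hSK : S ∈ K := hKc.sSup_mem hKne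
  have hSa : a ≤ S := hSK.1.1
  have hST : S ≤ T := hSK.1.2
  have hfS : f S ≤ M := hSK.2
  have hSltT : S < T := lt_of_le_of_ne hST (by intro hEq; rw [hEq] at hfS; exact absurd hfS (not_le.2 hT))
  have hgt : ∀ x, S < x → x ≤ T → M < f x := by
    intro x hx hxT
    by_contra hfx
    push_neg at hfx
    have : x ∈ K := ⟨⟨hSa.trans hx.le, hxT⟩, hfx⟩
    exact absurd (le_csSup hKc.bddAbove this) (not_le.2 hx)
  have hfSM : f S = M := by
    rcases lt_or_eq_of_le hfS with hlt | heq
    · exfalso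
      have hcont : ContinuousAt f S := hcf.continuousAt
      have hev : ∀ᶠ y in 𝓝 S, f y < M := hcont.eventually_lt continuousAt_const hlt
      have hev' : ∀ᶠ y in 𝓝[>] S, f y < M := hev.filter_mono nhdsWithin_le_nhds
      have hIoo : Ioo S T ∈ 𝓝[>] S := Ioo_mem_nhdsGT_of_mem ⟨le_refl S, hSltT⟩
      rcases (hev'.and hIoo).exists with ⟨y, hy1, hy2⟩
      exact absurd (hgt y hy2.1 hy2.2.le) (not_lt.2 hy1.le)
    · exact heq
  have hderiv : f' S < 0 := hM S hSa hfSM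
  have hs : Tendsto (slope f S) (𝓝[>] S) (𝓝 (f' S)) :=
    (hasDerivAt_iff_tendsto_slope.1 (hd S)).mono_left
      (nhdsWithin_mono S (fun y hy => ne_of_gt hy))
  have : (0:ℝ) ≤ f' S := by
    refine ge_of_tendsto hs ?_
    filter_upwards [Ioo_mem_nhdsGT_of_mem ⟨le_refl S, hSltT⟩] with y hy
    have h1 : M < f y := hgt y hy.1 hy.2.le
    rw [slope_def_field, hfSM]
    have h2 : 0 < y - S := by linarith [hy.1]
    have h3 : 0 ≤ f y - M := by linarith
    positivity
  linarith

lemma hasDerivAt_exp2 (ζ : ℝ) : HasDerivAt (fun s : ℝ => Real.exp (2*s)) (2 * Real.exp (2*ζ)) ζ := by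
  have h := (Real.hasDerivAt_exp (2*ζ)).comp ζ ((hasDerivAt_id ζ).const_mul 2)
  simpa [Function.comp_def, mul_comm] using h

lemma hasDerivAt_R (k ζ : ℝ) :
    HasDerivAt (fun s => Real.exp (Real.exp (2*s)/4 - k*s))
      ((Real.exp (2*ζ)/2 - k) * Real.exp (Real.exp (2*ζ)/4 - k*ζ)) ζ := by
  have hE : HasDerivAt (fun s : ℝ => Real.exp (2*s)/4 - k*s) (Real.exp (2*ζ)/2 - k) ζ := by
    have h1 := (hasDerivAt_exp2 ζ).div_const 4
    have h2 := (hasDerivAt_id ζ).const_mul k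
    have : HasDerivAt (fun s : ℝ => Real.exp (2*s)/4 - k*s) (2 * Real.exp (2*ζ) / 4 - k * 1) ζ := h1.sub h2
    convert this using 1
    ring
  have := hE.exp
  simpa [mul_comm] using this

set_option maxHeartbeats 2000000 in
/-- precise decay of the self-similar profile at `+∞`:
`φ(ζ) ~ c · exp(−e^{2ζ}/4 + ((5−p)/(p−1))ζ)` as `ζ → +∞`, i.e.
`φ(ζ) exp(e^{2ζ}/4 − ((5−p)/(p−1))ζ) → c ∈ (0,∞)`. -/
theorem stmt_14 (p : ℝ) (hp : 1 < p)
    (φ : ℝ → ℝ) (hφreg : ContDiff ℝ 2 φ) (hdec : StrictAnti φ)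
    (hrange : ∀ ζ : ℝ, 0 < φ ζ ∧ φ ζ < 1)
    (hode : ∀ ζ : ℝ, deriv (deriv φ) ζ
        + (Real.exp (2 * ζ) / 2 - (p + 3) / (p - 1)) * deriv φ ζ
        + (2 * (p + 1) / (p - 1) ^ 2) * φ ζ * (1 - (φ ζ) ^ (p - 1)) = 0)
    (hlim₁ : Tendsto φ atBot (nhds 1)) (hlim₁' : Tendsto (deriv φ) atBot (nhds 0))
    (hlim₀ : Tendsto φ atTop (nhds 0)) (hlim₀' : Tendsto (deriv φ) atTop (nhds 0))
    (η : ℝ → ℝ) (hη : ContDiff ℝ (⊤ : ℕ∞) η)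
    (hη1 : ∀ ζ ≤ 0, η ζ = 1) (hη0 : ∀ ζ ≥ 1, η ζ = 0)
    (hint : Integrable (fun ζ =>
        (φ ζ - η ζ) ^ 2 * Real.exp (Real.exp (2 * ζ) / 4 - ((p + 3) / (p - 1)) * ζ)))
    (hint' : Integrable (fun ζ =>
        (deriv φ ζ - deriv η ζ) ^ 2 *
          Real.exp (Real.exp (2 * ζ) / 4 - ((p + 3) / (p - 1)) * ζ))) :
    ∃ c : ℝ, 0 < c ∧
      Tendsto (fun ζ => φ ζ * Real.exp (Real.exp (2 * ζ) / 4 - ((5 - p) / (p - 1)) * ζ))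
        atTop (nhds c) := by
  have hp1 : 0 < p - 1 := by linarith
  set k : ℝ := (p + 3) / (p - 1) with hkdef
  set lam : ℝ := 2 * (p + 1) / (p - 1) ^ 2 with hlamdef
  have hkpos : 0 < k := by positivity
  have hlampos : 0 < lam := by positivity
  set R : ℝ → ℝ := fun s => Real.exp (Real.exp (2*s)/4 - k*s) with hRdef
  have hRpos : ∀ s, 0 < R s := fun s => Real.exp_pos _
  set α : ℝ → ℝ := fun s => Real.exp (2*s)/2 - k with hadef
  have hR' : ∀ s, HasDerivAt R (α s * R s) s := fun s => hasDerivAt_R k s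
  have hamono : ∀ s t : ℝ, s ≤ t → α s ≤ α t := by
    intro s t hst
    have := Real.exp_le_exp.2 (by linarith : 2*s ≤ 2*t)
    simp only [hadef]
    linarith
  -- regularity facts
  have hφd : Differentiable ℝ φ := hφreg.differentiable (by norm_num)
  have hφ' : ∀ s, HasDerivAt φ (deriv φ s) s := fun s => (hφd s).hasDerivAt
  have hφ1 : ContDiff ℝ 1 (deriv φ) := by
    have h2 : ContDiff ℝ ((1:ℕ) + 1) φ := by exact_mod_cast hφreg
    exact (contDiff_succ_iff_deriv.mp h2).2.2
  have hφ'd : Differentiable ℝ (deriv φ) := hφ1.differentiable one_ne_zero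
  have hφ'' : ∀ s, HasDerivAt (deriv φ) (deriv (deriv φ) s) s := fun s => (hφ'd s).hasDerivAt
  have hφ'cont : Continuous (deriv φ) := hφ'd.continuous
  have hφcont : Continuous φ := hφd.continuous
  have hφ'le : ∀ s, deriv φ s ≤ 0 := fun s =>
    deriv_nonpos_of_antitone (hφ' s) hdec.antitone
  have hφpos : ∀ s, 0 < φ s := fun s => (hrange s).1
  have hφlt1 : ∀ s, φ s < 1 := fun s => (hrange s).2
  have hpow_pos : ∀ s, 0 < φ s ^ (p-1) := fun s => Real.rpow_pos_of_pos (hφpos s) _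
  have hpow_lt1 : ∀ s, φ s ^ (p-1) < 1 := fun s =>
    Real.rpow_lt_one (hφpos s).le (hφlt1 s) hp1
  have hpowcont : Continuous (fun s => φ s ^ (p-1)) :=
    hφcont.rpow_const (fun s => Or.inl (hφpos s).ne')
  -- the ODE rearranged
  have hode' : ∀ s, deriv (deriv φ) s =
      -(α s * deriv φ s) - lam * φ s * (1 - φ s ^ (p-1)) := by
    intro s
    have := hode s
    simp only [hadef, hkdef, hlamdef] at *
    linarith
  -- u = -φ' R, increasing
  set u : ℝ → ℝ := fun s => -deriv φ s * R s with hudef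
  set u' : ℝ → ℝ := fun s => lam * (R s * (φ s * (1 - φ s ^ (p-1)))) with hu'def
  have hu'pos : ∀ s, 0 < u' s := by
    intro s
    have h1 : 0 < 1 - φ s ^ (p-1) := by linarith [hpow_lt1 s]
    simp only [hu'def]
    exact mul_pos hlampos (mul_pos (hRpos s) (mul_pos (hφpos s) h1))
  have hu'cont : Continuous u' := by
    simp only [hu'def]
    fun_prop
  have hu : ∀ s, HasDerivAt u (u' s) s := by
    intro s
    have h : HasDerivAt (fun y => -deriv φ y * R y)
        (-deriv (deriv φ) s * R s + -deriv φ s * (α s * R s)) s :=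
      ((hφ'' s).neg).mul (hR' s)
    have heq : -deriv (deriv φ) s * R s + -deriv φ s * (α s * R s) = u' s := by
      rw [hode' s]; simp only [hu'def]; ring
    rw [hudef, ← heq]
    exact h
  have hderivu : ∀ s, deriv u s = u' s := fun s => (hu s).deriv
  have hustrict : StrictMono u :=
    strictMono_of_deriv_pos (fun s => by rw [hderivu s]; exact hu'pos s)
  have hunn : ∀ s, 0 ≤ u s := by
    intro s
    simp only [hudef]
    exact mul_nonneg (by linarith [hφ'le s]) (hRpos s).le
  have hucont : Continuous u := by simp only [hudef]; fun_prop
  -- the Riccati variable r = -φ'/φ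
  set r : ℝ → ℝ := fun s => -deriv φ s / φ s with hrdef
  have hrnn : ∀ s, 0 ≤ r s := by
    intro s
    simp only [hrdef]
    exact div_nonneg (by linarith [hφ'le s]) (hφpos s).le
  set q : ℝ → ℝ := fun s => lam * (1 - φ s ^ (p-1)) with hqdef
  have hqle : ∀ s, q s ≤ lam := by
    intro s
    simp only [hqdef]
    nlinarith [hpow_pos s, hlampos]
  have hr' : ∀ s, HasDerivAt r (r s^2 - α s * r s + q s) s := by
    intro s
    have h : HasDerivAt (fun y => -deriv φ y / φ y)
        ((-deriv (deriv φ) s * φ s - -deriv φ s * deriv φ s) / (φ s)^2) s :=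
      ((hφ'' s).neg).div (hφ' s) (hφpos s).ne'
    have heq : (-deriv (deriv φ) s * φ s - -deriv φ s * deriv φ s) / (φ s)^2
        = r s^2 - α s * r s + q s := by
      rw [hode' s]
      simp only [hrdef, hqdef]
      have h2 : φ s ≠ 0 := (hφpos s).ne'
      set w := φ s ^ (p-1)
      field_simp
      ring
    rw [hrdef, ← heq]
    exact h
  -- threshold point
  set zstar : ℝ := max 1 (Real.log (2*(lam+k+2))) with hzdef
  have hz1 : (1:ℝ) ≤ zstar := le_max_left _ _
  have halpha : ∀ s, zstar ≤ s → lam + 2 ≤ α s := by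
    intro s hs
    have hpos : (0:ℝ) < 2*(lam+k+2) := by linarith
    have h1 : Real.exp zstar ≥ 2*(lam+k+2) := by
      calc Real.exp zstar ≥ Real.exp (Real.log (2*(lam+k+2))) :=
            Real.exp_le_exp.2 (le_max_right _ _)
        _ = 2*(lam+k+2) := Real.exp_log hpos
    have h2 : Real.exp s ≥ Real.exp zstar := Real.exp_le_exp.2 hs
    have h3 : (1:ℝ) ≤ Real.exp s := Real.one_le_exp (by linarith)
    have h4 : Real.exp (2*s) = Real.exp s * Real.exp s := by rw [← Real.exp_add]; ring_nf
    simp only [hadef]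
    nlinarith
  -- KEY: eventually r ≥ α - 1
  have hkey : ∀ ζ₀, zstar ≤ ζ₀ → α ζ₀ - 1 ≤ r ζ₀ := by
    intro ζ₀ hζ₀
    by_contra hcon
    push_neg at hcon
    set M : ℝ := max (r ζ₀) (lam + 1) with hMdef
    have hM1 : lam + 1 ≤ M := le_max_right _ _
    have hM0 : 0 < M := by linarith
    have hMle : ∀ s, ζ₀ ≤ s → M + 1 ≤ α s := by
      intro s hs
      have h1 : α ζ₀ ≤ α s := hamono _ _ hs
      have h2 : r ζ₀ + 1 ≤ α ζ₀ := by linarith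
      have h3 : lam + 2 ≤ α ζ₀ := halpha _ hζ₀
      rcases max_cases (r ζ₀) (lam + 1) with ⟨hEq, _⟩ | ⟨hEq, _⟩ <;> rw [hMdef, hEq] <;> linarith
    have hbar : ∀ s, ζ₀ ≤ s → r s ≤ M := by
      refine stay_le hr' (le_max_left _ _) ?_
      intro x hax hfx
      have h1 := hqle x
      have h2 := hMle x hax
      have h3 : 0 ≤ (α x - (M+1)) * M := mul_nonneg (by linarith) hM0.le
      rw [hfx]
      nlinarith
    -- lower bound on φ
    set G : ℝ → ℝ := fun s => Real.log (φ s) + M*s with hGdef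
    have hG' : ∀ s, HasDerivAt G (deriv φ s / φ s + M) s := by
      intro s
      have h1 : HasDerivAt (fun y => Real.log (φ y)) (deriv φ s / φ s) s :=
        (hφ' s).log (hφpos s).ne'
      have h2 : HasDerivAt (fun y : ℝ => M*y) M s := by
        simpa using (hasDerivAt_id s).const_mul M
      exact h1.add h2
    have hGmono : MonotoneOn G (Ici ζ₀) := by
      apply monotoneOn_of_deriv_nonneg (convex_Ici ζ₀)
      · exact fun x _ => ((hG' x).continuousAt).continuousWithinAt
      · exact fun x _ => ((hG' x).differentiableAt).differentiableWithinAt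
      · intro x hx
        rw [interior_Ici] at hx
        rw [(hG' x).deriv]
        have h1 : r x ≤ M := hbar x (le_of_lt hx)
        have h2 : deriv φ x / φ x = -(r x) := by simp only [hrdef]; ring
        rw [h2]; linarith
    set c0 : ℝ := φ ζ₀ * Real.exp (M*ζ₀) with hc0def
    have hc0 : 0 < c0 := mul_pos (hφpos ζ₀) (Real.exp_pos _)
    have hφlow : ∀ s, ζ₀ ≤ s → c0 * Real.exp (-(M*s)) ≤ φ s := by
      intro s hs
      have h1 : G ζ₀ ≤ G s := hGmono self_mem_Ici hs hs
      simp only [hGdef] at h1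
      have h2 : Real.log (φ ζ₀) + M*ζ₀ - M*s ≤ Real.log (φ s) := by linarith
      have e1 : Real.exp (Real.log (φ ζ₀) + M*ζ₀ - M*s)
          = φ ζ₀ * (Real.exp (M*ζ₀) * Real.exp (-(M*s))) := by
        rw [show Real.log (φ ζ₀) + M*ζ₀ - M*s
            = Real.log (φ ζ₀) + (M*ζ₀ + -(M*s)) by ring,
          Real.exp_add, Real.exp_add, Real.exp_log (hφpos ζ₀)]
      calc c0 * Real.exp (-(M*s))
          = Real.exp (Real.log (φ ζ₀) + M*ζ₀ - M*s) := by
            rw [hc0def, e1]; ring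
        _ ≤ Real.exp (Real.log (φ s)) := Real.exp_le_exp.2 h2
        _ = φ s := Real.exp_log (hφpos s)
    -- now the contradiction with integrability
    have htend : Tendsto (fun s => c0^2 * Real.exp (Real.exp (2*s)/4 - (k + 2*M)*s))
        atTop atTop := by
      apply Tendsto.const_mul_atTop (by positivity)
      exact Real.tendsto_exp_atTop.comp (tendsto_quarter (k + 2*M))
    obtain ⟨Z', hZ'⟩ := (htend.eventually_ge_atTop 1).exists_forall_of_atTop
    set Z : ℝ := max Z' (max ζ₀ 1) with hZdef
    have hge1 : ∀ x, Z < x → 1 ≤ φ x^2 * R x := by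
      intro x hx
      have hxζ₀ : ζ₀ ≤ x := le_trans (le_trans (le_max_left _ _) (le_max_right Z' _)) hx.le
      have hxZ' : Z' ≤ x := le_trans (le_max_left _ _) hx.le
      have h1 := hφlow x hxζ₀
      have h2 : c0^2 * Real.exp (Real.exp (2*x)/4 - (k + 2*M)*x)
          = (c0 * Real.exp (-(M*x)))^2 * R x := by
        have e2 : Real.exp (Real.exp (2*x)/4 - (k + 2*M)*x)
            = Real.exp (-(M*x)) * Real.exp (-(M*x)) * Real.exp (Real.exp (2*x)/4 - k*x) := by
          rw [← Real.exp_add, ← Real.exp_add]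
          congr 1
          ring
        simp only [hRdef]
        rw [e2]
        ring
      calc (1:ℝ) ≤ c0^2 * Real.exp (Real.exp (2*x)/4 - (k + 2*M)*x) := hZ' x hxZ'
        _ = (c0 * Real.exp (-(M*x)))^2 * R x := h2
        _ ≤ φ x^2 * R x := by
            apply mul_le_mul_of_nonneg_right _ (hRpos x).le
            apply pow_le_pow_left₀ (by positivity) h1
    have hIOn : IntegrableOn (fun s => φ s^2 * R s) (Ioi Z) volume := by
      refine (hint.integrableOn).congr_fun ?_ measurableSet_Ioi
      intro x hx
      have hx1 : (1:ℝ) ≤ x :=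
        le_trans (le_trans (le_max_right ζ₀ 1) (le_max_right Z' _)) (le_of_lt hx)
      simp only [hη0 x hx1, hRdef]
      ring
    have hone : IntegrableOn (fun _ : ℝ => (1:ℝ)) (Ioi Z) volume := by
      refine Integrable.mono' hIOn aestronglyMeasurable_const ?_
      rw [ae_restrict_iff' measurableSet_Ioi]
      refine ae_of_all _ (fun x hx => ?_)
      simpa using hge1 x hx
    rw [integrableOn_const_iff] at hone
    rcases hone with h | h
    · norm_num at h
    · rw [Real.volume_Ioi] at h
      exact absurd h (by simp)
  -- Step 3: Gaussian upper bound on φ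
  set F : ℝ → ℝ := fun s => Real.log (φ s) + Real.exp (2*s)/4 - (k+1)*s with hFdef
  have hF' : ∀ s, HasDerivAt F (deriv φ s / φ s + (Real.exp (2*s)/2 - (k+1))) s := by
    intro s
    have h1 : HasDerivAt (fun y => Real.log (φ y)) (deriv φ s / φ s) s :=
      (hφ' s).log (hφpos s).ne'
    have h2 := (hasDerivAt_exp2 s).div_const 4
    have h3 : HasDerivAt (fun y : ℝ => (k+1)*y) (k+1) s := by
      simpa using (hasDerivAt_id s).const_mul (k+1)
    have h4 := (h1.add h2).sub h3
    have heq : deriv φ s / φ s + 2 * Real.exp (2*s) / 4 - (k+1)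
        = deriv φ s / φ s + (Real.exp (2*s)/2 - (k+1)) := by ring
    rw [hFdef, ← heq]
    exact h4
  have hFanti : AntitoneOn F (Ici zstar) := by
    apply antitoneOn_of_deriv_nonpos (convex_Ici zstar)
    · exact fun x _ => ((hF' x).continuousAt).continuousWithinAt
    · exact fun x hx => ((hF' x).differentiableAt).differentiableWithinAt
    · intro x hx
      rw [interior_Ici] at hx
      rw [(hF' x).deriv]
      have h1 := hkey x (le_of_lt hx)
      have h2 : deriv φ x / φ x = -(r x) := by simp only [hrdef]; ring
      rw [h2]
      simp only [hadef] at h1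
      linarith
  set C1 : ℝ := Real.exp (F zstar) with hC1def
  have hC1pos : 0 < C1 := Real.exp_pos _
  have hφup : ∀ s, zstar ≤ s → φ s ≤ C1 * Real.exp (-(Real.exp (2*s)/4) + (k+1)*s) := by
    intro s hs
    have h1 : F s ≤ F zstar := hFanti self_mem_Ici hs hs
    simp only [hFdef] at h1
    have h2 : Real.log (φ s) ≤ F zstar + (-(Real.exp (2*s)/4) + (k+1)*s) := by
      simp only [hFdef]; linarith
    calc φ s = Real.exp (Real.log (φ s)) := (Real.exp_log (hφpos s)).symm
      _ ≤ Real.exp (F zstar + (-(Real.exp (2*s)/4) + (k+1)*s)) := Real.exp_le_exp.2 h2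
      _ = C1 * Real.exp (-(Real.exp (2*s)/4) + (k+1)*s) := by rw [Real.exp_add, hC1def]
  have hRφ : ∀ s, zstar ≤ s → R s * φ s ≤ C1 * Real.exp s := by
    intro s hs
    have h1 := mul_le_mul_of_nonneg_left (hφup s hs) (hRpos s).le
    have h2 : R s * (C1 * Real.exp (-(Real.exp (2*s)/4) + (k+1)*s)) = C1 * Real.exp s := by
      simp only [hRdef]
      rw [show Real.exp (Real.exp (2*s)/4 - k*s) * (C1 * Real.exp (-(Real.exp (2*s)/4) + (k+1)*s))
          = C1 * (Real.exp (Real.exp (2*s)/4 - k*s) * Real.exp (-(Real.exp (2*s)/4) + (k+1)*s)) by ring,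
        ← Real.exp_add]
      congr 1
      ring
    linarith
  have hφ1le : ∀ s, φ s * (1 - φ s ^ (p-1)) ≤ φ s := by
    intro s
    nlinarith [hpow_pos s, hφpos s]
  have hu'le : ∀ s, zstar ≤ s → u' s ≤ lam * C1 * Real.exp s := by
    intro s hs
    have h1 : R s * (φ s * (1 - φ s ^ (p-1))) ≤ R s * φ s :=
      mul_le_mul_of_nonneg_left (hφ1le s) (hRpos s).le
    have h2 := hRφ s hs
    simp only [hu'def]
    calc lam * (R s * (φ s * (1 - φ s ^ (p-1)))) ≤ lam * (R s * φ s) :=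
          mul_le_mul_of_nonneg_left h1 hlampos.le
      _ ≤ lam * (C1 * Real.exp s) := mul_le_mul_of_nonneg_left h2 hlampos.le
      _ = lam * C1 * Real.exp s := by ring
  set A : ℝ := u zstar + lam * C1 with hAdef
  have hApos : 0 < A := by
    have := hunn zstar
    have := mul_pos hlampos hC1pos
    simp only [hAdef]; linarith
  have huA : ∀ s, zstar ≤ s → u s ≤ A * Real.exp s := by
    intro s hs
    have hft : ∫ t in zstar..s, u' t = u s - u zstar :=
      intervalIntegral.integral_eq_sub_of_hasDerivAt (fun t _ => hu t)
        (hu'cont.intervalIntegrable _ _)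
    have hcomp : ∫ t in zstar..s, u' t ≤ ∫ t in zstar..s, lam * C1 * Real.exp t := by
      apply intervalIntegral.integral_mono_on hs (hu'cont.intervalIntegrable _ _)
        ((continuous_const.mul Real.continuous_exp).intervalIntegrable _ _)
      exact fun t ht => hu'le t ht.1
    have hval : ∫ t in zstar..s, lam * C1 * Real.exp t
        = lam * C1 * (Real.exp s - Real.exp zstar) := by
      rw [intervalIntegral.integral_const_mul, integral_exp]
    have hexp1 : (1:ℝ) ≤ Real.exp s := Real.one_le_exp (by linarith)
    have hexpz : 0 < Real.exp zstar := Real.exp_pos _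
    have huz := hunn zstar
    simp only [hAdef]
    nlinarith [mul_nonneg huz (by linarith : (0:ℝ) ≤ Real.exp s - 1),
      mul_nonneg (mul_pos hlampos hC1pos).le hexpz.le]
  -- second threshold
  set z2 : ℝ := max zstar (Real.log (4*k+4)) with hz2def
  have hz2 : zstar ≤ z2 := le_max_left _ _
  have he2 : ∀ s, z2 ≤ s → 4*k+4 ≤ Real.exp (2*s) := by
    intro s hs
    have h0 : (1:ℝ) ≤ s := le_trans hz1 (le_trans hz2 hs)
    have h1 : Real.exp (Real.log (4*k+4)) ≤ Real.exp s :=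
      Real.exp_le_exp.2 (le_trans (le_max_right zstar _) hs)
    rw [Real.exp_log (by linarith)] at h1
    have h3 : (1:ℝ) ≤ Real.exp s := Real.one_le_exp (by linarith)
    have h4 : Real.exp (2*s) = Real.exp s * Real.exp s := by
      rw [← Real.exp_add]; ring_nf
    nlinarith
  -- integral tail bound for e^s / R s
  have hexpneg : ∀ s : ℝ, HasDerivAt (fun y : ℝ => Real.exp (-y)) (-Real.exp (-s)) s := by
    intro s
    have := (Real.hasDerivAt_exp (-s)).comp s ((hasDerivAt_id s).neg)
    simpa [Function.comp_def] using this
  set D1 : ℝ → ℝ := fun s => -(Real.exp (-s) / R s) with hD1def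
  have hD1' : ∀ s, HasDerivAt D1 ((1 + α s) * (Real.exp (-s) / R s)) s := by
    intro s
    have h1 := ((hexpneg s).div (hR' s) (hRpos s).ne').neg
    have heq : -((-Real.exp (-s) * R s - Real.exp (-s) * (α s * R s)) / (R s)^2)
        = (1 + α s) * (Real.exp (-s) / R s) := by
      have hRne : R s ≠ 0 := (hRpos s).ne'
      have h9 : -Real.exp (-s) * R s - Real.exp (-s) * (α s * R s)
          = (-((1 + α s) * Real.exp (-s))) * R s := by ring
      rw [h9, pow_two, ← div_div, mul_div_cancel_right₀ _ hRne, neg_div, neg_neg, mul_div_assoc]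
    rw [hD1def, ← heq]
    exact h1
  have hcontR : Continuous R := by simp only [hRdef]; fun_prop
  have hcontinvR : Continuous (fun s => Real.exp (-s) / R s) := by
    apply Continuous.div (by fun_prop) hcontR (fun s => (hRpos s).ne')
  have hcontalpha : Continuous α := by simp only [hadef]; fun_prop
  have hcontesR : Continuous (fun s => Real.exp s / R s) := by
    apply Continuous.div Real.continuous_exp hcontR (fun s => (hRpos s).ne')
  have hEbound : ∀ ζ, z2 ≤ ζ → ∀ T, ζ ≤ T →
      (∫ s in ζ..T, Real.exp s / R s) ≤ 4 * (Real.exp (-ζ) / R ζ) := by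
    intro ζ hζ T hT
    have hft : ∫ s in ζ..T, (1 + α s) * (Real.exp (-s) / R s) = D1 T - D1 ζ :=
      intervalIntegral.integral_eq_sub_of_hasDerivAt (fun t _ => hD1' t)
        (((continuous_const.add hcontalpha).mul hcontinvR).intervalIntegrable _ _)
    have hptwise : ∀ s ∈ Icc ζ T, Real.exp s / R s ≤ 4 * ((1 + α s) * (Real.exp (-s) / R s)) := by
      intro s hs
      have h1 : 4*k+4 ≤ Real.exp (2*s) := he2 s (le_trans hζ hs.1)
      have h2 : Real.exp s = Real.exp (2*s) * Real.exp (-s) := by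
        rw [← Real.exp_add]; congr 1; ring
      have h3 : 0 < Real.exp (-s) / R s := div_pos (Real.exp_pos _) (hRpos s)
      have h4 : Real.exp s / R s = Real.exp (2*s) * (Real.exp (-s) / R s) := by
        rw [h2]; ring
      rw [h4]
      have h5 : Real.exp (2*s) ≤ 4 * (1 + α s) := by
        simp only [hadef]
        linarith
      nlinarith [mul_le_mul_of_nonneg_right h5 h3.le]
    have hcomp : ∫ s in ζ..T, Real.exp s / R s
        ≤ ∫ s in ζ..T, 4 * ((1 + α s) * (Real.exp (-s) / R s)) := by
      apply intervalIntegral.integral_mono_on hT (hcontesR.intervalIntegrable _ _)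
        ((continuous_const.mul ((continuous_const.add hcontalpha).mul hcontinvR)).intervalIntegrable _ _)
      exact hptwise
    have hval : ∫ s in ζ..T, 4 * ((1 + α s) * (Real.exp (-s) / R s)) = 4 * (D1 T - D1 ζ) := by
      rw [intervalIntegral.integral_const_mul, hft]
    have hD1T : D1 T ≤ 0 := by
      simp only [hD1def]
      have := div_pos (Real.exp_pos (-T)) (hRpos T)
      linarith
    have : 4 * (D1 T - D1 ζ) ≤ 4 * (Real.exp (-ζ) / R ζ) := by
      simp only [hD1def]
      simp only [hD1def] at hD1T
      linarith
    linarith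
  -- representation of φ as integral of u/R
  have hmφ' : ∀ s : ℝ, HasDerivAt (fun y => -φ y) (u s / R s) s := by
    intro s
    have h1 := (hφ' s).neg
    have heq : -deriv φ s = u s / R s := by
      simp only [hudef]
      rw [mul_div_cancel_right₀ _ (hRpos s).ne']
    rw [← heq]
    exact h1
  have hcontuR : Continuous (fun s => u s / R s) :=
    Continuous.div hucont hcontR (fun s => (hRpos s).ne')
  have hφrep : ∀ ζ T : ℝ, ζ ≤ T → φ ζ = φ T + ∫ s in ζ..T, u s / R s := by
    intro ζ T _
    have hft : ∫ s in ζ..T, u s / R s = -φ T - -φ ζ :=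
      intervalIntegral.integral_eq_sub_of_hasDerivAt (fun t _ => hmφ' t)
        (hcontuR.intervalIntegrable _ _)
    rw [hft]; ring
  -- refined upper bound for φ
  have hdivle : ∀ t, ∀ B : ℝ, u t ≤ B → u t / R t ≤ B * (Real.exp t / R t) → True := fun _ _ _ _ => trivial
  have hAexp : ∀ ζ, z2 ≤ ζ → φ ζ ≤ 4*A * (Real.exp (-ζ) / R ζ) := by
    intro ζ hζ
    have hbnd : ∀ T, ζ ≤ T → φ ζ ≤ φ T + 4*A * (Real.exp (-ζ) / R ζ) := by
      intro T hT
      have hrep := hφrep ζ T hT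
      have hmono1 : ∫ s in ζ..T, u s / R s ≤ ∫ s in ζ..T, A * (Real.exp s / R s) := by
        apply intervalIntegral.integral_mono_on hT (hcontuR.intervalIntegrable _ _)
          ((continuous_const.mul hcontesR).intervalIntegrable _ _)
        intro t ht
        have h1 : u t ≤ A * Real.exp t := huA t (le_trans (le_trans hz2 hζ) ht.1)
        have h2 : u t / R t ≤ (A * Real.exp t) / R t := by
          apply div_le_div_of_nonneg_right h1 (hRpos t).le
        calc u t / R t ≤ (A * Real.exp t) / R t := h2
          _ = A * (Real.exp t / R t) := by ring
      have hval : ∫ s in ζ..T, A * (Real.exp s / R s) = A * ∫ s in ζ..T, Real.exp s / R s := by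
        rw [intervalIntegral.integral_const_mul]
      have h3 : A * (∫ s in ζ..T, Real.exp s / R s) ≤ A * (4 * (Real.exp (-ζ) / R ζ)) :=
        mul_le_mul_of_nonneg_left (hEbound ζ hζ T hT) hApos.le
      have h4 : A * (4 * (Real.exp (-ζ) / R ζ)) = 4*A * (Real.exp (-ζ) / R ζ) := by ring
      linarith [hrep, hmono1, hval.symm ▸ h3]
    have htendT : Tendsto (fun T => φ T + 4*A * (Real.exp (-ζ) / R ζ)) atTop
        (𝓝 (0 + 4*A * (Real.exp (-ζ) / R ζ))) := hlim₀.add_const _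
    have := ge_of_tendsto htendT (eventually_atTop.2 ⟨ζ, hbnd⟩)
    linarith [this]
  have hu'2 : ∀ s, z2 ≤ s → u' s ≤ lam * (4*A) * Real.exp (-s) := by
    intro s hs
    have h1 : R s * φ s ≤ 4*A*Real.exp (-s) := by
      have h2 := mul_le_mul_of_nonneg_left (hAexp s hs) (hRpos s).le
      have h3 : R s * (4*A * (Real.exp (-s) / R s)) = 4*A*Real.exp (-s) := by
        field_simp
        exact div_self (hRpos s).ne'
      linarith [h2, h3.symm ▸ h2]
    have h5 : R s * (φ s * (1 - φ s ^ (p-1))) ≤ R s * φ s :=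
      mul_le_mul_of_nonneg_left (hφ1le s) (hRpos s).le
    simp only [hu'def]
    calc lam * (R s * (φ s * (1 - φ s ^ (p-1)))) ≤ lam * (R s * φ s) :=
          mul_le_mul_of_nonneg_left h5 hlampos.le
      _ ≤ lam * (4*A*Real.exp (-s)) := mul_le_mul_of_nonneg_left h1 hlampos.le
      _ = lam * (4*A) * Real.exp (-s) := by ring
  have hubdd : ∀ T, u T ≤ u z2 + lam*(4*A)*Real.exp (-z2) := by
    intro T
    have hpos4 : 0 < lam*(4*A)*Real.exp (-z2) :=
      mul_pos (mul_pos hlampos (by linarith)) (Real.exp_pos _)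
    rcases le_or_gt T z2 with h | h
    · have := hustrict.monotone h
      linarith
    · have hft : ∫ t in z2..T, u' t = u T - u z2 :=
        intervalIntegral.integral_eq_sub_of_hasDerivAt (fun t _ => hu t)
          (hu'cont.intervalIntegrable _ _)
      have hcomp : ∫ t in z2..T, u' t ≤ ∫ t in z2..T, lam*(4*A)*Real.exp (-t) := by
        apply intervalIntegral.integral_mono_on h.le (hu'cont.intervalIntegrable _ _)
          ((continuous_const.mul (by fun_prop : Continuous (fun t : ℝ => Real.exp (-t)))).intervalIntegrable _ _)
        exact fun t ht => hu'2 t ht.1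
      have hftexp : ∫ t in z2..T, Real.exp (-t) = Real.exp (-z2) - Real.exp (-T) := by
        have hd : ∀ t : ℝ, HasDerivAt (fun y : ℝ => -Real.exp (-y)) (Real.exp (-t)) t := by
          intro t
          have h := (hexpneg t).neg
          simp only [neg_neg] at h
          exact h
        have h := intervalIntegral.integral_eq_sub_of_hasDerivAt (a := z2) (b := T)
          (fun t _ => hd t)
          ((by fun_prop : Continuous (fun t : ℝ => Real.exp (-t))).intervalIntegrable _ _)
        rw [h]; ring
      have hval : ∫ t in z2..T, lam*(4*A)*Real.exp (-t)
          = lam*(4*A)*(Real.exp (-z2) - Real.exp (-T)) := by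
        rw [intervalIntegral.integral_const_mul, hftexp]
      have hexpT : 0 < Real.exp (-T) := Real.exp_pos _
      nlinarith [mul_pos (mul_pos hlampos (by linarith : (0:ℝ) < 4*A)) hexpT]
  have hbdda : BddAbove (range u) := by
    refine ⟨u z2 + lam*(4*A)*Real.exp (-z2), ?_⟩
    rintro x ⟨T, rfl⟩
    exact hubdd T
  set L : ℝ := ⨆ s, u s with hLdef
  have htendu : Tendsto u atTop (𝓝 L) := tendsto_atTop_ciSup hustrict.monotone hbdda
  have huleL : ∀ s, u s ≤ L := fun s => le_ciSup hbdda s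
  have hLpos : 0 < L := by
    have h1 : u z2 < u (z2+1) := hustrict (by linarith)
    have h2 := hunn z2
    have h3 := huleL (z2+1)
    linarith
  have hLnn : 0 ≤ L := le_trans (hunn 0) (huleL 0)
  -- the function D = e^{-2s}/R with derivative -(2+α)D
  have hexp2neg : ∀ s : ℝ, HasDerivAt (fun y : ℝ => Real.exp (-(2*y))) (-2*Real.exp (-(2*s))) s := by
    intro s
    have hin : HasDerivAt (fun y : ℝ => -(2*y)) (-2) s := by
      have h := ((hasDerivAt_id s).const_mul 2).neg
      simp only [mul_one] at h
      exact h
    have h := (Real.hasDerivAt_exp (-(2*s))).comp s hin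
    simpa [Function.comp_def, mul_comm] using h
  set D : ℝ → ℝ := fun s => Real.exp (-(2*s)) / R s with hDdef
  have hDpos : ∀ s, 0 < D s := fun s => div_pos (Real.exp_pos _) (hRpos s)
  have hD' : ∀ s, HasDerivAt (fun y => -D y) ((2 + α s) * D s) s := by
    intro s
    have h1 := ((hexp2neg s).div (hR' s) (hRpos s).ne').neg
    have hRne : R s ≠ 0 := (hRpos s).ne'
    have heq : -((-2*Real.exp (-(2*s)) * R s - Real.exp (-(2*s)) * (α s * R s)) / (R s)^2)
        = (2 + α s) * D s := by
      simp only [hDdef]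
      have h9 : -2*Real.exp (-(2*s)) * R s - Real.exp (-(2*s)) * (α s * R s)
          = (-((2 + α s) * Real.exp (-(2*s)))) * R s := by ring
      rw [h9, pow_two, ← div_div, mul_div_cancel_right₀ _ hRne, neg_div, neg_neg, mul_div_assoc]
    simp only [hDdef]
    simp only [hDdef] at heq
    rw [← heq]
    exact h1
  have hcontD : Continuous D := by
    apply Continuous.div (by fun_prop) hcontR (fun s => (hRpos s).ne')
  have hDval : ∀ ζ T : ℝ, ζ ≤ T → ∫ s in ζ..T, (2 + α s) * D s = D ζ - D T := by
    intro ζ T _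
    have h := intervalIntegral.integral_eq_sub_of_hasDerivAt (a := ζ) (b := T)
      (fun t _ => hD' t) (((continuous_const.add hcontalpha).mul hcontD).intervalIntegrable _ _)
    rw [h]; ring
  have hDto0 : Tendsto D atTop (𝓝 0) := by
    have hfun : D = fun s => Real.exp (-(Real.exp (2*s)/4 - (k-2)*s)) := by
      funext s
      simp only [hDdef, hRdef]
      rw [← Real.exp_sub]
      congr 1
      ring
    rw [hfun]
    exact Real.tendsto_exp_atBot.comp (tendsto_neg_atTop_atBot.comp (tendsto_quarter (k-2)))
  have hcontinv : Continuous (fun s => 1 / R s) :=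
    Continuous.div continuous_const hcontR (fun s => (hRpos s).ne')
  have hDeq : ∀ s, (2 + α s) * D s = (1/2 + (2-k)*Real.exp (-(2*s))) * (1 / R s) := by
    intro s
    have h1 : Real.exp (2*s) * Real.exp (-(2*s)) = 1 := by
      rw [← Real.exp_add]; simp
    simp only [hDdef, hadef]
    rw [div_eq_mul_one_div (Real.exp (-(2*s))) (R s), ← mul_assoc]
    congr 1
    linear_combination h1 / 2
  have hgRD : ∀ ζ, D ζ * (R ζ * Real.exp (2*ζ)) = 1 := by
    intro ζ
    have h1 : Real.exp (-(2*ζ)) * Real.exp (2*ζ) = 1 := by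
      rw [← Real.exp_add]; simp
    calc D ζ * (R ζ * Real.exp (2*ζ))
        = (Real.exp (-(2*ζ)) * Real.exp (2*ζ)) * (R ζ / R ζ) := by simp only [hDdef]; ring
      _ = 1 := by rw [div_self (hRpos ζ).ne', h1, mul_one]
  -- epsilon-window bounds
  have heps : ∀ ε : ℝ, 0 < ε → ∃ z3, z2 ≤ z3 ∧ ∀ s, z3 ≤ s →
      (1/2 - ε) * (1/R s) ≤ (2 + α s) * D s ∧ (2 + α s) * D s ≤ (1/2 + ε) * (1/R s) := by
    intro ε hε
    set c : ℝ := (|2-k|+1)/ε with hcdef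
    have hc : 0 < c := by positivity
    refine ⟨max z2 (Real.log c), le_max_left _ _, ?_⟩
    intro s hs
    have hs0 : (1:ℝ) ≤ s := le_trans (le_trans hz1 hz2) (le_trans (le_max_left _ _) hs)
    have h1 : Real.exp (-s) ≤ ε/(|2-k|+1) := by
      have h2 : Real.log c ≤ s := le_trans (le_max_right _ _) hs
      have h3 : Real.exp (-s) ≤ Real.exp (-(Real.log c)) := Real.exp_le_exp.2 (by linarith)
      rw [show Real.exp (-(Real.log c)) = c⁻¹ by rw [Real.exp_neg, Real.exp_log hc]] at h3
      calc Real.exp (-s) ≤ c⁻¹ := h3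
        _ = ε/(|2-k|+1) := by rw [hcdef, inv_div]
    have h4 : Real.exp (-(2*s)) ≤ Real.exp (-s) := Real.exp_le_exp.2 (by linarith)
    have h5 : |(2-k)*Real.exp (-(2*s))| ≤ ε := by
      rw [abs_mul, abs_of_pos (Real.exp_pos _)]
      have h6 : |2-k| * Real.exp (-(2*s)) ≤ |2-k| * (ε/(|2-k|+1)) :=
        mul_le_mul_of_nonneg_left (le_trans h4 h1) (abs_nonneg _)
      have h9 : (0:ℝ) < |2-k|+1 := by positivity
      have h10 : (|2-k|+1) * (ε/(|2-k|+1)) = ε := by field_simp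
      have h7 : |2-k| * (ε/(|2-k|+1)) ≤ ε := by
        have h11 : |2-k| * (ε/(|2-k|+1)) ≤ (|2-k|+1) * (ε/(|2-k|+1)) :=
          mul_le_mul_of_nonneg_right (by linarith) (by positivity)
        linarith [h10 ▸ h11]
      linarith
    have h12 := abs_le.1 h5
    have h13 : (0:ℝ) ≤ 1/R s := by positivity
    constructor
    · rw [hDeq s]
      apply mul_le_mul_of_nonneg_right _ h13
      linarith [h12.1]
    · rw [hDeq s]
      apply mul_le_mul_of_nonneg_right _ h13
      linarith [h12.2]
  set g : ℝ → ℝ := fun ζ => φ ζ * R ζ * Real.exp (2*ζ) with hgdef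
  have hmain : ∀ ε : ℝ, 0 < ε → ε ≤ 1/8 → ∃ z3, ∀ ζ, z3 ≤ ζ →
      u ζ / (1/2 + ε) ≤ g ζ ∧ g ζ ≤ L / (1/2 - ε) := by
    intro ε hε hε8
    obtain ⟨z3, hz3z2, hz3⟩ := heps ε hε
    refine ⟨z3, fun ζ hζ => ?_⟩
    have h2e : (0:ℝ) < 1/2 + ε := by linarith
    have h2e' : (0:ℝ) < 1/2 - ε := by linarith
    have hDiff : ∀ T, ζ ≤ T →
        (1/2 - ε) * ∫ s in ζ..T, 1/R s ≤ D ζ - D T ∧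
        D ζ - D T ≤ (1/2 + ε) * ∫ s in ζ..T, 1/R s := by
      intro T hT
      have hint2 : IntervalIntegrable (fun s => (2 + α s) * D s) volume ζ T :=
        ((continuous_const.add hcontalpha).mul hcontD).intervalIntegrable _ _
      have hlow := intervalIntegral.integral_mono_on hT
        ((continuous_const.mul hcontinv).intervalIntegrable _ _) hint2
        (fun s hs => (hz3 s (le_trans hζ hs.1)).1)
      have hup := intervalIntegral.integral_mono_on hT hint2
        ((continuous_const.mul hcontinv).intervalIntegrable _ _)
        (fun s hs => (hz3 s (le_trans hζ hs.1)).2)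
      rw [hDval ζ T hT] at hlow hup
      simp only [Pi.mul_apply, intervalIntegral.integral_const_mul] at hlow hup
      exact ⟨hlow, hup⟩
    constructor
    · -- lower bound on g
      have hφlow2 : ∀ T, ζ ≤ T → u ζ * ((D ζ - D T)/(1/2 + ε)) ≤ φ ζ := by
        intro T hT
        have h1 : ∫ s in ζ..T, u ζ * (1/R s) ≤ ∫ s in ζ..T, u s / R s := by
          apply intervalIntegral.integral_mono_on hT
            ((continuous_const.mul hcontinv).intervalIntegrable _ _)
            (hcontuR.intervalIntegrable _ _)
          intro t ht
          have h2 : u ζ ≤ u t := hustrict.monotone ht.1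
          calc u ζ * (1/R t) = u ζ / R t := by ring
            _ ≤ u t / R t := div_le_div_of_nonneg_right h2 (hRpos t).le
        have h3 : ∫ s in ζ..T, u ζ * (1/R s) = u ζ * ∫ s in ζ..T, 1/R s :=
          intervalIntegral.integral_const_mul _ _
        have h4 := (hDiff T hT).2
        have h5 : (D ζ - D T)/(1/2+ε) ≤ ∫ s in ζ..T, 1/R s := by
          rw [div_le_iff₀ h2e]
          linarith
        have h6 : u ζ * ((D ζ - D T)/(1/2+ε)) ≤ u ζ * ∫ s in ζ..T, 1/R s :=
          mul_le_mul_of_nonneg_left h5 (hunn ζ)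
        rw [← h3] at h6
        have hrepT := hφrep ζ T hT
        have hφT := (hφpos T).le
        linarith
      have htd : Tendsto (fun T => u ζ * ((D ζ - D T)/(1/2 + ε))) atTop
          (𝓝 (u ζ * ((D ζ - 0)/(1/2 + ε)))) :=
        Tendsto.const_mul _ (Tendsto.div_const (tendsto_const_nhds.sub hDto0) _)
      have h7 : u ζ * ((D ζ - 0)/(1/2 + ε)) ≤ φ ζ :=
        le_of_tendsto htd (eventually_atTop.2 ⟨ζ, hφlow2⟩)
      rw [sub_zero] at h7
      have h8 := mul_le_mul_of_nonneg_right h7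
        (by positivity : (0:ℝ) ≤ R ζ * Real.exp (2*ζ))
      have h9 : u ζ * (D ζ/(1/2 + ε)) * (R ζ * Real.exp (2*ζ)) = u ζ/(1/2+ε) := by
        rw [show u ζ * (D ζ/(1/2 + ε)) * (R ζ * Real.exp (2*ζ))
            = (u ζ/(1/2+ε)) * (D ζ * (R ζ * Real.exp (2*ζ))) by ring, hgRD ζ, mul_one]
      simp only [hgdef]
      calc u ζ/(1/2+ε) = u ζ * (D ζ/(1/2 + ε)) * (R ζ * Real.exp (2*ζ)) := h9.symm
        _ ≤ φ ζ * (R ζ * Real.exp (2*ζ)) := h8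
        _ = φ ζ * R ζ * Real.exp (2*ζ) := by ring
    · -- upper bound on g
      have hφup2 : ∀ T, ζ ≤ T → φ ζ ≤ φ T + L * (D ζ/(1/2-ε)) := by
        intro T hT
        have h1 : ∫ s in ζ..T, u s / R s ≤ ∫ s in ζ..T, L * (1/R s) := by
          apply intervalIntegral.integral_mono_on hT
            (hcontuR.intervalIntegrable _ _)
            ((continuous_const.mul hcontinv).intervalIntegrable _ _)
          intro t ht
          calc u t / R t ≤ L / R t := div_le_div_of_nonneg_right (huleL t) (hRpos t).le
            _ = L * (1/R t) := by ring
        have h3 : ∫ s in ζ..T, L * (1/R s) = L * ∫ s in ζ..T, 1/R s :=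
          intervalIntegral.integral_const_mul _ _
        have h4 := (hDiff T hT).1
        have h5 : ∫ s in ζ..T, 1/R s ≤ D ζ/(1/2-ε) := by
          rw [le_div_iff₀ h2e']
          have hDT := hDpos T
          nlinarith
        have h6 : L * ∫ s in ζ..T, 1/R s ≤ L * (D ζ/(1/2-ε)) :=
          mul_le_mul_of_nonneg_left h5 hLnn
        have hrepT := hφrep ζ T hT
        rw [← h3] at h6
        linarith
      have htd : Tendsto (fun T => φ T + L * (D ζ/(1/2-ε))) atTop
          (𝓝 (0 + L * (D ζ/(1/2-ε)))) := hlim₀.add_const _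
      have h7 : φ ζ ≤ 0 + L * (D ζ/(1/2-ε)) :=
        ge_of_tendsto htd (eventually_atTop.2 ⟨ζ, hφup2⟩)
      rw [zero_add] at h7
      have h8 := mul_le_mul_of_nonneg_right h7
        (by positivity : (0:ℝ) ≤ R ζ * Real.exp (2*ζ))
      have h9 : L * (D ζ/(1/2 - ε)) * (R ζ * Real.exp (2*ζ)) = L/(1/2-ε) := by
        rw [show L * (D ζ/(1/2 - ε)) * (R ζ * Real.exp (2*ζ))
            = (L/(1/2-ε)) * (D ζ * (R ζ * Real.exp (2*ζ))) by ring, hgRD ζ, mul_one]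
      simp only [hgdef]
      calc φ ζ * R ζ * Real.exp (2*ζ) = φ ζ * (R ζ * Real.exp (2*ζ)) := by ring
        _ ≤ L * (D ζ/(1/2 - ε)) * (R ζ * Real.exp (2*ζ)) := h8
        _ = L/(1/2-ε) := h9
  -- identify the target function with g
  have hfuneq : (fun ζ => φ ζ * Real.exp (Real.exp (2 * ζ) / 4 - ((5 - p) / (p - 1)) * ζ)) = g := by
    funext ζ
    simp only [hgdef, hRdef]
    rw [mul_assoc, ← Real.exp_add]
    congr 2
    have h5p : (5 - p)/(p - 1) = k - 2 := by
      rw [hkdef]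
      field_simp
      ring
    rw [h5p]
    ring
  refine ⟨2*L, by linarith, ?_⟩
  rw [hfuneq, Metric.tendsto_atTop]
  intro δ hδ
  set ε : ℝ := min (1/8) (δ/(100*(L+1))) with hεdef
  have hε : 0 < ε := lt_min (by norm_num) (by positivity)
  have hε8 : ε ≤ 1/8 := min_le_left _ _
  have hεδ : ε ≤ δ/(100*(L+1)) := min_le_right _ _
  have hεδ' : ε * (100*(L+1)) ≤ δ := by
    rw [← le_div_iff₀ (by positivity : (0:ℝ) < 100*(L+1))]
    exact hεδ
  obtain ⟨z3, hz3⟩ := hmain ε hε hε8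
  obtain ⟨N1, hN1⟩ := Metric.tendsto_atTop.1 htendu (δ/4) (by linarith)
  refine ⟨max z3 N1, fun ζ hζ => ?_⟩
  have h1 := hz3 ζ (le_trans (le_max_left _ _) hζ)
  have h2 := hN1 ζ (le_trans (le_max_right _ _) hζ)
  rw [Real.dist_eq] at h2 ⊢
  have h2' : L - δ/4 ≤ u ζ := by
    have := (abs_lt.1 h2).1
    linarith
  have hub : g ζ ≤ L/(1/2 - ε) := h1.2
  have hlb : u ζ/(1/2+ε) ≤ g ζ := h1.1
  have h2e : (0:ℝ) < 1/2 + ε := by linarith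
  have h2e' : (0:ℝ) < 1/2 - ε := by linarith
  rw [abs_lt]
  constructor
  · -- 2L - δ < g ζ
    have h3 : (L - δ/4)/(1/2 + ε) ≤ g ζ :=
      le_trans (div_le_div_of_nonneg_right h2' h2e.le) hlb
    have h4 : (2*L - δ) * (1/2 + ε) < L - δ/4 := by
      nlinarith [mul_nonneg hε.le hδ.le, hLpos, hδ, hεδ']
    have h5 : 2*L - δ < (L - δ/4)/(1/2 + ε) := by
      rw [lt_div_iff₀ h2e]
      exact h4
    linarith
  · -- g ζ < 2L + δ
    have h5 : L < (2*L + δ) * (1/2 - ε) := by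
      nlinarith [hεδ', mul_le_mul_of_nonneg_left hε8 hδ.le, hδ, hLpos]
    have h6 : L/(1/2-ε) < 2*L + δ := by
      rw [div_lt_iff₀ h2e']
      exact h5
    linarith
end

section
/- Let p > 1 and let φ : ℝ → ℝ be a twice continuously differentiable, strictly decreasing function with 0 < φ < 1, satisfying φ''(ζ) + (e^{2ζ}/2 − (p+3)/(p−1)) φ'(ζ) + (2(p+1)/(p−1)²) φ(ζ)(1 − φ(ζ)^{p−1}) = 0 on ℝ, with φ → 1, φ' → 0 as ζ → −∞ and φ → 0, φ' → 0 as ζ → +∞, and such that ∫_ℝ (φ−η)² dμ < ∞ and ∫_ℝ (φ'−η')² dμ < ∞ for some η ∈ C^∞(ℝ) with η = 1 on (−∞,0] and η = 0 on [1,∞), where dμ = ρ(ζ)dζ with ρ(ζ) = exp(e^{2ζ}/4 − ((p+3)/(p−1))ζ). Then there exists a constant c' ∈ (0,∞) such that (1 − φ(ζ)) · exp(−2(p+1)ζ/(p−1)) → c' as ζ → −∞. -/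
open Real Set Filter MeasureTheory intervalIntegral

lemma aux_intexp {c : ℝ} (hc : 0 < c) (y a : ℝ) :
    ∫ x in y..a, Real.exp (c*x) = (Real.exp (c*a) - Real.exp (c*y))/c := by
  rw [integral_comp_mul_left (fun x => Real.exp x) hc.ne', integral_exp]
  rw [smul_eq_mul]; field_simp

lemma aux_integrableOn_expIic {c : ℝ} (hc : 0 < c) (a : ℝ) :
    IntegrableOn (fun s => Real.exp (c*s)) (Iic a) := by
  refine integrableOn_Iic_of_intervalIntegral_norm_bounded (Real.exp (c*a)/c) a
    (fun y => (Real.continuous_exp.comp (continuous_const.mul continuous_id)).integrableOn_Ioc)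
    tendsto_id (Eventually.of_forall fun y => ?_)
  simp_rw [norm_of_nonneg (Real.exp_pos _).le, aux_intexp hc]
  simp only [id_eq]
  have := (Real.exp_pos (c*y)).le
  rw [div_le_div_iff_of_pos_right hc] ; linarith

lemma aux_integral_expIic {c : ℝ} (hc : 0 < c) (a : ℝ) :
    ∫ s in Iic a, Real.exp (c*s) = Real.exp (c*a)/c := by
  refine tendsto_nhds_unique
    (intervalIntegral_tendsto_integral_Iic _ (aux_integrableOn_expIic hc a) tendsto_id) ?_
  simp_rw [aux_intexp hc]
  have : Tendsto (fun y : ℝ => Real.exp (c*y)) atBot (nhds 0) :=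
    Real.tendsto_exp_atBot.comp (tendsto_id.const_mul_atBot hc)
  have h2 := ((tendsto_const_nhds (x := Real.exp (c*a))).sub this).div_const c
  simpa using h2

lemma aux_mono {F F' : ℝ → ℝ} (hF : ∀ x, HasDerivAt F (F' x) x) (hc : Continuous F')
    {a b : ℝ} (hab : a ≤ b) (h0 : ∀ x, x ≤ b → 0 ≤ F' x) : F a ≤ F b := by
  have h1 : ∫ y in a..b, F' y = F b - F a :=
    integral_eq_sub_of_hasDerivAt (fun x _ => hF x) (hc.intervalIntegrable a b)
  have h2 : 0 ≤ ∫ y in a..b, F' y :=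
    intervalIntegral.integral_nonneg hab (fun x hx => h0 x hx.2)
  linarith

lemma aux_anti {F F' : ℝ → ℝ} (hF : ∀ x, HasDerivAt F (F' x) x) (hc : Continuous F')
    {a b : ℝ} (hab : a ≤ b) (h0 : ∀ x, x ≤ b → F' x ≤ 0) : F b ≤ F a := by
  have := aux_mono (F := fun x => -F x) (F' := fun x => -F' x)
    (fun x => (hF x).neg) hc.neg hab (fun x hx => by simpa using h0 x hx)
  have h2 : -F a ≤ -F b := this
  linarith

lemma aux_lim {F : ℝ → ℝ} {ζ₀ B : ℝ}
    (hanti : ∀ a ≤ ζ₀, ∀ b ≤ ζ₀, a ≤ b → F b ≤ F a)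
    (hbd : ∀ ζ ≤ ζ₀, F ζ ≤ B) :
    ∃ L, L ≤ B ∧ Tendsto F atBot (nhds L) ∧ ∀ ζ ≤ ζ₀, F ζ ≤ L := by
  set G : ℝ → ℝ := fun ζ => F (min ζ ζ₀) with hG
  have hGanti : Antitone G := by
    intro x y hxy
    exact hanti _ (min_le_right _ _) _ (min_le_right _ _) (min_le_min_right _ hxy)
  have hGbd : BddAbove (range G) := ⟨B, by rintro z ⟨x, rfl⟩; exact hbd _ (min_le_right _ _)⟩
  have hT := tendsto_atBot_ciSup hGanti hGbd
  refine ⟨⨆ i, G i, ?_, ?_, ?_⟩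
  · exact ciSup_le fun x => hbd _ (min_le_right _ _)
  · refine hT.congr' ?_
    filter_upwards [eventually_le_atBot ζ₀] with ζ hζ
    simp [hG, min_eq_left hζ]
  · intro ζ hζ
    have : F ζ = G ζ := by simp [hG, min_eq_left hζ]
    rw [this]; exact le_ciSup hGbd ζ

lemma aux_rpow_lb {p s : ℝ} (hp : 1 < p) (hs : 1/2 ≤ s) (hs1 : s ≤ 1) :
    1 - s^(p-1) ≤ 2*(p-1)*(1-s) := by
  have hs0 : (0:ℝ) < s := by linarith
  have h1 : s^(p-1) = Real.exp (Real.log s * (p-1)) := Real.rpow_def_of_pos hs0 _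
  have h2 : Real.log s * (p-1) + 1 ≤ Real.exp (Real.log s * (p-1)) := Real.add_one_le_exp _
  have h3 : Real.log s⁻¹ ≤ s⁻¹ - 1 := Real.log_le_sub_one_of_pos (by positivity)
  rw [Real.log_inv] at h3
  have h4 : s⁻¹ - 1 ≤ 2*(1-s) := by
    rw [inv_eq_one_div, div_sub' hs0.ne']
    rw [div_le_iff₀ hs0]; nlinarith
  have h5 : -Real.log s ≤ 2*(1-s) := by linarith
  have h6 : 1 - s^(p-1) ≤ -(Real.log s) * (p-1) := by rw [h1]; nlinarith
  calc 1 - s^(p-1) ≤ -(Real.log s) * (p-1) := h6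
    _ ≤ (2*(1-s)) * (p-1) := by nlinarith
    _ = 2*(p-1)*(1-s) := by ring

lemma aux_nonlin {p t : ℝ} (hp : 1 < p) (h1 : 1/2 ≤ t) (h2 : t ≤ 1) :
    |t*(1 - t^(p-1)) - (p-1)*(1-t)| ≤ 2*p*(p-1)*(1-t)^2 := by
  have ht0 : (0:ℝ) < t := by linarith
  set h : ℝ → ℝ := fun s => s - s^p - (p-1)*(1-s) with hh
  have hder : ∀ s ∈ Icc t 1, HasDerivWithinAt h (p*(1 - s^(p-1))) (Icc t 1) s := by
    intro s hs
    have hd : HasDerivAt (fun s : ℝ => s ^ p) (p * s^(p-1)) s :=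
      Real.hasDerivAt_rpow_const (Or.inr hp.le)
    have : HasDerivAt h (1 - p*s^(p-1) - (p-1)*(-1)) s :=
      (((hasDerivAt_id s).sub hd).sub (((hasDerivAt_id s).const_sub 1).const_mul (p-1)))
    have he : 1 - p*s^(p-1) - (p-1)*(-1) = p*(1 - s^(p-1)) := by ring
    rw [he] at this
    exact this.hasDerivWithinAt
  have hbound : ∀ s ∈ Ico t 1, ‖p*(1 - s^(p-1))‖ ≤ 2*p*(p-1)*(1-t) := by
    intro s hs
    have hs0 : (0:ℝ) < s := lt_of_lt_of_le (by linarith) hs.1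
    have hge : 0 ≤ 1 - s^(p-1) := by
      have : s^(p-1) ≤ 1 := Real.rpow_le_one hs0.le hs.2.le (by linarith)
      linarith
    have hle : 1 - s^(p-1) ≤ 2*(p-1)*(1-s) := aux_rpow_lb hp (le_trans h1 hs.1) hs.2.le
    rw [norm_of_nonneg (by positivity)]
    have h1s : 1 - s ≤ 1 - t := by have := hs.1; linarith
    nlinarith [mul_le_mul_of_nonneg_left hle (by linarith : (0:ℝ) ≤ p),
      mul_le_mul_of_nonneg_left h1s (by nlinarith : (0:ℝ) ≤ 2*p*(p-1))]
  have hkey := norm_image_sub_le_of_norm_deriv_le_segment' hder hbound 1 ⟨h2, le_refl 1⟩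
  have hh1 : h 1 = 0 := by simp [hh, Real.one_rpow]
  have hht : h t = t*(1 - t^(p-1)) - (p-1)*(1-t) := by
    have : t^p = t^(p-1) * t := by
      rw [← Real.rpow_add_one ht0.ne' (p-1)]; ring_nf
    simp only [hh]; rw [this]; ring
  rw [hh1, hht, zero_sub, norm_neg, Real.norm_eq_abs] at hkey
  calc |t*(1 - t^(p-1)) - (p-1)*(1-t)| ≤ 2*p*(p-1)*(1-t) * (1-t) := hkey
    _ = 2*p*(p-1)*(1-t)^2 := by ring

lemma aux_expd (c ζ : ℝ) : HasDerivAt (fun x => Real.exp (c*x)) (c * Real.exp (c*ζ)) ζ := by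
  have h := ((hasDerivAt_id ζ).const_mul c).exp
  simp only [id_eq, mul_one] at h
  exact h.congr_deriv (mul_comm _ _)

lemma aux_exp_tendsto {c : ℝ} (hc : 0 < c) : Tendsto (fun ζ => Real.exp (c*ζ)) atBot (nhds 0) :=
  Real.tendsto_exp_atBot.comp (tendsto_id.const_mul_atBot hc)

lemma aux_repr {F G : ℝ → ℝ} (hFG : ∀ x, HasDerivAt F (G x) x) (hGc : Continuous G) {a : ℝ}
    (hInt : IntegrableOn G (Iic a)) (hF0 : Tendsto F atBot (nhds 0)) :
    F a = ∫ s in Iic a, G s := by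
  have h1 : ∀ ζ : ℝ, ∫ s in ζ..a, G s = F a - F ζ := fun ζ =>
    integral_eq_sub_of_hasDerivAt (fun x _ => hFG x) (hGc.intervalIntegrable _ _)
  have h2 := intervalIntegral_tendsto_integral_Iic a hInt tendsto_id
  have h3 : Tendsto (fun ζ => F a - F ζ) atBot (nhds (F a)) := by
    simpa using (tendsto_const_nhds (x := F a)).sub hF0
  have h4 : Tendsto (fun ζ => F a - F ζ) atBot (nhds (∫ s in Iic a, G s)) := by
    refine h2.congr fun ζ => ?_
    simp only [id_eq]; exact h1 ζ
  exact tendsto_nhds_unique h3 h4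

lemma aux_deriv_nonpos {f : ℝ → ℝ} (hf : StrictAnti f) {x : ℝ} (hd : DifferentiableAt ℝ f x) :
    deriv f x ≤ 0 := by
  have h := hd.hasDerivAt
  rw [hasDerivAt_iff_tendsto_slope] at h
  have hsub : Ioi x ⊆ {x}ᶜ := fun y hy => ne_of_gt hy
  have h2 := h.mono_left (nhdsWithin_mono x hsub)
  refine le_of_tendsto h2 ?_
  filter_upwards [self_mem_nhdsWithin] with y hy
  have hy' : x < y := hy
  have : f y < f x := hf hy'
  have hpos : 0 < y - x := by linarith
  rw [slope_def_field]
  rw [div_nonpos_iff]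
  right; constructor <;> [linarith; linarith]

set_option maxHeartbeats 2000000 in
/-- precise decay of the self-similar profile at `−∞`:
`1 − φ(ζ) ~ c' · exp(2(p+1)ζ/(p−1))` as `ζ → −∞`, i.e.
`(1 − φ(ζ)) exp(−2(p+1)ζ/(p−1)) → c' ∈ (0,∞)`. -/
theorem stmt_15 (p : ℝ) (hp : 1 < p)
    (φ : ℝ → ℝ) (hφreg : ContDiff ℝ 2 φ) (hdec : StrictAnti φ)
    (hrange : ∀ ζ : ℝ, 0 < φ ζ ∧ φ ζ < 1)
    (hode : ∀ ζ : ℝ, deriv (deriv φ) ζ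
        + (Real.exp (2 * ζ) / 2 - (p + 3) / (p - 1)) * deriv φ ζ
        + (2 * (p + 1) / (p - 1) ^ 2) * φ ζ * (1 - (φ ζ) ^ (p - 1)) = 0)
    (hlim₁ : Tendsto φ atBot (nhds 1)) (hlim₁' : Tendsto (deriv φ) atBot (nhds 0))
    (hlim₀ : Tendsto φ atTop (nhds 0)) (hlim₀' : Tendsto (deriv φ) atTop (nhds 0))
    (η : ℝ → ℝ) (hη : ContDiff ℝ (⊤ : ℕ∞) η)
    (hη1 : ∀ ζ ≤ 0, η ζ = 1) (hη0 : ∀ ζ ≥ 1, η ζ = 0)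
    (hint : Integrable (fun ζ =>
        (φ ζ - η ζ) ^ 2 * Real.exp (Real.exp (2 * ζ) / 4 - ((p + 3) / (p - 1)) * ζ)))
    (hint' : Integrable (fun ζ =>
        (deriv φ ζ - deriv η ζ) ^ 2 *
          Real.exp (Real.exp (2 * ζ) / 4 - ((p + 3) / (p - 1)) * ζ))) :
    ∃ c' : ℝ, 0 < c' ∧
      Tendsto (fun ζ => (1 - φ ζ) * Real.exp (-2 * (p + 1) * ζ / (p - 1)))
        atBot (nhds c') := by
  have hp1 : (0:ℝ) < p - 1 := by linarith
  -- basic differentiability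
  have h2 : ContDiff ℝ (1+1 : ℕ) φ := by exact_mod_cast hφreg
  rw [show ((1+1:ℕ):WithTop ℕ∞) = (1:WithTop ℕ∞) + 1 by norm_cast] at h2
  have hφ'1 : ContDiff ℝ 1 (deriv φ) := (contDiff_succ_iff_deriv.mp h2).2.2
  have hφd : Differentiable ℝ φ := (contDiff_succ_iff_deriv.mp h2).1
  have hφ'd : Differentiable ℝ (deriv φ) := (contDiff_one_iff_deriv.mp hφ'1).1
  have hφ''c : Continuous (deriv (deriv φ)) := (contDiff_one_iff_deriv.mp hφ'1).2
  have hφc : Continuous φ := hφd.continuous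
  have hφ'c : Continuous (deriv φ) := hφ'd.continuous
  -- constants
  obtain ⟨lam, hlam_def⟩ : ∃ x : ℝ, x = 2*(p+1)/(p-1) := ⟨_, rfl⟩
  obtain ⟨b0, hb0_def⟩ : ∃ x : ℝ, x = 2*(p+1)/(p-1)^2 := ⟨_, rfl⟩
  obtain ⟨K, hK_def⟩ : ∃ x : ℝ, x = b0*(2*p*(p-1)) := ⟨_, rfl⟩
  have hlam2 : 2 < lam := by
    rw [hlam_def, lt_div_iff₀ hp1]; nlinarith
  have hb0pos : 0 < b0 := by rw [hb0_def]; positivity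
  have hKpos : 0 < K := by rw [hK_def]; positivity
  have hlamb0 : lam = b0*(p-1) := by rw [hlam_def, hb0_def]; field_simp
  obtain ⟨δ, hδ_def⟩ : ∃ x : ℝ, x = min 1 ((lam-2)/2) := ⟨_, rfl⟩
  have hδpos : 0 < δ := by
    rw [hδ_def]; apply lt_min one_pos; linarith
  have hδ1 : δ ≤ 1 := by rw [hδ_def]; exact min_le_left _ _
  have hδ2 : δ ≤ (lam-2)/2 := by rw [hδ_def]; exact min_le_right _ _
  -- the functions
  obtain ⟨u, hu_def⟩ : ∃ x : ℝ → ℝ, x = fun ζ => 1 - φ ζ := ⟨_, rfl⟩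
  obtain ⟨v, hv_def⟩ : ∃ x : ℝ → ℝ, x = fun ζ => -deriv φ ζ := ⟨_, rfl⟩
  have hu_pos : ∀ ζ, 0 < u ζ := fun ζ => by
    rw [hu_def]; simp only; linarith [(hrange ζ).2]
  have hu_lt : ∀ ζ, u ζ < 1 := fun ζ => by
    rw [hu_def]; simp only; linarith [(hrange ζ).1]
  have hu_mono : ∀ a b : ℝ, a ≤ b → u a ≤ u b := by
    intro a b hab
    simp only [hu_def]
    have := hdec.antitone hab
    linarith
  have hv_nonneg : ∀ ζ, 0 ≤ v ζ := fun ζ => by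
    simp only [hv_def]
    have := aux_deriv_nonpos hdec (hφd ζ)
    linarith
  have hud : ∀ ζ, HasDerivAt u (v ζ) ζ := fun ζ => by
    simp only [hu_def, hv_def]
    exact ((hφd ζ).hasDerivAt).const_sub 1
  have hvd : ∀ ζ, HasDerivAt v (-(deriv (deriv φ) ζ)) ζ := fun ζ => by
    simp only [hv_def]
    exact ((hφ'd ζ).hasDerivAt).neg
  have huc : Continuous u := by rw [hu_def]; fun_prop
  have hvc : Continuous v := by rw [hv_def]; fun_prop
  -- limits at -∞
  have hu0 : Tendsto u atBot (nhds 0) := by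
    rw [hu_def]
    have := (tendsto_const_nhds (x := (1:ℝ))).sub hlim₁
    simpa using this
  have hv0 : Tendsto v atBot (nhds 0) := by
    rw [hv_def]; simpa using hlim₁'.neg
  -- the nonlinearity g
  obtain ⟨g, hg_def⟩ : ∃ x : ℝ → ℝ, x = fun s => -(Real.exp (2*s)/2) * v s +
      (b0 * (φ s * (1 - φ s^(p-1))) - lam * u s) := ⟨_, rfl⟩
  have hgc : Continuous g := by
    rw [hg_def]
    apply Continuous.add
    · fun_prop
    · apply Continuous.sub
      · apply continuous_const.mul
        apply hφc.mul
        apply continuous_const.sub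
        exact hφc.rpow_const (fun ζ => Or.inl (ne_of_gt (hrange ζ).1))
      · fun_prop
  -- the core algebraic identity
  have hcore : ∀ ζ, -(deriv (deriv φ) ζ) + (1 - lam) * v ζ - lam * u ζ = g ζ := by
    intro ζ
    have hode' := hode ζ
    have hm : (p+3)/(p-1) = lam - 1 := by
      rw [hlam_def]; field_simp; ring
    rw [hm] at hode'
    simp only [hg_def, hv_def, hu_def, hb0_def]
    nlinarith [hode']
  -- choice of ζ₀
  obtain ⟨Z0, hZ0⟩ : ∃ Z, ∀ ζ ≤ Z, u ζ ≤ 1/2 ∧ K * u ζ ≤ δ ∧ v ζ ≤ 1 := by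
    have e1 : ∀ᶠ ζ in atBot, u ζ < 1/2 := hu0.eventually_lt_const (by norm_num)
    have e2 : ∀ᶠ ζ in atBot, K * u ζ < δ := by
      have hKu : Tendsto (fun ζ => K * u ζ) atBot (nhds 0) := by
        simpa using hu0.const_mul K
      exact hKu.eventually_lt_const hδpos
    have e3 : ∀ᶠ ζ in atBot, v ζ < 1 := hv0.eventually_lt_const one_pos
    obtain ⟨Z, hZ⟩ := eventually_atBot.mp ((e1.and e2).and e3)
    exact ⟨Z, fun ζ hζ => ⟨((hZ ζ hζ).1.1).le, ((hZ ζ hζ).1.2).le, (hZ ζ hζ).2.le⟩⟩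
  obtain ⟨ζ₀, hζ₀_def⟩ : ∃ x : ℝ, x = min Z0 0 := ⟨_, rfl⟩
  have hζ₀0 : ζ₀ ≤ 0 := by rw [hζ₀_def]; exact min_le_right _ _
  have hsm : ∀ ζ ≤ ζ₀, u ζ ≤ 1/2 ∧ K * u ζ ≤ δ ∧ v ζ ≤ 1 :=
    fun ζ hζ => hZ0 ζ (le_trans hζ (hζ₀_def ▸ min_le_left _ _))
  -- quadratic bound on the nonlinearity
  have hR : ∀ ζ, u ζ ≤ 1/2 → |b0 * (φ ζ * (1 - φ ζ^(p-1))) - lam * u ζ| ≤ K * (u ζ)^2 := by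
    intro ζ h
    have ht1 : 1/2 ≤ φ ζ := by simp only [hu_def] at h ⊢; linarith
    have ht2 : φ ζ ≤ 1 := (hrange ζ).2.le
    have hnl := aux_nonlin hp ht1 ht2
    have heq : b0 * (φ ζ * (1 - φ ζ^(p-1))) - lam * u ζ
        = b0 * ((φ ζ*(1 - φ ζ^(p-1)) - (p-1)*(1-φ ζ))) := by
      rw [hlamb0]; simp only [hu_def]; ring
    rw [heq, abs_mul, abs_of_pos hb0pos]
    have hu' : u ζ = 1 - φ ζ := by rw [hu_def]
    calc b0 * |φ ζ*(1 - φ ζ^(p-1)) - (p-1)*(1-φ ζ)| ≤ b0 * (2*p*(p-1)*(1-φ ζ)^2) :=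
          mul_le_mul_of_nonneg_left hnl hb0pos.le
      _ = K * (u ζ)^2 := by rw [hK_def, hu']; ring
  -- |g| bounds
  have hgub : ∀ ζ, ζ ≤ ζ₀ → |g ζ| ≤ Real.exp (2*ζ)/2 * v ζ + K * (u ζ)^2 := by
    intro ζ hζ
    have h1 := hR ζ (hsm ζ hζ).1
    have h2 : |-(Real.exp (2*ζ)/2) * v ζ| = Real.exp (2*ζ)/2 * v ζ := by
      rw [abs_mul, abs_neg, abs_of_pos (by positivity), abs_of_nonneg (hv_nonneg ζ)]
    rw [hg_def]; simp only
    calc |-(Real.exp (2*ζ)/2) * v ζ + (b0 * (φ ζ * (1 - φ ζ^(p-1))) - lam * u ζ)| ≤ |-(Real.exp (2*ζ)/2) * v ζ| + |b0 * (φ ζ * (1 - φ ζ^(p-1))) - lam * u ζ| :=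
          abs_add_le _ _
      _ ≤ Real.exp (2*ζ)/2 * v ζ + K * (u ζ)^2 := by rw [h2]; linarith
  have hgup : ∀ ζ, ζ ≤ ζ₀ → g ζ ≤ K * (u ζ)^2 := by
    intro ζ hζ
    have h1 := (abs_le.mp (hR ζ (hsm ζ hζ).1)).2
    have h2 : -(Real.exp (2*ζ)/2) * v ζ ≤ 0 := by
      have := hv_nonneg ζ; have := (Real.exp_pos (2*ζ)).le; nlinarith
    rw [hg_def]; simp only; linarith
  -- integrability of exp s * g s
  have hGint : ∀ a, a ≤ ζ₀ → IntegrableOn (fun s => Real.exp s * g s) (Iic a) := by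
    intro a ha
    have hmaj : IntegrableOn (fun s => Real.exp (3*s)/2 + (K/4) * Real.exp (1*s)) (Iic a) :=
      ((aux_integrableOn_expIic (by norm_num : (0:ℝ)<3) a).div_const 2).add
        ((aux_integrableOn_expIic one_pos a).const_mul _)
    apply Integrable.mono' hmaj ((Real.continuous_exp.mul hgc).aestronglyMeasurable)
    rw [ae_restrict_iff' measurableSet_Iic]
    refine Eventually.of_forall fun s hs => ?_
    have hs' : s ≤ ζ₀ := le_trans hs ha
    have h1 := hgub s hs'
    have h2 := (hsm s hs').1
    have h3 := (hsm s hs').2.2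
    have hupos := (hu_pos s).le
    have hu2 : K * (u s)^2 ≤ K/4 := by
      have hq : (u s)^2 ≤ 1/4 := by nlinarith
      nlinarith [mul_le_mul_of_nonneg_left hq hKpos.le]
    have hvb : Real.exp (2*s)/2 * v s ≤ Real.exp (2*s)/2 := by
      nlinarith [mul_le_mul_of_nonneg_left h3 (Real.exp_pos (2*s)).le]
    simp only [Pi.mul_apply]
    rw [norm_mul, Real.norm_eq_abs, Real.norm_eq_abs, abs_of_pos (Real.exp_pos s)]
    have he3 : Real.exp s * Real.exp (2*s) = Real.exp (3*s) := by
      rw [← Real.exp_add]; ring_nf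
    have he1 : Real.exp (1*s) = Real.exp s := by norm_num
    rw [he1]
    nlinarith [Real.exp_pos s, mul_le_mul_of_nonneg_left h1 (Real.exp_pos s).le]
  -- the function z and the representation formula
  obtain ⟨z, hz_def⟩ : ∃ x : ℝ → ℝ, x = fun ζ => v ζ - lam*u ζ := ⟨_, rfl⟩
  have hzc : Continuous z := by rw [hz_def]; exact hvc.sub (continuous_const.mul huc)
  have hEd : ∀ ζ, HasDerivAt (fun x => Real.exp x * z x) (Real.exp ζ * g ζ) ζ := by
    intro ζ
    have h1 : HasDerivAt z (-(deriv (deriv φ) ζ) - lam * v ζ) ζ := by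
      rw [hz_def]; exact (hvd ζ).sub ((hud ζ).const_mul lam)
    have h2 := (Real.hasDerivAt_exp ζ).mul h1
    refine h2.congr_deriv (Eq.symm ?_)
    simp only [hz_def]
    linear_combination (-(Real.exp ζ)) * (hcore ζ)
  have hzrepr : ∀ a, a ≤ ζ₀ → Real.exp a * z a = ∫ s in Iic a, Real.exp s * g s := by
    intro a ha
    apply aux_repr hEd (Real.continuous_exp.mul hgc) (hGint a ha)
    have hz0 : Tendsto z atBot (nhds 0) := by
      have := hv0.sub (hu0.const_mul lam); simpa [hz_def] using this
    have h0 := Real.tendsto_exp_atBot.mul hz0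
    simpa using h0
  -- generic integral bound
  have habs : ∀ ζ, ζ ≤ ζ₀ → ∀ h : ℝ → ℝ, IntegrableOn h (Iic ζ) →
      (∀ s, s ≤ ζ → Real.exp s * |g s| ≤ h s) →
      Real.exp ζ * |z ζ| ≤ ∫ s in Iic ζ, h s := by
    intro ζ hζ h hInt hle
    have hid := hzrepr ζ hζ
    have hstep : |Real.exp ζ * z ζ| ≤ ∫ s in Iic ζ, h s := by
      rw [hid]
      calc |∫ s in Iic ζ, Real.exp s * g s| ≤ ∫ s in Iic ζ, Real.exp s * |g s| := by
            simpa using norm_integral_le_integral_norm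
              (μ := volume.restrict (Iic ζ)) (fun s => Real.exp s * g s)
        _ ≤ ∫ s in Iic ζ, h s := by
            refine setIntegral_mono_on ?_ hInt measurableSet_Iic (fun s hs => hle s hs)
            simpa [IntegrableOn] using ((hGint ζ hζ).norm)
    rw [abs_mul, abs_of_pos (Real.exp_pos ζ)] at hstep
    exact hstep
  -- base estimate
  have hzbase : ∀ ζ, ζ ≤ ζ₀ → |z ζ| ≤ Real.exp (2*ζ)/6 + K * (u ζ)^2 := by
    intro ζ hζ
    have hmaji : IntegrableOn
        (fun s => Real.exp (3*s)/2 + (K*(u ζ)^2) * Real.exp (1*s)) (Iic ζ) :=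
      ((aux_integrableOn_expIic (by norm_num : (0:ℝ)<3) ζ).div_const 2).add
        ((aux_integrableOn_expIic one_pos ζ).const_mul _)
    have hb := habs ζ hζ _ hmaji ?_
    · have hval : ∫ s in Iic ζ, (Real.exp (3*s)/2 + (K*(u ζ)^2) * Real.exp (1*s))
          = (Real.exp (2*ζ)/6 + K*(u ζ)^2) * Real.exp ζ := by
        rw [integral_add ((aux_integrableOn_expIic (by norm_num : (0:ℝ)<3) ζ).div_const 2)
          ((aux_integrableOn_expIic one_pos ζ).const_mul _), MeasureTheory.integral_div, MeasureTheory.integral_const_mul,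
          aux_integral_expIic (by norm_num : (0:ℝ)<3), aux_integral_expIic one_pos]
        rw [show (3:ℝ)*ζ = 2*ζ + ζ by ring, Real.exp_add, show (1:ℝ)*ζ = ζ by ring]
        ring
      rw [hval] at hb
      refine le_of_mul_le_mul_right ?_ (Real.exp_pos ζ)
      linarith
    · intro s hs
      have hs' : s ≤ ζ₀ := le_trans hs hζ
      have h1 := hgub s hs'
      have h3 := (hsm s hs').2.2
      have hus : (u s)^2 ≤ (u ζ)^2 :=
        pow_le_pow_left₀ (hu_pos s).le (hu_mono s ζ hs) 2
      have h4 : |g s| ≤ Real.exp (2*s)/2 + K * (u ζ)^2 := by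
        have hv2 : Real.exp (2*s)/2 * v s ≤ Real.exp (2*s)/2 := by
          nlinarith [mul_le_mul_of_nonneg_left h3 (Real.exp_pos (2*s)).le]
        have hK2 : K * (u s)^2 ≤ K * (u ζ)^2 := mul_le_mul_of_nonneg_left hus hKpos.le
        linarith
      calc Real.exp s * |g s| ≤ Real.exp s * (Real.exp (2*s)/2 + K * (u ζ)^2) :=
            mul_le_mul_of_nonneg_left h4 (Real.exp_pos s).le
        _ = Real.exp (3*s)/2 + (K*(u ζ)^2) * Real.exp (1*s) := by
            rw [show (3:ℝ)*s = s + 2*s by ring, Real.exp_add, show (1:ℝ)*s = s by ring]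
            ring
  -- rate estimate
  have hzrate : ∀ c M : ℝ, 0 < c → (∀ s, s ≤ ζ₀ → |g s| ≤ M * Real.exp (c*s)) →
      ∀ ζ, ζ ≤ ζ₀ → |z ζ| ≤ M * Real.exp (c*ζ) := by
    intro c M hc hgM ζ hζ
    have hM0 : 0 ≤ M := by
      have := le_trans (abs_nonneg (g ζ₀)) (hgM ζ₀ le_rfl)
      nlinarith [Real.exp_pos (c*ζ₀)]
    have hmaji : IntegrableOn (fun s => M * Real.exp ((c+1)*s)) (Iic ζ) :=
      (aux_integrableOn_expIic (by linarith) ζ).const_mul _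
    have hb := habs ζ hζ _ hmaji ?_
    · have hval : ∫ s in Iic ζ, M * Real.exp ((c+1)*s)
          = M/(c+1) * (Real.exp (c*ζ) * Real.exp ζ) := by
        rw [MeasureTheory.integral_const_mul, aux_integral_expIic (by linarith : (0:ℝ)<c+1)]
        rw [show (c+1)*ζ = c*ζ + ζ by ring, Real.exp_add]
        ring
      rw [hval] at hb
      have h2 : M/(c+1) * (Real.exp (c*ζ) * Real.exp ζ) ≤ M * (Real.exp (c*ζ) * Real.exp ζ) :=
        mul_le_mul_of_nonneg_right (div_le_self hM0 (by linarith)) (by positivity)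
      refine le_of_mul_le_mul_right ?_ (Real.exp_pos ζ)
      calc |z ζ| * Real.exp ζ = Real.exp ζ * |z ζ| := by ring
        _ ≤ M/(c+1) * (Real.exp (c*ζ) * Real.exp ζ) := hb
        _ ≤ M * (Real.exp (c*ζ) * Real.exp ζ) := h2
        _ = M * Real.exp (c*ζ) * Real.exp ζ := by ring
    · intro s hs
      have hs' : s ≤ ζ₀ := le_trans hs hζ
      calc Real.exp s * |g s| ≤ Real.exp s * (M * Real.exp (c*s)) :=
            mul_le_mul_of_nonneg_left (hgM s hs') (Real.exp_pos s).le
        _ = M * Real.exp ((c+1)*s) := by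
            rw [show (c+1)*s = c*s + s by ring, Real.exp_add]; ring
  -- base decay: rate 2
  obtain ⟨mu, hmu_def⟩ : ∃ x : ℝ, x = lam - δ := ⟨_, rfl⟩
  have hmu2 : 2 < mu := by rw [hmu_def]; linarith
  have hmulam : mu < lam := by rw [hmu_def]; linarith
  have hQ2 : ∃ A, 0 < A ∧ ∀ ζ, ζ ≤ ζ₀ →
      u ζ ≤ A * Real.exp (2*ζ) ∧ v ζ ≤ A * Real.exp (2*ζ) := by
    obtain ⟨y, hy_def⟩ : ∃ x : ℝ → ℝ, x = fun ζ =>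
      u ζ * Real.exp ((-mu)*ζ) - (1/(6*(mu-2))) * Real.exp ((2-mu)*ζ) := ⟨_, rfl⟩
    obtain ⟨Y, hY_def⟩ : ∃ x : ℝ → ℝ, x = fun ζ =>
      z ζ * Real.exp ((-mu)*ζ) + (δ * u ζ) * Real.exp ((-mu)*ζ) + (1/6) * Real.exp ((2-mu)*ζ)
      := ⟨_, rfl⟩
    have hyd : ∀ ζ, HasDerivAt y (Y ζ) ζ := by
      intro ζ
      rw [hy_def, hY_def]
      have h1 := (hud ζ).mul (aux_expd (-mu) ζ)
      have h2 := (aux_expd (2-mu) ζ).const_mul (1/(6*(mu-2)))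
      have h3 := h1.sub h2
      refine h3.congr_deriv (Eq.symm ?_)
      have hδeq : δ = lam - mu := by rw [hmu_def]; ring
      have hmu2' : mu - 2 ≠ 0 := by intro h; apply absurd hmu2; intro _; linarith [sub_eq_zero.mp h]
      simp only [hz_def, hδeq]
      field_simp
      ring
    have hYc : Continuous Y := by
      rw [hY_def]
      have he1 : Continuous (fun ζ : ℝ => Real.exp ((-mu)*ζ)) :=
        Real.continuous_exp.comp (continuous_const.mul continuous_id)
      have he2 : Continuous (fun ζ : ℝ => Real.exp ((2-mu)*ζ)) :=
        Real.continuous_exp.comp (continuous_const.mul continuous_id)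
      exact ((hzc.mul he1).add (((continuous_const.mul huc)).mul he1)).add
        (continuous_const.mul he2)
    have hYnn : ∀ x, x ≤ ζ₀ → 0 ≤ Y x := by
      intro x hx
      rw [hY_def]
      have hz1 := (abs_le.mp (hzbase x hx)).1
      have hKu := (hsm x hx).2.1
      have hEpos := (Real.exp_pos ((-mu)*x)).le
      have hq : K * (u x)^2 ≤ δ * u x := by
        nlinarith [mul_le_mul_of_nonneg_right hKu (hu_pos x).le]
      have hz2 : z x + δ * u x ≥ -(Real.exp (2*x)/6) := by nlinarith
      have hee : Real.exp (2*x) * Real.exp ((-mu)*x) = Real.exp ((2-mu)*x) := by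
        rw [← Real.exp_add]; ring_nf
      have h5 : (z x + δ * u x) * Real.exp ((-mu)*x) ≥
          -(Real.exp (2*x)/6) * Real.exp ((-mu)*x) :=
        mul_le_mul_of_nonneg_right hz2 hEpos
      simp only
      nlinarith [h5, hee]
    obtain ⟨A1, hA1_def⟩ : ∃ x : ℝ, x = |y ζ₀| + 1/(6*(mu-2)) := ⟨_, rfl⟩
    have hA1pos : 0 < A1 := by
      rw [hA1_def]
      have h6 : (0:ℝ) < 6*(mu-2) := by linarith
      have : 0 < 1/(6*(mu-2)) := one_div_pos.mpr h6
      have := abs_nonneg (y ζ₀); linarith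
    have hub : ∀ ζ, ζ ≤ ζ₀ → u ζ ≤ A1 * Real.exp (2*ζ) := by
      intro ζ hζ
      have hmono := aux_mono hyd hYc hζ hYnn
      have hyζ : ∀ x : ℝ, u x * Real.exp ((-mu)*x)
          = y x + (1/(6*(mu-2))) * Real.exp ((2-mu)*x) := by
        intro x; rw [hy_def]; ring
      have h1 : u ζ * Real.exp ((-mu)*ζ) ≤ y ζ₀ + (1/(6*(mu-2))) * Real.exp ((2-mu)*ζ) := by
        rw [hyζ ζ]; linarith
      have h2 := mul_le_mul_of_nonneg_right h1 (Real.exp_pos (mu*ζ)).le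
      have hea : Real.exp ((-mu)*ζ) * Real.exp (mu*ζ) = 1 := by
        rw [← Real.exp_add]; norm_num
      have heb : Real.exp ((2-mu)*ζ) * Real.exp (mu*ζ) = Real.exp (2*ζ) := by
        rw [← Real.exp_add]; ring_nf
      have h3 : u ζ ≤ y ζ₀ * Real.exp (mu*ζ) + (1/(6*(mu-2))) * Real.exp (2*ζ) := by
        have e1 : u ζ * Real.exp ((-mu)*ζ) * Real.exp (mu*ζ) = u ζ := by
          rw [mul_assoc, hea, mul_one]
        have e2 : (y ζ₀ + (1/(6*(mu-2))) * Real.exp ((2-mu)*ζ)) * Real.exp (mu*ζ)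
            = y ζ₀ * Real.exp (mu*ζ) + (1/(6*(mu-2))) * Real.exp (2*ζ) := by
          rw [add_mul, mul_assoc, heb]
        rw [e1, e2] at h2
        exact h2
      have hζ0' : ζ ≤ 0 := le_trans hζ hζ₀0
      have hem : Real.exp (mu*ζ) ≤ Real.exp (2*ζ) := by
        apply Real.exp_le_exp.mpr; nlinarith
      have h4 : y ζ₀ * Real.exp (mu*ζ) ≤ |y ζ₀| * Real.exp (2*ζ) := by
        calc y ζ₀ * Real.exp (mu*ζ) ≤ |y ζ₀| * Real.exp (mu*ζ) :=
              mul_le_mul_of_nonneg_right (le_abs_self _) (Real.exp_pos _).le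
          _ ≤ |y ζ₀| * Real.exp (2*ζ) :=
              mul_le_mul_of_nonneg_left hem (abs_nonneg _)
      rw [hA1_def]; nlinarith [h3, h4]
    refine ⟨A1*(1+lam) + 1/6 + δ*A1 + 1, by positivity, fun ζ hζ => ⟨?_, ?_⟩⟩
    · have := hub ζ hζ
      nlinarith [Real.exp_pos (2*ζ), hA1pos, hδpos, hlam2, mul_pos hA1pos (Real.exp_pos (2*ζ))]
    · -- v = z + lam u
      have hz1 := (abs_le.mp (hzbase ζ hζ)).2
      have hKu := (hsm ζ hζ).2.1
      have hq : K * (u ζ)^2 ≤ δ * u ζ := by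
        nlinarith [mul_le_mul_of_nonneg_right hKu (hu_pos ζ).le]
      have hu1 := hub ζ hζ
      have hv1 : v ζ = z ζ + lam * u ζ := by rw [hz_def]; ring
      have he6 : Real.exp (2*ζ)/6 ≤ (1/6) * Real.exp (2*ζ) := by linarith
      have hδu : δ * u ζ ≤ δ * (A1 * Real.exp (2*ζ)) :=
        mul_le_mul_of_nonneg_left hu1 hδpos.le
      have hlu : lam * u ζ ≤ lam * (A1 * Real.exp (2*ζ)) :=
        mul_le_mul_of_nonneg_left hu1 (by linarith)
      rw [hv1]
      nlinarith [Real.exp_pos (2*ζ), mul_pos hA1pos (Real.exp_pos (2*ζ))]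
  -- rate of g from rate of (u, v)
  have hgrate : ∀ θ A : ℝ, 0 < θ → 0 < A →
      (∀ ζ, ζ ≤ ζ₀ → u ζ ≤ A * Real.exp (θ*ζ) ∧ v ζ ≤ A * Real.exp (θ*ζ)) →
      ∀ s, s ≤ ζ₀ → |g s| ≤ (A/2 + K*A^2) * Real.exp ((min (θ+2) (2*θ))*s) := by
    intro θ A hθ hA hbd s hs
    have hs0 : s ≤ 0 := le_trans hs hζ₀0
    have h1 := hgub s hs
    have hu1 := (hbd s hs).1
    have hv1 := (hbd s hs).2
    have e1 : Real.exp (2*s)/2 * v s ≤ (A/2) * Real.exp ((θ+2)*s) := by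
      calc Real.exp (2*s)/2 * v s ≤ Real.exp (2*s)/2 * (A * Real.exp (θ*s)) :=
            mul_le_mul_of_nonneg_left hv1 (by positivity)
        _ = (A/2) * Real.exp ((θ+2)*s) := by
            rw [show (θ+2)*s = θ*s + 2*s by ring, Real.exp_add]; ring
    have e2 : K * (u s)^2 ≤ (K*A^2) * Real.exp ((2*θ)*s) := by
      have hu2 : (u s)^2 ≤ (A * Real.exp (θ*s))^2 :=
        pow_le_pow_left₀ (hu_pos s).le hu1 2
      have hsq : (A * Real.exp (θ*s))^2 = A^2 * Real.exp ((2*θ)*s) := by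
        rw [mul_pow, sq (Real.exp (θ*s)), ← Real.exp_add]; ring_nf
      calc K * (u s)^2 ≤ K * (A * Real.exp (θ*s))^2 :=
            mul_le_mul_of_nonneg_left hu2 hKpos.le
        _ = (K*A^2) * Real.exp ((2*θ)*s) := by rw [hsq]; ring
    have e3 : Real.exp ((θ+2)*s) ≤ Real.exp ((min (θ+2) (2*θ))*s) :=
      Real.exp_le_exp.mpr (by nlinarith [min_le_left (θ+2) (2*θ)])
    have e4 : Real.exp ((2*θ)*s) ≤ Real.exp ((min (θ+2) (2*θ))*s) :=
      Real.exp_le_exp.mpr (by nlinarith [min_le_right (θ+2) (2*θ)])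
    have e5 : (A/2) * Real.exp ((θ+2)*s) ≤ (A/2) * Real.exp ((min (θ+2) (2*θ))*s) :=
      mul_le_mul_of_nonneg_left e3 (by positivity)
    have e6 : (K*A^2) * Real.exp ((2*θ)*s) ≤ (K*A^2) * Real.exp ((min (θ+2) (2*θ))*s) :=
      mul_le_mul_of_nonneg_left e4 (by positivity)
    nlinarith [e1, e2, e5, e6]
  -- the bootstrap step
  have hstep : ∀ θ θ' A : ℝ, 0 < θ → 0 < θ' → 0 < A → θ' ≤ θ+2 → θ' ≤ 2*θ → θ' < lam →
      (∀ ζ, ζ ≤ ζ₀ → u ζ ≤ A * Real.exp (θ*ζ) ∧ v ζ ≤ A * Real.exp (θ*ζ)) →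
      ∃ A', 0 < A' ∧ ∀ ζ, ζ ≤ ζ₀ →
        u ζ ≤ A' * Real.exp (θ'*ζ) ∧ v ζ ≤ A' * Real.exp (θ'*ζ) := by
    intro θ θ' A hθ hθ' hA h12 h2θ hθlam hbd
    obtain ⟨M, hM_def⟩ : ∃ x : ℝ, x = A/2 + K*A^2 := ⟨_, rfl⟩
    have hMpos : 0 < M := by rw [hM_def]; positivity
    have hgM : ∀ s, s ≤ ζ₀ → |g s| ≤ M * Real.exp (θ'*s) := by
      intro s hs
      have hs0 : s ≤ 0 := le_trans hs hζ₀0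
      have h1 := hgrate θ A hθ hA hbd s hs
      have e3 : Real.exp ((min (θ+2) (2*θ))*s) ≤ Real.exp (θ'*s) :=
        Real.exp_le_exp.mpr (by nlinarith [le_min h12 h2θ])
      calc |g s| ≤ (A/2 + K*A^2) * Real.exp ((min (θ+2) (2*θ))*s) := h1
        _ ≤ (A/2 + K*A^2) * Real.exp (θ'*s) :=
            mul_le_mul_of_nonneg_left e3 (by positivity)
        _ = M * Real.exp (θ'*s) := by rw [hM_def]
    have hz' := hzrate θ' M hθ' hgM
    have hgap : 0 < lam - θ' := by linarith
    obtain ⟨F, hF_def⟩ : ∃ x : ℝ → ℝ, x = fun ζ =>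
      u ζ * Real.exp ((-lam)*ζ) - (M/(lam-θ')) * Real.exp ((θ'-lam)*ζ) := ⟨_, rfl⟩
    obtain ⟨F', hF'_def⟩ : ∃ x : ℝ → ℝ, x = fun ζ =>
      z ζ * Real.exp ((-lam)*ζ) + M * Real.exp ((θ'-lam)*ζ) := ⟨_, rfl⟩
    have hFd : ∀ ζ, HasDerivAt F (F' ζ) ζ := by
      intro ζ
      rw [hF_def, hF'_def]
      have h1 := (hud ζ).mul (aux_expd (-lam) ζ)
      have h2 := (aux_expd (θ'-lam) ζ).const_mul (M/(lam-θ'))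
      have h3 := h1.sub h2
      refine h3.congr_deriv (Eq.symm ?_)
      simp only [hz_def]
      field_simp
      ring
    have hF'c : Continuous F' := by
      rw [hF'_def]
      have he1 : Continuous (fun ζ : ℝ => Real.exp ((-lam)*ζ)) :=
        Real.continuous_exp.comp (continuous_const.mul continuous_id)
      have he2 : Continuous (fun ζ : ℝ => Real.exp ((θ'-lam)*ζ)) :=
        Real.continuous_exp.comp (continuous_const.mul continuous_id)
      exact (hzc.mul he1).add (continuous_const.mul he2)
    have hF'nn : ∀ x, x ≤ ζ₀ → 0 ≤ F' x := by
      intro x hx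
      rw [hF'_def]
      have h1 := (abs_le.mp (hz' x hx)).1
      have hee : Real.exp (θ'*x) * Real.exp ((-lam)*x) = Real.exp ((θ'-lam)*x) := by
        rw [← Real.exp_add]; ring_nf
      have h2 : z x * Real.exp ((-lam)*x) ≥
          (-(M * Real.exp (θ'*x))) * Real.exp ((-lam)*x) :=
        mul_le_mul_of_nonneg_right h1 (Real.exp_pos _).le
      simp only
      nlinarith [h2, hee]
    obtain ⟨A2, hA2_def⟩ : ∃ x : ℝ, x = |F ζ₀| + M/(lam-θ') := ⟨_, rfl⟩
    have hA2pos : 0 < A2 := by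
      rw [hA2_def]
      have h6 : 0 < M/(lam-θ') := by positivity
      have := abs_nonneg (F ζ₀); linarith
    have hub : ∀ ζ, ζ ≤ ζ₀ → u ζ ≤ A2 * Real.exp (θ'*ζ) := by
      intro ζ hζ
      have hmono := aux_mono hFd hF'c hζ hF'nn
      have hyζ : ∀ x : ℝ, u x * Real.exp ((-lam)*x)
          = F x + (M/(lam-θ')) * Real.exp ((θ'-lam)*x) := by
        intro x; rw [hF_def]; ring
      have h1 : u ζ * Real.exp ((-lam)*ζ) ≤ F ζ₀ + (M/(lam-θ')) * Real.exp ((θ'-lam)*ζ) := by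
        rw [hyζ ζ]; linarith
      have h2 := mul_le_mul_of_nonneg_right h1 (Real.exp_pos (lam*ζ)).le
      have hea : Real.exp ((-lam)*ζ) * Real.exp (lam*ζ) = 1 := by
        rw [← Real.exp_add]; norm_num
      have heb : Real.exp ((θ'-lam)*ζ) * Real.exp (lam*ζ) = Real.exp (θ'*ζ) := by
        rw [← Real.exp_add]; ring_nf
      have h3 : u ζ ≤ F ζ₀ * Real.exp (lam*ζ) + (M/(lam-θ')) * Real.exp (θ'*ζ) := by
        have e1 : u ζ * Real.exp ((-lam)*ζ) * Real.exp (lam*ζ) = u ζ := by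
          rw [mul_assoc, hea, mul_one]
        have e2 : (F ζ₀ + (M/(lam-θ')) * Real.exp ((θ'-lam)*ζ)) * Real.exp (lam*ζ)
            = F ζ₀ * Real.exp (lam*ζ) + (M/(lam-θ')) * Real.exp (θ'*ζ) := by
          rw [add_mul, mul_assoc, heb]
        rw [e1, e2] at h2
        exact h2
      have hζ0' : ζ ≤ 0 := le_trans hζ hζ₀0
      have hem : Real.exp (lam*ζ) ≤ Real.exp (θ'*ζ) := by
        apply Real.exp_le_exp.mpr; nlinarith
      have h4 : F ζ₀ * Real.exp (lam*ζ) ≤ |F ζ₀| * Real.exp (θ'*ζ) := by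
        calc F ζ₀ * Real.exp (lam*ζ) ≤ |F ζ₀| * Real.exp (lam*ζ) :=
              mul_le_mul_of_nonneg_right (le_abs_self _) (Real.exp_pos _).le
          _ ≤ |F ζ₀| * Real.exp (θ'*ζ) :=
              mul_le_mul_of_nonneg_left hem (abs_nonneg _)
      rw [hA2_def]; nlinarith [h3, h4]
    refine ⟨A2*(1+lam) + M + 1, by positivity, fun ζ hζ => ⟨?_, ?_⟩⟩
    · have := hub ζ hζ
      nlinarith [Real.exp_pos (θ'*ζ), mul_pos hA2pos (Real.exp_pos (θ'*ζ))]
    · have hz1 := (abs_le.mp (hz' ζ hζ)).2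
      have hu1 := hub ζ hζ
      have hv1 : v ζ = z ζ + lam * u ζ := by rw [hz_def]; ring
      have hlu : lam * u ζ ≤ lam * (A2 * Real.exp (θ'*ζ)) :=
        mul_le_mul_of_nonneg_left hu1 (by linarith)
      rw [hv1]
      nlinarith [Real.exp_pos (θ'*ζ), mul_pos hA2pos (Real.exp_pos (θ'*ζ))]
  -- iterate the bootstrap up to rate mu = lam - δ
  have hQn : ∀ n : ℕ, ∃ A, 0 < A ∧ ∀ ζ, ζ ≤ ζ₀ →
      u ζ ≤ A * Real.exp ((min (2+(n:ℝ)) mu)*ζ) ∧ v ζ ≤ A * Real.exp ((min (2+(n:ℝ)) mu)*ζ) := by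
    intro n
    induction n with
    | zero =>
      have hr : min (2+((0:ℕ):ℝ)) mu = 2 := by
        push_cast; rw [add_zero]; exact min_eq_left (by linarith)
      rw [hr]; exact hQ2
    | succ n ih =>
      obtain ⟨A, hA, hB⟩ := ih
      have hθpos : (0:ℝ) < min (2+(n:ℝ)) mu := by
        apply lt_min (by positivity); linarith
      have hθ2 : (2:ℝ) ≤ min (2+(n:ℝ)) mu := by
        apply le_min (by norm_num [Nat.cast_nonneg]); linarith
      have hc1 : min (2+((n+1:ℕ):ℝ)) mu ≤ min (2+(n:ℝ)) mu + 2 := by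
        push_cast
        calc min (2+((n:ℝ)+1)) mu ≤ min (2+(n:ℝ)+2) (mu+2) :=
              min_le_min (by linarith) (by linarith)
          _ = min (2+(n:ℝ)) mu + 2 := by rw [← min_add_add_right]
      have hc2 : min (2+((n+1:ℕ):ℝ)) mu ≤ 2 * min (2+(n:ℝ)) mu := by
        have := hc1; nlinarith
      refine hstep _ _ A hθpos ?_ hA hc1 hc2 ?_ hB
      · apply lt_min (by positivity); linarith
      · calc min (2+((n+1:ℕ):ℝ)) mu ≤ mu := min_le_right _ _
          _ < lam := hmulam
  have hQfin : ∃ A, 0 < A ∧ ∀ ζ, ζ ≤ ζ₀ →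
      u ζ ≤ A * Real.exp (mu*ζ) ∧ v ζ ≤ A * Real.exp (mu*ζ) := by
    obtain ⟨A, hA, hB⟩ := hQn ⌈lam⌉₊
    have hr : min (2+((⌈lam⌉₊:ℕ):ℝ)) mu = mu := by
      apply min_eq_right
      have h1 : lam ≤ (⌈lam⌉₊:ℝ) := Nat.le_ceil lam
      linarith
    rw [hr] at hB
    exact ⟨A, hA, hB⟩
  -- Phase 2: z decays strictly faster than exp(lam ζ)
  obtain ⟨A, hApos, hQf⟩ := hQfin
  obtain ⟨M, hM_def⟩ : ∃ x : ℝ, x = A/2 + K*A^2 := ⟨_, rfl⟩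
  have hMpos : 0 < M := by rw [hM_def]; positivity
  obtain ⟨σ, hσ_def⟩ : ∃ x : ℝ, x = min (mu+2) (2*mu) := ⟨_, rfl⟩
  have hσlam : lam + 1 ≤ σ := by
    rw [hσ_def, hmu_def]
    apply le_min (by linarith) (by linarith)
  have hσpos : 0 < σ := by linarith
  have hgap : 0 < σ - lam := by linarith
  have hmupos : 0 < mu := by linarith
  have hgσ : ∀ s, s ≤ ζ₀ → |g s| ≤ M * Real.exp (σ*s) := by
    intro s hs
    have h := hgrate mu A hmupos hApos hQf s hs
    rw [← hσ_def, ← hM_def] at h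
    exact h
  have hzσ : ∀ ζ, ζ ≤ ζ₀ → |z ζ| ≤ M * Real.exp (σ*ζ) := hzrate σ M hσpos hgσ
  -- Phase 3: the limit exists
  obtain ⟨C2, hC2_def⟩ : ∃ x : ℝ, x = M/(σ-lam) := ⟨_, rfl⟩
  have hC2pos : 0 < C2 := by rw [hC2_def]; positivity
  obtain ⟨rm, hrm_def⟩ : ∃ x : ℝ → ℝ, x = fun ζ =>
    u ζ * Real.exp ((-lam)*ζ) - C2 * Real.exp ((σ-lam)*ζ) := ⟨_, rfl⟩
  obtain ⟨rp, hrp_def⟩ : ∃ x : ℝ → ℝ, x = fun ζ =>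
    u ζ * Real.exp ((-lam)*ζ) + C2 * Real.exp ((σ-lam)*ζ) := ⟨_, rfl⟩
  have he1 : Continuous (fun ζ : ℝ => Real.exp ((-lam)*ζ)) :=
    Real.continuous_exp.comp (continuous_const.mul continuous_id)
  have he2 : Continuous (fun ζ : ℝ => Real.exp ((σ-lam)*ζ)) :=
    Real.continuous_exp.comp (continuous_const.mul continuous_id)
  have hrmd : ∀ ζ, HasDerivAt rm (z ζ * Real.exp ((-lam)*ζ) - M * Real.exp ((σ-lam)*ζ)) ζ := by
    intro ζ
    rw [hrm_def]
    have h1 := (hud ζ).mul (aux_expd (-lam) ζ)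
    have h2 := (aux_expd (σ-lam) ζ).const_mul C2
    have h3 := h1.sub h2
    refine h3.congr_deriv (Eq.symm ?_)
    simp only [hz_def, hC2_def]
    field_simp
    ring
  have hrpd : ∀ ζ, HasDerivAt rp (z ζ * Real.exp ((-lam)*ζ) + M * Real.exp ((σ-lam)*ζ)) ζ := by
    intro ζ
    rw [hrp_def]
    have h1 := (hud ζ).mul (aux_expd (-lam) ζ)
    have h2 := (aux_expd (σ-lam) ζ).const_mul C2
    have h3 := h1.add h2
    refine h3.congr_deriv (Eq.symm ?_)
    simp only [hz_def, hC2_def]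
    field_simp
    ring
  have hrc : Continuous (fun ζ => z ζ * Real.exp ((-lam)*ζ) - M * Real.exp ((σ-lam)*ζ)) :=
    (hzc.mul he1).sub (continuous_const.mul he2)
  have hrc' : Continuous (fun ζ => z ζ * Real.exp ((-lam)*ζ) + M * Real.exp ((σ-lam)*ζ)) :=
    (hzc.mul he1).add (continuous_const.mul he2)
  have hee : ∀ x : ℝ, Real.exp (σ*x) * Real.exp ((-lam)*x) = Real.exp ((σ-lam)*x) := by
    intro x; rw [← Real.exp_add]; ring_nf
  have hrm'np : ∀ x, x ≤ ζ₀ → z x * Real.exp ((-lam)*x) - M * Real.exp ((σ-lam)*x) ≤ 0 := by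
    intro x hx
    have h1 := (abs_le.mp (hzσ x hx)).2
    have h2 : z x * Real.exp ((-lam)*x) ≤ (M * Real.exp (σ*x)) * Real.exp ((-lam)*x) :=
      mul_le_mul_of_nonneg_right h1 (Real.exp_pos _).le
    nlinarith [h2, hee x]
  have hrp'nn : ∀ x, x ≤ ζ₀ → 0 ≤ z x * Real.exp ((-lam)*x) + M * Real.exp ((σ-lam)*x) := by
    intro x hx
    have h1 := (abs_le.mp (hzσ x hx)).1
    have h2 : (-(M * Real.exp (σ*x))) * Real.exp ((-lam)*x) ≤ z x * Real.exp ((-lam)*x) :=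
      mul_le_mul_of_nonneg_right h1 (Real.exp_pos _).le
    nlinarith [h2, hee x]
  have hrm_anti : ∀ a, a ≤ ζ₀ → ∀ b, b ≤ ζ₀ → a ≤ b → rm b ≤ rm a := by
    intro a ha b hb hab
    exact aux_anti hrmd hrc hab (fun x hx => hrm'np x (le_trans hx hb))
  have hrm_bd : ∀ ζ, ζ ≤ ζ₀ → rm ζ ≤ rp ζ₀ := by
    intro ζ hζ
    have h1 : rm ζ ≤ rp ζ := by
      rw [hrm_def, hrp_def]
      simp only
      nlinarith [mul_pos hC2pos (Real.exp_pos ((σ-lam)*ζ))]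
    have h2 : rp ζ ≤ rp ζ₀ :=
      aux_mono hrpd hrc' hζ (fun x hx => hrp'nn x hx)
    linarith
  obtain ⟨L, hLB, hLtend, hLub⟩ := aux_lim hrm_anti hrm_bd
  have hconv : Tendsto (fun ζ => u ζ * Real.exp ((-lam)*ζ)) atBot (nhds L) := by
    have h2 : Tendsto (fun ζ => C2 * Real.exp ((σ-lam)*ζ)) atBot (nhds 0) := by
      simpa using (aux_exp_tendsto hgap).const_mul C2
    have h3 := hLtend.add h2
    rw [add_zero] at h3
    refine h3.congr fun ζ => ?_
    rw [hrm_def]; ring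
  -- positivity of the limit
  have hLpos : 0 < L := by
    by_cases hcase : ∀ ζ, ζ ≤ ζ₀ → u ζ ≤ C2 * Real.exp (σ*ζ)
    · -- rule this out: u would decay faster than exp(lam ζ), forcing u ≡ 0
      exfalso
      obtain ⟨w, hw_def⟩ : ∃ x : ℝ → ℝ, x = fun ζ => v ζ + u ζ := ⟨_, rfl⟩
      obtain ⟨C3, hC3_def⟩ : ∃ x : ℝ, x = M + (lam+1)*C2 := ⟨_, rfl⟩
      have hC3pos : 0 < C3 := by rw [hC3_def]; nlinarith
      have hwnn : ∀ ζ, 0 ≤ w ζ := by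
        intro ζ; rw [hw_def]; simp only
        have := hv_nonneg ζ; have := (hu_pos ζ).le; linarith
      have huw : ∀ ζ, u ζ ≤ w ζ := by
        intro ζ; rw [hw_def]; simp only; linarith [hv_nonneg ζ]
      have hwb : ∀ ζ, ζ ≤ ζ₀ → w ζ ≤ C3 * Real.exp (σ*ζ) := by
        intro ζ hζ
        have h1 := (abs_le.mp (hzσ ζ hζ)).2
        have h2 := hcase ζ hζ
        have h3 : v ζ = z ζ + lam * u ζ := by rw [hz_def]; ring
        have h4 : lam * u ζ ≤ lam * (C2 * Real.exp (σ*ζ)) :=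
          mul_le_mul_of_nonneg_left h2 (by linarith)
        rw [hw_def, hC3_def]; simp only
        nlinarith [h1, h2, h3, h4]
      have hwc : Continuous w := by rw [hw_def]; exact hvc.add huc
      have hWd : ∀ ζ, HasDerivAt (fun x => Real.exp ((-lam)*x) * w x)
          (Real.exp ((-lam)*ζ) * g ζ) ζ := by
        intro ζ
        have h1 : HasDerivAt w (-(deriv (deriv φ) ζ) + v ζ) ζ := by
          rw [hw_def]; exact (hvd ζ).add (hud ζ)
        have h2 := (aux_expd (-lam) ζ).mul h1
        refine h2.congr_deriv (Eq.symm ?_)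
        have hc := hcore ζ
        rw [hw_def]
        simp only
        linear_combination (-(Real.exp ((-lam)*ζ))) * hc
      have hWint : ∀ a, a ≤ ζ₀ → IntegrableOn (fun s => Real.exp ((-lam)*s) * g s) (Iic a) := by
        intro a ha
        apply Integrable.mono' ((aux_integrableOn_expIic hgap a).const_mul M)
          ((he1.mul hgc).aestronglyMeasurable)
        rw [ae_restrict_iff' measurableSet_Iic]
        refine Eventually.of_forall fun s hs => ?_
        have hs' : s ≤ ζ₀ := le_trans hs ha
        have h1 := hgσ s hs'
        simp only [Pi.mul_apply]
        rw [norm_mul, Real.norm_eq_abs, Real.norm_eq_abs, abs_of_pos (Real.exp_pos _)]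
        calc Real.exp ((-lam)*s) * |g s| ≤ Real.exp ((-lam)*s) * (M * Real.exp (σ*s)) :=
              mul_le_mul_of_nonneg_left h1 (Real.exp_pos _).le
          _ = M * Real.exp ((σ-lam)*s) := by
              rw [show (σ-lam)*s = σ*s + (-lam)*s by ring, Real.exp_add]; ring
      have hW0 : Tendsto (fun ζ => Real.exp ((-lam)*ζ) * w ζ) atBot (nhds 0) := by
        have hup : Tendsto (fun ζ => C3 * Real.exp ((σ-lam)*ζ)) atBot (nhds 0) := by
          simpa using (aux_exp_tendsto hgap).const_mul C3
        refine tendsto_of_tendsto_of_tendsto_of_le_of_le' tendsto_const_nhds hup ?_ ?_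
        · exact Eventually.of_forall fun ζ =>
            mul_nonneg (Real.exp_pos _).le (hwnn ζ)
        · filter_upwards [eventually_le_atBot ζ₀] with ζ hζ
          have h1 := hwb ζ hζ
          calc Real.exp ((-lam)*ζ) * w ζ ≤ Real.exp ((-lam)*ζ) * (C3 * Real.exp (σ*ζ)) :=
                mul_le_mul_of_nonneg_left h1 (Real.exp_pos _).le
            _ = C3 * Real.exp ((σ-lam)*ζ) := by
                rw [show (σ-lam)*ζ = σ*ζ + (-lam)*ζ by ring, Real.exp_add]; ring
      have hWrepr : ∀ a, a ≤ ζ₀ →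
          Real.exp ((-lam)*a) * w a = ∫ s in Iic a, Real.exp ((-lam)*s) * g s := by
        intro a ha
        exact aux_repr hWd (he1.mul hgc) (hWint a ha) hW0
      -- choose ζ₅
      obtain ⟨Z5, hZ5⟩ : ∃ Z, ∀ ζ ≤ Z, K * u ζ ≤ (σ-lam)/2 := by
        have hKu : Tendsto (fun ζ => K * u ζ) atBot (nhds 0) := by
          simpa using hu0.const_mul K
        have := hKu.eventually_lt_const (by positivity : (0:ℝ) < (σ-lam)/2)
        obtain ⟨Z, hZ⟩ := eventually_atBot.mp this
        exact ⟨Z, fun ζ hζ => (hZ ζ hζ).le⟩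
      obtain ⟨ζ₅, hζ₅_def⟩ : ∃ x : ℝ, x = min Z5 ζ₀ := ⟨_, rfl⟩
      have hζ₅0 : ζ₅ ≤ ζ₀ := by rw [hζ₅_def]; exact min_le_right _ _
      have hε : K * u ζ₅ ≤ (σ-lam)/2 := hZ5 ζ₅ (by rw [hζ₅_def]; exact min_le_left _ _)
      obtain ⟨q, hq_def⟩ : ∃ x : ℝ, x = K * u ζ₅ / (σ-lam) := ⟨_, rfl⟩
      have hq0 : 0 ≤ q := by
        rw [hq_def]
        have := (hu_pos ζ₅).le
        positivity
      have hq1 : q ≤ 1/2 := by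
        rw [hq_def, div_le_iff₀ hgap]; linarith
      have hgw : ∀ s, s ≤ ζ₅ → g s ≤ (K * u ζ₅) * w s := by
        intro s hs
        have hs0 : s ≤ ζ₀ := le_trans hs hζ₅0
        have h1 := hgup s hs0
        have h2 : u s ≤ u ζ₅ := hu_mono s ζ₅ hs
        have h3 := huw s
        have h5 : u s * u s ≤ u ζ₅ * w s :=
          mul_le_mul h2 h3 (hu_pos s).le (hu_pos ζ₅).le
        have h4 : K * (u s)^2 ≤ (K * u ζ₅) * w s := by
          nlinarith [mul_le_mul_of_nonneg_left h5 hKpos.le]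
        linarith
      -- geometric decay by induction
      have hWn : ∀ n : ℕ, ∀ ζ, ζ ≤ ζ₅ → w ζ ≤ C3 * q^n * Real.exp (σ*ζ) := by
        intro n
        induction n with
        | zero =>
          intro ζ hζ
          simpa using hwb ζ (le_trans hζ hζ₅0)
        | succ n ih =>
          intro ζ hζ
          have hζ0 : ζ ≤ ζ₀ := le_trans hζ hζ₅0
          have hrepr := hWrepr ζ hζ0
          have hintle : ∫ s in Iic ζ, Real.exp ((-lam)*s) * g s ≤
              ∫ s in Iic ζ, ((K * u ζ₅) * (C3 * q^n)) * Real.exp ((σ-lam)*s) := by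
            refine setIntegral_mono_on (hWint ζ hζ0)
              ((aux_integrableOn_expIic hgap ζ).const_mul _) measurableSet_Iic ?_
            intro s hs
            have hs5 : s ≤ ζ₅ := le_trans hs hζ
            have h1 := hgw s hs5
            have h2 := ih s hs5
            have h3 : Real.exp ((-lam)*s) * g s ≤
                Real.exp ((-lam)*s) * ((K * u ζ₅) * w s) :=
              mul_le_mul_of_nonneg_left h1 (Real.exp_pos _).le
            have h4 : (K * u ζ₅) * w s ≤ (K * u ζ₅) * (C3 * q^n * Real.exp (σ*s)) :=
              mul_le_mul_of_nonneg_left h2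
                (mul_nonneg hKpos.le (hu_pos ζ₅).le)
            have h5 : Real.exp ((-lam)*s) * ((K * u ζ₅) * (C3 * q^n * Real.exp (σ*s)))
                = ((K * u ζ₅) * (C3 * q^n)) * Real.exp ((σ-lam)*s) := by
              rw [show (σ-lam)*s = σ*s + (-lam)*s by ring, Real.exp_add]; ring
            calc Real.exp ((-lam)*s) * g s
                ≤ Real.exp ((-lam)*s) * ((K * u ζ₅) * w s) := h3
              _ ≤ Real.exp ((-lam)*s) * ((K * u ζ₅) * (C3 * q^n * Real.exp (σ*s))) :=
                  mul_le_mul_of_nonneg_left h4 (Real.exp_pos _).le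
              _ = ((K * u ζ₅) * (C3 * q^n)) * Real.exp ((σ-lam)*s) := h5
          have hval : ∫ s in Iic ζ, ((K * u ζ₅) * (C3 * q^n)) * Real.exp ((σ-lam)*s)
              = ((K * u ζ₅) * (C3 * q^n)) * (Real.exp ((σ-lam)*ζ)/(σ-lam)) := by
            rw [MeasureTheory.integral_const_mul, aux_integral_expIic hgap]
          have hkey : Real.exp ((-lam)*ζ) * w ζ ≤
              ((K * u ζ₅) * (C3 * q^n)) * (Real.exp ((σ-lam)*ζ)/(σ-lam)) := by
            rw [hrepr, ← hval]; exact hintle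
          have h2 := mul_le_mul_of_nonneg_right hkey (Real.exp_pos (lam*ζ)).le
          have hea : Real.exp ((-lam)*ζ) * Real.exp (lam*ζ) = 1 := by
            rw [← Real.exp_add]; norm_num
          have heb : Real.exp ((σ-lam)*ζ) * Real.exp (lam*ζ) = Real.exp (σ*ζ) := by
            rw [← Real.exp_add]; ring_nf
          have e1 : Real.exp ((-lam)*ζ) * w ζ * Real.exp (lam*ζ) = w ζ := by
            rw [mul_comm (Real.exp ((-lam)*ζ)) (w ζ), mul_assoc, hea, mul_one]
          have e2 : ((K * u ζ₅) * (C3 * q^n)) * (Real.exp ((σ-lam)*ζ)/(σ-lam)) *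
              Real.exp (lam*ζ) = ((K * u ζ₅)/(σ-lam)) * (C3 * q^n) * Real.exp (σ*ζ) := by
            rw [← heb]; ring
          rw [e1, e2] at h2
          have hqq : (K * u ζ₅)/(σ-lam) = q := by rw [hq_def]
          rw [hqq] at h2
          calc w ζ ≤ q * (C3 * q^n) * Real.exp (σ*ζ) := h2
            _ = C3 * q^(n+1) * Real.exp (σ*ζ) := by ring
      -- contradiction
      have hle : ∀ n : ℕ, u (ζ₅-1) ≤ (C3 * Real.exp (σ*(ζ₅-1))) * q^n := by
        intro n
        have h1 := hWn n (ζ₅-1) (by linarith)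
        have h2 := huw (ζ₅-1)
        calc u (ζ₅-1) ≤ w (ζ₅-1) := h2
          _ ≤ C3 * q^n * Real.exp (σ*(ζ₅-1)) := h1
          _ = (C3 * Real.exp (σ*(ζ₅-1))) * q^n := by ring
      have htend : Tendsto (fun n : ℕ => (C3 * Real.exp (σ*(ζ₅-1))) * q^n) atTop (nhds 0) := by
        have := tendsto_pow_atTop_nhds_zero_of_lt_one hq0
          (lt_of_le_of_lt hq1 (by norm_num : (1:ℝ)/2 < 1))
        simpa using this.const_mul (C3 * Real.exp (σ*(ζ₅-1)))
      have : u (ζ₅-1) ≤ 0 := ge_of_tendsto htend (Eventually.of_forall (hle))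
      linarith [hu_pos (ζ₅-1)]
    · push_neg at hcase
      obtain ⟨ζ₁, hζ₁, hgt⟩ := hcase
      have h1 := hLub ζ₁ hζ₁
      have h2 : C2 * Real.exp ((σ-lam)*ζ₁) < u ζ₁ * Real.exp ((-lam)*ζ₁) := by
        have h3 := mul_lt_mul_of_pos_right hgt (Real.exp_pos ((-lam)*ζ₁))
        calc C2 * Real.exp ((σ-lam)*ζ₁) = C2 * (Real.exp (σ*ζ₁) * Real.exp ((-lam)*ζ₁)) := by
              rw [hee ζ₁]
          _ = C2 * Real.exp (σ*ζ₁) * Real.exp ((-lam)*ζ₁) := by ring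
          _ < u ζ₁ * Real.exp ((-lam)*ζ₁) := h3
      have h4 : 0 < rm ζ₁ := by
        rw [hrm_def]; simp only; linarith
      linarith
  -- conclusion
  refine ⟨L, hLpos, ?_⟩
  refine hconv.congr fun ζ => ?_
  have hexp : (-lam)*ζ = -2*(p+1)*ζ/(p-1) := by
    rw [hlam_def]; ring
  rw [hu_def, hexp]
end
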